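/- arXiv:1702.03709 — 11 statements merged into one kernel-verified Lean document; each statement's English description precedes it below -/
import Mathlib

section
/- Let m be a positive integer and let k = (k_0, k_1, ..., k_d) be a tuple of natural numbers (d ≥ 1) such that k_0 + k_1 + ... + k_d = m and 0·k_0 + 1·k_1 + ... + d·k_d = m - 1. Then the multinomial coefficient m!/(k_0! k_1! ⋯ k_d!) is divisible by m; that is, (1/m)·(m!/(k_0!⋯k_d!)) is a natural number. -/
/-
With `M = m! / k!`, the identity `k_j · M = m · (m - 1)! / (k - e_j)!` shows `m ∣ k_j · M` for
every `j`. Weighting by `j` and summing gives `m ∣ (∑ j · k_j) · M = (m - 1) · M`, and together with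
`m ∣ m · M` this yields `m ∣ M`.
-/

namespace Nat

theorem dvd_mul_choose (n k : ℕ) : n ∣ k * n.choose k := by
  rcases n with _ | n
  · rcases k with _ | k <;> simp
  rcases k with _ | k
  · simp
  rw [mul_comm, ← add_one_mul_choose_eq]
  exact dvd_mul_right _ _

theorem sum_dvd_mul_multinomial {α : Type*} [DecidableEq α] {s : Finset α} (f : α → ℕ) {a : α}
    (ha : a ∈ s) : (∑ i ∈ s, f i) ∣ f a * multinomial s f := by
  rw [← Finset.insert_erase ha, multinomial_insert (Finset.notMem_erase a s),
    Finset.sum_insert (Finset.notMem_erase a s), ← mul_assoc]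
  exact (dvd_mul_choose _ _).mul_right _

end Nat

theorem m_dvd_multinomial_general (m d : ℕ) (hm : 1 ≤ m) (k : Fin (d + 1) → ℕ)
    (h1 : ∑ j, k j = m) (h2 : ∑ j : Fin (d + 1), (j : ℕ) * k j = m - 1) :
    m ∣ Nat.multinomial Finset.univ k := by
  set M := Nat.multinomial Finset.univ k
  have hk : ∀ j, m ∣ k j * M := fun j => h1 ▸ Nat.sum_dvd_mul_multinomial k (Finset.mem_univ j)
  have hpred : m ∣ (m - 1) * M := by
    rw [← h2, Finset.sum_mul]
    exact Finset.dvd_sum fun j _ => mul_assoc (j : ℕ) (k j) M ▸ (hk j).mul_left _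
  have hdiff : m * M - (m - 1) * M = M := by
    rw [← Nat.sub_mul, Nat.sub_sub_self hm, one_mul]
  exact hdiff ▸ Nat.dvd_sub (dvd_mul_right m M) hpred

/-- If `k = (k_0, …, k_d)` (with `d ≥ 1`) is a tuple of natural numbers with
`∑ k_j = m ≥ 1` and `∑ j·k_j = m - 1`, then `m` divides the multinomial
coefficient `m! / (k_0! ⋯ k_d!)`. -/
theorem m_dvd_multinomial (m d : ℕ) (hm : 1 ≤ m) (hd : 1 ≤ d) (k : Fin (d + 1) → ℕ)
    (h1 : ∑ j, k j = m) (h2 : ∑ j : Fin (d + 1), (j : ℕ) * k j = m - 1) :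
    m ∣ Nat.multinomial Finset.univ k :=
  m_dvd_multinomial_general m d hm k h1 h2
end

section
/- Let p be a prime, m ≥ 1, and k = (k_0,...,k_d) natural numbers with Σ_j k_j = m and Σ_j j·k_j = m−1. Then the p-adic valuation of (m−1)!/ (k_0!⋯k_d!) is nonnegative, i.e. ν_p((m−1)!) ≥ Σ_j ν_p(k_j!). -/
open Nat Finset

namespace Nat

theorem factorization_factorial_pred_of_not_dvd {p n : ℕ} (h : ¬p ∣ n) :
    (n - 1)!.factorization p = (n !).factorization p := by
  have hn : n ≠ 0 := by rintro rfl; exact h (dvd_zero p)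
  rw [← mul_factorial_pred hn, factorization_mul hn (factorial_ne_zero _), Finsupp.add_apply,
    factorization_eq_zero_of_not_dvd h, zero_add]

theorem sum_factorization_factorial_le {ι : Type*} (p : ℕ) (s : Finset ι) (k : ι → ℕ) :
    ∑ i ∈ s, (k i)!.factorization p ≤ (∑ i ∈ s, k i)!.factorization p := by
  have hprod : (∏ i ∈ s, (k i)!).factorization p = ∑ i ∈ s, (k i)!.factorization p := by
    rw [factorization_prod fun i _ => factorial_ne_zero _, Finsupp.finsetSum_apply]
  rw [← hprod]
  exact (factorization_le_iff_dvd (prod_ne_zero_iff.2 fun i _ => factorial_ne_zero _)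
    (factorial_ne_zero _)).2 (prod_factorial_dvd_factorial_sum s k) p

/-- Lowering a part `k j` prime to `p` by one leaves its factorial's `p`-adic valuation
unchanged, so the bound survives removing one unit from the total. -/
theorem sum_factorization_factorial_le_pred {ι : Type*} [Fintype ι] {p : ℕ} {k : ι → ℕ}
    (j : ι) (hj : ¬p ∣ k j) :
    ∑ i, (k i)!.factorization p ≤ (∑ i, k i - 1)!.factorization p := by
  classical
  have hkj : k j ≠ 0 := by rintro h; exact hj (h ▸ dvd_zero p)
  set g := Function.update k j (k j - 1) with hg
  have hg_sum : ∑ i, g i = ∑ i, k i - 1 := by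
    rw [sum_update_of_mem (mem_univ j), sdiff_singleton_eq_erase,
      ← add_sum_erase univ k (mem_univ j)]
    omega
  have hg_val : ∀ i, (g i)!.factorization p = (k i)!.factorization p := by
    intro i
    rcases eq_or_ne i j with rfl | hij
    · rw [hg, Function.update_self, factorization_factorial_pred_of_not_dvd hj]
    · rw [hg, Function.update_of_ne hij]
  calc ∑ i, (k i)!.factorization p = ∑ i, (g i)!.factorization p := by simp only [hg_val]
    _ ≤ (∑ i, k i - 1)!.factorization p := hg_sum ▸ sum_factorization_factorial_le p univ g

end Nat

/-- Let `p` be a prime, `m ≥ 1`, and `k = (k_0, …, k_d)` natural numbers with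
`∑ k_j = m` and `∑ j·k_j = m - 1`.  Then the `p`-adic valuation of
`(m-1)!/(k_0! ⋯ k_d!)` is nonnegative, i.e. `ν_p((m-1)!) ≥ ∑_j ν_p(k_j!)`. -/
theorem factorization_factorial_pred_ge (p : ℕ) (hp : p.Prime) (m d : ℕ) (hm : 1 ≤ m)
    (k : Fin (d + 1) → ℕ)
    (h1 : ∑ j, k j = m) (h2 : ∑ j : Fin (d + 1), (j : ℕ) * k j = m - 1) :
    ∑ j, ((k j).factorial.factorization p) ≤ (m - 1).factorial.factorization p := by
  by_cases hpm : p ∣ m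
  · -- `m` and `m - 1` are coprime, so `p` cannot divide every `k j`, as then it divides `∑ j * k j`.
    obtain ⟨j, hj⟩ : ∃ j, ¬p ∣ k j := by
      by_contra! hdvd
      have hpm' : p ∣ m - 1 := h2 ▸ dvd_sum fun j _ => (hdvd j).mul_left _
      have hp1 : p ∣ 1 := by simpa [Nat.sub_sub_self hm] using Nat.dvd_sub hpm hpm'
      exact hp.one_lt.ne' (Nat.dvd_one.mp hp1)
    exact h1 ▸ sum_factorization_factorial_le_pred j hj
  · calc ∑ j, (k j)!.factorization p ≤ (m !).factorization p :=
          h1 ▸ sum_factorization_factorial_le p univ k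
      _ = (m - 1)!.factorization p := (factorization_factorial_pred_of_not_dvd hpm).symm
end

section
/- Let K be a field of characteristic zero, and let y_0 ∈ K[[x_1,...,x_r]] be a power series with zero constant term satisfying P(x, y_0) = 0 for some nonzero polynomial P ∈ K[x_1,...,x_r, y] with total x-degree at most d_x and y-degree at most d_y. Then for any polynomial Q ∈ K[x_1,...,x_r, y] with total x-degree at most d_x and y-degree at most d_y such that Q(x, y_0) ≠ 0, the order (minimal total degree of a nonzero monomial) of the power series Q(x, y_0) is at most 2·d_x·d_y. -/
set_option linter.unusedSectionVars false
set_option maxHeartbeats 1000000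


open Polynomial MvPolynomial

noncomputable section PsiSection

variable {K : Type*} [CommRing K] {r : ℕ} (χ : Fin r → K)

/-- finsupps on `Fin r` with total degree `N`. -/
noncomputable def degSlice (r N : ℕ) : Finset (Fin r →₀ ℕ) :=
  (Finset.Nat.antidiagonalTuple r N).map
    (Finsupp.equivFunOnFinite.symm.toEmbedding)

lemma equivFunOnFinite_symm_zero {r : ℕ} :
    (Finsupp.equivFunOnFinite.symm (0 : Fin r → ℕ)) = 0 := by
  ext a; simp [Finsupp.equivFunOnFinite]

lemma mem_degSlice {r N : ℕ} {n : Fin r →₀ ℕ} :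
    n ∈ degSlice r N ↔ (∑ i, n i) = N := by
  constructor
  · rintro h
    simp only [degSlice, Finset.mem_map, Equiv.coe_toEmbedding] at h
    obtain ⟨m, hm, rfl⟩ := h
    simpa using (Finset.Nat.mem_antidiagonalTuple.mp hm)
  · intro h
    simp only [degSlice, Finset.mem_map, Equiv.coe_toEmbedding]
    exact ⟨(n : Fin r → ℕ), Finset.Nat.mem_antidiagonalTuple.mpr (by simpa using h),
      by simp⟩

/-- coefficient of the specialization `x i ↦ χ i • t`. -/
noncomputable def psiCoeff (f : MvPowerSeries (Fin r) K) (N : ℕ) : K :=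
  ∑ n ∈ degSlice r N, MvPowerSeries.coeff n f * ∏ i, χ i ^ n i

lemma psi_mul (f g : MvPowerSeries (Fin r) K) :
    PowerSeries.mk (psiCoeff χ (f * g)) =
      PowerSeries.mk (psiCoeff χ f) * PowerSeries.mk (psiCoeff χ g) := by
  ext N
  rw [PowerSeries.coeff_mk, PowerSeries.coeff_mul, psiCoeff]
  have hL : ∀ n ∈ degSlice r N, (MvPowerSeries.coeff n) (f * g) * ∏ i, χ i ^ n i
      = ∑ p ∈ Finset.HasAntidiagonal.antidiagonal n,
          (MvPowerSeries.coeff p.1 f * ∏ i, χ i ^ p.1 i) *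
          (MvPowerSeries.coeff p.2 g * ∏ i, χ i ^ p.2 i) := by
    intro n _
    rw [MvPowerSeries.coeff_mul, Finset.sum_mul]
    refine Finset.sum_congr rfl ?_
    intro p hp
    have hpn : p.1 + p.2 = n := Finset.HasAntidiagonal.mem_antidiagonal.mp hp
    have : ∏ i, χ i ^ n i = (∏ i, χ i ^ p.1 i) * ∏ i, χ i ^ p.2 i := by
      rw [← Finset.prod_mul_distrib]
      refine Finset.prod_congr rfl fun i _ => ?_
      rw [← pow_add, ← hpn]; rfl
    rw [this]; ring
  rw [Finset.sum_congr rfl hL, Finset.sum_sigma']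
  have hR : ∀ p ∈ Finset.HasAntidiagonal.antidiagonal N,
      (PowerSeries.coeff p.1) (PowerSeries.mk (psiCoeff χ f)) *
      (PowerSeries.coeff p.2) (PowerSeries.mk (psiCoeff χ g))
      = ∑ ab ∈ (degSlice r p.1) ×ˢ (degSlice r p.2),
          (MvPowerSeries.coeff ab.1 f * ∏ i, χ i ^ ab.1 i) *
          (MvPowerSeries.coeff ab.2 g * ∏ i, χ i ^ ab.2 i) := by
    intro p _
    rw [PowerSeries.coeff_mk, PowerSeries.coeff_mk, psiCoeff, psiCoeff,
      Finset.sum_mul_sum]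
    rw [Finset.sum_product]
  rw [Finset.sum_congr rfl hR, Finset.sum_sigma']
  refine Finset.sum_nbij' (i := fun x => ⟨(∑ i, x.2.1 i, ∑ i, x.2.2 i), x.2⟩)
    (j := fun x => ⟨x.2.1 + x.2.2, x.2⟩) ?_ ?_ ?_ ?_ ?_
  · rintro ⟨n, p⟩ hx
    simp only [Finset.mem_sigma] at hx ⊢
    obtain ⟨h1, h2⟩ := hx
    have hpn : p.1 + p.2 = n := Finset.HasAntidiagonal.mem_antidiagonal.mp h2
    rw [mem_degSlice] at h1
    constructor
    · rw [Finset.HasAntidiagonal.mem_antidiagonal, ← h1, ← hpn]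
      rw [← Finset.sum_add_distrib]
      rfl
    · exact Finset.mem_product.mpr ⟨mem_degSlice.mpr rfl, mem_degSlice.mpr rfl⟩
  · rintro ⟨ij, p⟩ hx
    simp only [Finset.mem_sigma] at hx ⊢
    obtain ⟨h1, h2⟩ := hx
    rw [Finset.mem_product, mem_degSlice, mem_degSlice] at h2
    rw [Finset.HasAntidiagonal.mem_antidiagonal] at h1
    refine ⟨mem_degSlice.mpr ?_, Finset.HasAntidiagonal.mem_antidiagonal.mpr rfl⟩
    rw [← h1, ← h2.1, ← h2.2, ← Finset.sum_add_distrib]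
    rfl
  · rintro ⟨n, p⟩ hx
    simp only [Finset.mem_sigma] at hx
    have hpn : p.1 + p.2 = n := Finset.HasAntidiagonal.mem_antidiagonal.mp hx.2
    exact Sigma.ext hpn (by simp)
  · rintro ⟨ij, p⟩ hx
    simp only [Finset.mem_sigma] at hx
    rw [Finset.mem_product, mem_degSlice, mem_degSlice] at hx
    exact Sigma.ext (by rw [Prod.ext_iff]; exact ⟨hx.2.1, hx.2.2⟩) (by simp)
  · rintro ⟨n, p⟩ _
    rfl

/-- The specialization `K[[x_1,…,x_r]] → K[[t]]`, `x i ↦ χ i • t`, as a ring hom. -/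
noncomputable def psiHom : MvPowerSeries (Fin r) K →+* PowerSeries K where
  toFun f := PowerSeries.mk (psiCoeff χ f)
  map_one' := by
    ext N
    rcases N with _ | N
    · simp [psiCoeff, degSlice, Finset.Nat.antidiagonalTuple_zero_right,
        MvPowerSeries.coeff_one, equivFunOnFinite_symm_zero]
    · rw [PowerSeries.coeff_mk, psiCoeff]
      rw [Finset.sum_eq_zero, PowerSeries.coeff_one]
      · simp
      intro n hn
      rw [mem_degSlice] at hn
      have hne : n ≠ 0 := by
        rintro rfl; simp at hn
      rw [MvPowerSeries.coeff_one, if_neg hne, zero_mul]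
  map_mul' := psi_mul χ
  map_zero' := by
    ext N; simp [psiCoeff]
  map_add' := by
    intro f g; ext N
    simp [psiCoeff, Finset.sum_add_distrib, add_mul]

end PsiSection

noncomputable section SigmaSection

variable {K : Type*} [CommRing K] {r : ℕ} (χ : Fin r → K)

/-- The specialization `x i ↦ χ i • t` on polynomials. -/
noncomputable def sigmaHat : MvPolynomial (Fin r) K →+* Polynomial K :=
  MvPolynomial.eval₂Hom (Polynomial.C) (fun i => Polynomial.C (χ i) * Polynomial.X)

lemma coeff_sigmaHat (F : MvPolynomial (Fin r) K) (N : ℕ) :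
    (sigmaHat χ F).coeff N =
      ∑ n ∈ degSlice r N, MvPolynomial.coeff n F * ∏ i, χ i ^ n i := by
  induction F using MvPolynomial.induction_on' with
  | monomial n a =>
    rw [sigmaHat, MvPolynomial.eval₂Hom_monomial]
    have h1 : (Finsupp.prod n fun i e => (Polynomial.C (χ i) * Polynomial.X) ^ e)
        = Polynomial.C (∏ i, χ i ^ n i) * Polynomial.X ^ (∑ i, n i) := by
      rw [Finsupp.prod_fintype _ _ (fun i => by simp)]
      simp only [mul_pow, ← Polynomial.C_pow]
      rw [Finset.prod_mul_distrib, ← map_prod, Finset.prod_pow_eq_pow_sum]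
    rw [h1]
    simp only [Polynomial.coeff_C_mul, Polynomial.coeff_X_pow, MvPolynomial.coeff_monomial,
      ite_mul, zero_mul, Finset.sum_ite_eq]
    by_cases h : (∑ i, n i) = N
    · rw [if_pos (mem_degSlice.mpr h), if_pos h.symm, mul_one]
    · rw [if_neg (fun hc => h (mem_degSlice.mp hc)), if_neg (fun hc => h hc.symm),
        mul_zero, mul_zero]
  | add p q hp hq =>
    rw [map_add, Polynomial.coeff_add, hp, hq, ← Finset.sum_add_distrib]
    refine Finset.sum_congr rfl fun n _ => ?_
    rw [MvPolynomial.coeff_add, add_mul]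

lemma psiHom_coe (F : MvPolynomial (Fin r) K) :
    psiHom χ (F : MvPowerSeries (Fin r) K) = (sigmaHat χ F : PowerSeries K) := by
  ext N
  have hps : (psiHom χ) (↑F : MvPowerSeries (Fin r) K) = PowerSeries.mk (psiCoeff χ ↑F) := rfl
  rw [hps, PowerSeries.coeff_mk, Polynomial.coeff_coe, coeff_sigmaHat, psiCoeff]
  refine Finset.sum_congr rfl fun n _ => ?_
  rw [MvPolynomial.coeff_coe]

lemma natDegree_sigmaHat_le (F : MvPolynomial (Fin r) K) :
    (sigmaHat χ F).natDegree ≤ F.totalDegree := by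
  conv_lhs => rw [MvPolynomial.as_sum F]
  rw [map_sum]
  refine Polynomial.natDegree_sum_le_of_forall_le _ _ fun n hn => ?_
  rw [sigmaHat, MvPolynomial.eval₂Hom_monomial]
  refine le_trans (Polynomial.natDegree_mul_le) ?_
  rw [Polynomial.natDegree_C, zero_add]
  have h1 : (Finsupp.prod n fun i e => (Polynomial.C (χ i) * Polynomial.X) ^ e)
      = Polynomial.C (∏ i, χ i ^ n i) * Polynomial.X ^ (∑ i, n i) := by
    rw [Finsupp.prod_fintype _ _ (fun i => by simp)]
    simp only [mul_pow, ← Polynomial.C_pow]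
    rw [Finset.prod_mul_distrib, ← map_prod, Finset.prod_pow_eq_pow_sum]
  rw [h1]
  refine le_trans (Polynomial.natDegree_mul_le) ?_
  rw [Polynomial.natDegree_C, zero_add]
  refine le_trans (Polynomial.natDegree_X_pow_le _) ?_
  have := MvPolynomial.le_totalDegree hn
  rwa [Finsupp.sum_fintype _ _ (fun i => rfl)] at this

lemma eval_one_sigmaHat (F : MvPolynomial (Fin r) K) :
    Polynomial.eval 1 (sigmaHat χ F) = MvPolynomial.eval χ F := by
  rw [sigmaHat]
  have := MvPolynomial.eval₂_comp_left (Polynomial.evalRingHom (1 : K))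
    (Polynomial.C : K →+* Polynomial K) (fun i => Polynomial.C (χ i) * Polynomial.X) F
  simp only [MvPolynomial.coe_eval₂Hom, Polynomial.coe_evalRingHom] at this ⊢
  rw [this]
  simp [MvPolynomial.eval, MvPolynomial.eval₂]

end SigmaSection

open Polynomial

section DmaxSection

variable {A : Type*} [CommRing A] [IsDomain A]

/-- extract the `y`-polynomial of `t^a`-coefficients. -/
noncomputable def lf (F : Polynomial (Polynomial A)) (a : ℕ) : Polynomial A :=
  ∑ j ∈ F.support, Polynomial.monomial j ((F.coeff j).coeff a)

lemma coeff_lf (F : Polynomial (Polynomial A)) (a j : ℕ) :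
    (lf F a).coeff j = (F.coeff j).coeff a := by
  rw [lf, Polynomial.finset_sum_coeff]
  by_cases hj : j ∈ F.support
  · rw [Finset.sum_eq_single j (fun b _ hb => by rw [Polynomial.coeff_monomial, if_neg hb])
      (fun h => absurd hj h)]
    rw [Polynomial.coeff_monomial, if_pos rfl]
  · rw [Finset.sum_eq_zero, Polynomial.notMem_support_iff.mp hj, Polynomial.coeff_zero]
    intro b hb
    rw [Polynomial.coeff_monomial, if_neg]
    rintro rfl
    exact hj hb

lemma lf_ne_zero (F : Polynomial (Polynomial A)) (hF : F ≠ 0) :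
    lf F (F.support.sup fun j => (F.coeff j).natDegree) ≠ 0 := by
  obtain ⟨j, hj, hje⟩ := Finset.exists_mem_eq_sup F.support
    (Polynomial.support_nonempty.mpr hF) (fun j => (F.coeff j).natDegree)
  intro h
  have := coeff_lf F (F.support.sup fun j => (F.coeff j).natDegree) j
  rw [h, Polynomial.coeff_zero] at this
  rw [hje] at this
  exact (Polynomial.mem_support_iff.mp hj) (Polynomial.leadingCoeff_eq_zero.mp this.symm)

lemma coeff_lf_mul (F G : Polynomial (Polynomial A)) (k : ℕ) :
    (lf F (F.support.sup fun j => (F.coeff j).natDegree) *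
     lf G (G.support.sup fun j => (G.coeff j).natDegree)).coeff k =
    ((F * G).coeff k).coeff ((F.support.sup fun j => (F.coeff j).natDegree) +
      (G.support.sup fun j => (G.coeff j).natDegree)) := by
  set a := F.support.sup fun j => (F.coeff j).natDegree with ha
  set b := G.support.sup fun j => (G.coeff j).natDegree with hb
  have hdF : ∀ u, (F.coeff u).natDegree ≤ a := by
    intro u
    by_cases hu : u ∈ F.support
    · exact ha ▸ Finset.le_sup (f := fun j => (F.coeff j).natDegree) hu
    · rw [Polynomial.notMem_support_iff.mp hu]; simp
  have hdG : ∀ u, (G.coeff u).natDegree ≤ b := by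
    intro u
    by_cases hu : u ∈ G.support
    · exact hb ▸ Finset.le_sup (f := fun j => (G.coeff j).natDegree) hu
    · rw [Polynomial.notMem_support_iff.mp hu]; simp
  rw [Polynomial.coeff_mul, Polynomial.coeff_mul, Polynomial.finset_sum_coeff]
  refine Finset.sum_congr rfl fun p hp => ?_
  rw [coeff_lf, coeff_lf, Polynomial.coeff_mul]
  rw [Finset.sum_eq_single (a, b)]
  · intro q hq hqne
    have hq' : q.1 + q.2 = a + b := Finset.HasAntidiagonal.mem_antidiagonal.mp hq
    rcases lt_or_ge a q.1 with h | h
    · rw [Polynomial.coeff_eq_zero_of_natDegree_lt (lt_of_le_of_lt (hdF p.1) h), zero_mul]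
    · have h2 : b < q.2 := by
        rcases lt_or_eq_of_le h with h1 | h1
        · omega
        · exfalso; exact hqne (by rw [Prod.ext_iff]; constructor <;> omega)
      rw [Polynomial.coeff_eq_zero_of_natDegree_lt (lt_of_le_of_lt (hdG p.2) h2), mul_zero]
  · intro h
    exfalso
    exact h (Finset.HasAntidiagonal.mem_antidiagonal.mpr rfl)

/-- In a bivariate polynomial ring over a domain, the maximal inner degree of coefficients
of a factor is bounded by that of the product. -/
lemma natDegree_coeff_le_of_dvd (F G : Polynomial (Polynomial A)) (hF : F ≠ 0) (hG : G ≠ 0)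
    (dx : ℕ) (h : ∀ k, ((F * G).coeff k).natDegree ≤ dx) :
    ∀ j, (F.coeff j).natDegree ≤ dx := by
  set a := F.support.sup fun j => (F.coeff j).natDegree with ha
  set b := G.support.sup fun j => (G.coeff j).natDegree with hb
  have hne : lf F a * lf G b ≠ 0 := mul_ne_zero (lf_ne_zero F hF) (lf_ne_zero G hG)
  have hk : ∃ k, (lf F a * lf G b).coeff k ≠ 0 := by
    exact ⟨(lf F a * lf G b).natDegree, fun hc =>
      hne (Polynomial.leadingCoeff_eq_zero.mp hc)⟩
  obtain ⟨k, hk⟩ := hk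
  rw [coeff_lf_mul] at hk
  have hab : a + b ≤ dx :=
    le_trans (Polynomial.le_natDegree_of_ne_zero hk) (h k)
  intro j
  refine le_trans ?_ (le_trans (Nat.le_add_right a b) hab)
  by_cases hj : j ∈ F.support
  · exact ha ▸ Finset.le_sup (f := fun j => (F.coeff j).natDegree) hj
  · rw [Polynomial.notMem_support_iff.mp hj]; simp

end DmaxSection

open Polynomial

noncomputable section CoreSection

variable {K : Type*} [Field K]

/-- encode a vector as a polynomial of degree `< b`. -/
noncomputable def toP1 {b : ℕ} (w : Fin b → K) : Polynomial K :=
  ∑ i : Fin b, Polynomial.monomial (i : ℕ) (w i)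

lemma coeff_toP1 {b : ℕ} (w : Fin b → K) (i : Fin b) : (toP1 w).coeff (i : ℕ) = w i := by
  rw [toP1, Polynomial.finset_sum_coeff]
  rw [Finset.sum_eq_single i (fun b _ hb => by
    rw [Polynomial.coeff_monomial, if_neg (fun hc => hb (Fin.ext hc))])
    (fun h => absurd (Finset.mem_univ i) h)]
  rw [Polynomial.coeff_monomial, if_pos rfl]

lemma natDegree_toP1_le {b : ℕ} (w : Fin b → K) : (toP1 w).natDegree ≤ b - 1 := by
  refine Polynomial.natDegree_sum_le_of_forall_le _ _ fun i _ => ?_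
  refine le_trans (Polynomial.natDegree_monomial_le _) ?_
  omega

lemma toP1_eq_zero {b : ℕ} {w : Fin b → K} (h : toP1 w = 0) : w = 0 := by
  funext i
  have := coeff_toP1 w i
  rw [h, Polynomial.coeff_zero] at this
  exact this.symm

lemma toP1_add {b : ℕ} (w w' : Fin b → K) : toP1 (w + w') = toP1 w + toP1 w' := by
  simp [toP1, Finset.sum_add_distrib]

lemma toP1_smul {b : ℕ} (k : K) (w : Fin b → K) : toP1 (k • w) = k • toP1 w := by
  simp [toP1, Polynomial.smul_monomial, Finset.smul_sum]

/-- encode a matrix as a bivariate polynomial of outer degree `< a`, inner degree `< b`. -/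
noncomputable def toP2 {a b : ℕ} (v : Matrix (Fin a) (Fin b) K) :
    Polynomial (Polynomial K) :=
  ∑ j : Fin a, Polynomial.monomial (j : ℕ) (toP1 (v j))

lemma coeff_toP2 {a b : ℕ} (v : Matrix (Fin a) (Fin b) K) (j : Fin a) :
    (toP2 v).coeff (j : ℕ) = toP1 (v j) := by
  rw [toP2, Polynomial.finset_sum_coeff]
  rw [Finset.sum_eq_single j (fun b _ hb => by
    rw [Polynomial.coeff_monomial, if_neg (fun hc => hb (Fin.ext hc))])
    (fun h => absurd (Finset.mem_univ j) h)]
  rw [Polynomial.coeff_monomial, if_pos rfl]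

lemma natDegree_toP2_le {a b : ℕ} (v : Matrix (Fin a) (Fin b) K) :
    (toP2 v).natDegree ≤ a - 1 := by
  refine Polynomial.natDegree_sum_le_of_forall_le _ _ fun j _ => ?_
  refine le_trans (Polynomial.natDegree_monomial_le _) ?_
  omega

lemma natDegree_coeff_toP2 {a b : ℕ} (v : Matrix (Fin a) (Fin b) K) (u : ℕ) :
    ((toP2 v).coeff u).natDegree ≤ b - 1 := by
  by_cases hu : u < a
  · have : (toP2 v).coeff u = toP1 (v ⟨u, hu⟩) := coeff_toP2 v ⟨u, hu⟩
    rw [this]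
    exact natDegree_toP1_le _
  · have hz : (toP2 v).coeff u = 0 := by
      rcases Nat.eq_zero_or_pos a with ha | ha
      · subst ha; simp [toP2]
      · exact Polynomial.coeff_eq_zero_of_natDegree_lt
          (lt_of_le_of_lt (natDegree_toP2_le v) (by omega))
    rw [hz]; simp

lemma toP2_eq_zero {a b : ℕ} {v : Matrix (Fin a) (Fin b) K} (h : toP2 v = 0) : v = 0 := by
  funext j
  have := coeff_toP2 v j
  rw [h, Polynomial.coeff_zero] at this
  have := toP1_eq_zero this.symm
  exact this

lemma toP2_add {a b : ℕ} (v v' : Matrix (Fin a) (Fin b) K) :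
    toP2 (v + v') = toP2 v + toP2 v' := by
  simp only [toP2]
  rw [← Finset.sum_add_distrib]
  refine Finset.sum_congr rfl fun j _ => ?_
  have : (v + v') j = v j + v' j := rfl
  rw [this, toP1_add, map_add]

lemma toP2_smul {a b : ℕ} (k : K) (v : Matrix (Fin a) (Fin b) K) :
    toP2 (k • v) = k • toP2 v := by
  simp only [toP2]
  rw [Finset.smul_sum]
  refine Finset.sum_congr rfl fun j _ => ?_
  have : (k • v) j = k • (v j) := rfl
  rw [this, toP1_smul, Polynomial.smul_monomial]

lemma inner_deg_mul_le {e1 e2 : ℕ} (A p : Polynomial (Polynomial K))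
    (hA : ∀ u, (A.coeff u).natDegree ≤ e1) (hp : ∀ u, (p.coeff u).natDegree ≤ e2) :
    ∀ k, ((A * p).coeff k).natDegree ≤ e1 + e2 := by
  intro k
  rw [Polynomial.coeff_mul]
  refine Polynomial.natDegree_sum_le_of_forall_le _ _ fun x _ => ?_
  exact le_trans Polynomial.natDegree_mul_le (add_le_add (hA _) (hp _))

end CoreSection
open Polynomial

noncomputable section CoreMain

variable {K : Type*} [Field K]

lemma core_exists_bezout (p q : Polynomial (Polynomial K)) {n' dx dy : ℕ}
    (hp0 : p ≠ 0) (hpn : p.natDegree = n' + 1) (hpdy : n' + 1 ≤ dy)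
    (hpx : ∀ j, (p.coeff j).natDegree ≤ dx)
    (hqx : ∀ j, (q.coeff j).natDegree ≤ dx) (hqy : q.natDegree ≤ dy)
    (hbez : ∃ (A B : Polynomial (Polynomial K)) (c : Polynomial K),
      c ≠ 0 ∧ A * p + B * q = Polynomial.C c) :
    ∃ (A B : Polynomial (Polynomial K)) (c : Polynomial K),
      c ≠ 0 ∧ c.natDegree ≤ 2 * dx * dy ∧ A * p + B * q = Polynomial.C c := by
  classical
  set E : ℕ := dx * (n' + dy) with hE
  -- the linear map whose kernel provides the relation
  let L : (Matrix (Fin dy) (Fin (E + 1)) K × Matrix (Fin (n' + 1)) (Fin (E + 1)) K) →ₗ[K]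
      Matrix (Fin (n' + dy)) (Fin (E + dx + 1)) K :=
    { toFun := fun vw => fun j i =>
        (((toP2 vw.1) * p + (toP2 vw.2) * q).coeff ((j : ℕ) + 1)).coeff (i : ℕ)
      map_add' := by
        intro x y
        funext j i
        show ((toP2 (x.1 + y.1) * p + toP2 (x.2 + y.2) * q).coeff _).coeff _ = _
        rw [toP2_add, toP2_add, add_mul, add_mul]
        have : toP2 x.1 * p + toP2 y.1 * p + (toP2 x.2 * q + toP2 y.2 * q)
            = (toP2 x.1 * p + toP2 x.2 * q) + (toP2 y.1 * p + toP2 y.2 * q) := by ring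
        rw [this, Polynomial.coeff_add, Polynomial.coeff_add]
        rfl
      map_smul' := by
        intro k x
        funext j i
        show ((toP2 (k • x.1) * p + toP2 (k • x.2) * q).coeff _).coeff _ = _
        rw [toP2_smul, toP2_smul, smul_mul_assoc, smul_mul_assoc, ← smul_add,
          Polynomial.coeff_smul, Polynomial.coeff_smul]
        rfl }
  have hrk1 : Module.finrank K
      (Matrix (Fin dy) (Fin (E + 1)) K × Matrix (Fin (n' + 1)) (Fin (E + 1)) K)
      = (dy + (n' + 1)) * (E + 1) := by
    rw [Module.finrank_prod, Module.finrank_matrix, Module.finrank_matrix]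
    simp [Fintype.card_fin, Module.finrank_self]
    ring
  have hrk2 : Module.finrank K (Matrix (Fin (n' + dy)) (Fin (E + dx + 1)) K)
      = (n' + dy) * (E + dx + 1) := by
    rw [Module.finrank_matrix]
    simp [Fintype.card_fin, Module.finrank_self]
  have hlt : Module.finrank K (Matrix (Fin (n' + dy)) (Fin (E + dx + 1)) K)
      < Module.finrank K
        (Matrix (Fin dy) (Fin (E + 1)) K × Matrix (Fin (n' + 1)) (Fin (E + 1)) K) := by
    rw [hrk1, hrk2, hE]
    have : (n' + dy) * (dx * (n' + dy) + dx + 1) + 1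
        = (dy + (n' + 1)) * (dx * (n' + dy) + 1) := by ring
    omega
  have hni : ¬ Function.Injective L := by
    intro hinj
    have := LinearMap.finrank_le_finrank_of_injective hinj
    omega
  obtain ⟨x, y, hxy, hne⟩ := Function.not_injective_iff.mp hni
  set vw := x - y with hvw
  have hvwne : vw ≠ 0 := sub_ne_zero.mpr hne
  have hLvw : L vw = 0 := by rw [hvw, map_sub, hxy, sub_self]
  set A := toP2 vw.1 with hA
  set B := toP2 vw.2 with hB
  set F := A * p + B * q with hF
  have hdy1 : 1 ≤ dy := le_trans (by omega) hpdy
  -- outer degree bound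
  have houter : F.natDegree ≤ n' + dy := by
    refine le_trans (Polynomial.natDegree_add_le _ _) (max_le ?_ ?_)
    · refine le_trans Polynomial.natDegree_mul_le ?_
      have h1 : A.natDegree ≤ dy - 1 := natDegree_toP2_le _
      have h2 : p.natDegree = n' + 1 := hpn
      omega
    · refine le_trans Polynomial.natDegree_mul_le ?_
      have h1 : B.natDegree ≤ (n' + 1) - 1 := natDegree_toP2_le _
      omega
  -- inner degree bound
  have hinner : ∀ k, (F.coeff k).natDegree ≤ E + dx := by
    intro k
    rw [hF, Polynomial.coeff_add]
    refine le_trans (Polynomial.natDegree_add_le _ _) (max_le ?_ ?_)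
    · refine inner_deg_mul_le A p (fun u => ?_) hpx k
      refine le_trans (natDegree_coeff_toP2 _ _) (by omega)
    · refine inner_deg_mul_le B q (fun u => ?_) hqx k
      refine le_trans (natDegree_coeff_toP2 _ _) (by omega)
  -- all positive outer coefficients vanish
  have hvanish : ∀ m, 1 ≤ m → F.coeff m = 0 := by
    intro m hm
    by_cases hmle : m ≤ n' + dy
    · ext i
      rw [Polynomial.coeff_zero]
      by_cases hi : i ≤ E + dx
      · have := congrFun (congrFun hLvw ⟨m - 1, by omega⟩) ⟨i, by omega⟩
        rw [hF, Polynomial.coeff_add, Polynomial.coeff_add]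
        change (((toP2 vw.1) * p + (toP2 vw.2) * q).coeff ((m - 1 : ℕ) + 1)).coeff i = 0 at this
        simpa [L, LinearMap.coe_mk, AddHom.coe_mk, show m - 1 + 1 = m by omega] using this
      · exact Polynomial.coeff_eq_zero_of_natDegree_lt (lt_of_le_of_lt (hinner m) (by omega))
    · exact Polynomial.coeff_eq_zero_of_natDegree_lt (lt_of_le_of_lt houter (by omega))
  have hFC : F = Polynomial.C (F.coeff 0) := by
    ext m
    rcases Nat.eq_zero_or_pos m with rfl | hm
    · rw [Polynomial.coeff_C]; simp
    · rw [hvanish m hm, Polynomial.coeff_C, if_neg (by omega)]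
  -- the constant is nonzero
  have hc0 : F.coeff 0 ≠ 0 := by
    intro hc
    have hF0 : F = 0 := by rw [hFC, hc, map_zero]
    -- coprimality over the fraction field
    obtain ⟨A₀, B₀, c₀, hc₀, heq₀⟩ := hbez
    set Ff := FractionRing (Polynomial K)
    set θ : Polynomial (Polynomial K) →+* Polynomial Ff :=
      Polynomial.mapRingHom (algebraMap (Polynomial K) Ff) with hθ
    have hinj : Function.Injective (algebraMap (Polynomial K) Ff) :=
      IsFractionRing.injective _ _
    have hu : algebraMap (Polynomial K) Ff c₀ ≠ 0 := by
      rw [Ne, IsFractionRing.to_map_eq_zero_iff]; exact hc₀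
    have hcop : IsCoprime (θ p) (θ q) := by
      refine ⟨Polynomial.C (algebraMap (Polynomial K) Ff c₀)⁻¹ * θ A₀,
        Polynomial.C (algebraMap (Polynomial K) Ff c₀)⁻¹ * θ B₀, ?_⟩
      have := congrArg θ heq₀
      rw [map_add, map_mul, map_mul] at this
      have hCc : θ (Polynomial.C c₀) = Polynomial.C (algebraMap (Polynomial K) Ff c₀) := by
        simp [hθ]
      rw [hCc] at this
      calc Polynomial.C (algebraMap (Polynomial K) Ff c₀)⁻¹ * θ A₀ * θ p +
            Polynomial.C (algebraMap (Polynomial K) Ff c₀)⁻¹ * θ B₀ * θ q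
          = Polynomial.C (algebraMap (Polynomial K) Ff c₀)⁻¹ * (θ A₀ * θ p + θ B₀ * θ q) := by
            ring
        _ = Polynomial.C (algebraMap (Polynomial K) Ff c₀)⁻¹ *
              Polynomial.C (algebraMap (Polynomial K) Ff c₀) := by rw [this]
        _ = 1 := by rw [← map_mul, inv_mul_cancel₀ hu, map_one]
    have hdvd : θ p ∣ θ B * θ q := by
      refine ⟨-(θ A), ?_⟩
      have : θ A * θ p + θ B * θ q = 0 := by
        rw [← map_mul, ← map_mul, ← map_add, ← hF, hF0, map_zero]
      linear_combination this
    have hdvdB : θ p ∣ θ B := hcop.dvd_of_dvd_mul_right hdvd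
    have hBzero : θ B = 0 := by
      by_contra hB0
      have h1 : (θ p).natDegree ≤ (θ B).natDegree := Polynomial.natDegree_le_of_dvd hdvdB hB0
      have h2 : (θ p).natDegree = n' + 1 := by
        rw [hθ, Polynomial.coe_mapRingHom, Polynomial.natDegree_map_eq_of_injective hinj, hpn]
      have h3 : (θ B).natDegree ≤ B.natDegree := Polynomial.natDegree_map_le
      have h4 : B.natDegree ≤ (n' + 1) - 1 := natDegree_toP2_le _
      omega
    have hBz : B = 0 := by
      have : Function.Injective θ := by
        rw [hθ, Polynomial.coe_mapRingHom]
        exact Polynomial.map_injective _ hinj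
      exact this (by rw [hBzero, map_zero])
    have hAz : A = 0 := by
      have : A * p = 0 := by
        have := hF0
        rw [hF, hBz, zero_mul, add_zero] at this
        exact this
      rcases mul_eq_zero.mp this with h | h
      · exact h
      · exact absurd h hp0
    exact hvwne (Prod.ext (toP2_eq_zero hAz) (toP2_eq_zero hBz))
  refine ⟨A, B, F.coeff 0, hc0, ?_, by rw [← hF]; exact hFC⟩
  have h1 : (F.coeff 0).natDegree ≤ E + dx := hinner 0
  have h2 : E + dx ≤ 2 * dx * dy := by
    rw [hE]
    have : dx * (n' + dy) + dx = dx * (n' + 1 + dy) := by ring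
    rw [this]
    calc dx * (n' + 1 + dy) ≤ dx * (dy + dy) := by
          exact Nat.mul_le_mul_left dx (by omega)
      _ = 2 * dx * dy := by ring
  omega

end CoreMain
open Polynomial

noncomputable section MvSection

variable {K : Type*} [Field K] {r : ℕ} (y0 : MvPowerSeries (Fin r) K)

local notation "R" => MvPolynomial (Fin r) K

/-- evaluation at `y0`. -/
noncomputable def phiHom (y0 : MvPowerSeries (Fin r) K) :
    Polynomial (MvPolynomial (Fin r) K) →+* MvPowerSeries (Fin r) K :=
  Polynomial.eval₂RingHom (MvPolynomial.coeToMvPowerSeries.ringHom) y0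

lemma coe_inj_mv {a : MvPolynomial (Fin r) K}
    (h : (a : MvPowerSeries (Fin r) K) = 0) : a = 0 := by
  ext n
  have := congrArg (MvPowerSeries.coeff n) h
  rwa [MvPolynomial.coeff_coe, map_zero] at this

lemma exists_prime_factor (P : Polynomial (MvPolynomial (Fin r) K)) (hP : P ≠ 0)
    (hroot : phiHom y0 P = 0) :
    ∃ P0, Prime P0 ∧ P0 ∣ P ∧ phiHom y0 P0 = 0 := by
  obtain ⟨f, hfp, hassoc⟩ := UniqueFactorizationMonoid.exists_prime_factors P hP
  obtain ⟨u, hu⟩ := hassoc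
  have hprod : phiHom y0 (Multiset.prod f) = 0 := by
    have h1 : phiHom y0 (f.prod) * phiHom y0 (u : Polynomial R) = 0 := by
      rw [← map_mul, hu, hroot]
    rcases mul_eq_zero.mp h1 with h | h
    · exact h
    · exact absurd h (u.isUnit.map (phiHom y0)).ne_zero
  have key : ∀ g : Multiset (Polynomial R), (∀ b ∈ g, Prime b) →
      phiHom y0 g.prod = 0 → ∃ p ∈ g, phiHom y0 p = 0 := by
    intro g
    induction g using Multiset.induction_on with
    | empty => intro _ h; rw [Multiset.prod_zero, map_one] at h; exact absurd h one_ne_zero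
    | cons a s ih =>
      intro hg h
      rw [Multiset.prod_cons, map_mul] at h
      rcases mul_eq_zero.mp h with h | h
      · exact ⟨a, Multiset.mem_cons_self a s, h⟩
      · obtain ⟨p, hp, hp0⟩ := ih (fun b hb => hg b (Multiset.mem_cons_of_mem hb)) h
        exact ⟨p, Multiset.mem_cons_of_mem hp, hp0⟩
  obtain ⟨p, hpmem, hp0⟩ := key f hfp hprod
  exact ⟨p, hfp p hpmem, dvd_trans (Multiset.dvd_prod hpmem) ⟨u, hu.symm⟩, hp0⟩

lemma one_le_natDegree_of_root {P0 : Polynomial (MvPolynomial (Fin r) K)}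
    (hprime : Prime P0) (h0 : phiHom y0 P0 = 0) : 1 ≤ P0.natDegree := by
  by_contra h
  push_neg at h
  obtain ⟨a, ha⟩ := (Polynomial.natDegree_eq_zero (p := P0)).mp (by omega)
  have : phiHom y0 (Polynomial.C a) = (a : MvPowerSeries (Fin r) K) := by
    simp [phiHom]
  rw [← ha, this] at h0
  have h2 := coe_inj_mv h0
  rw [h2, map_zero] at ha
  exact hprime.ne_zero ha.symm

lemma isPrimitive_of_prime {P0 : Polynomial (MvPolynomial (Fin r) K)}
    (hprime : Prime P0) (hdeg : 1 ≤ P0.natDegree) : P0.IsPrimitive := by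
  intro a ha
  obtain ⟨T, hT⟩ := ha
  rcases hprime.irreducible.isUnit_or_isUnit hT with h | h
  · exact Polynomial.isUnit_C.mp h
  · exfalso
    have h1 : T.natDegree = 0 := Polynomial.natDegree_eq_zero_of_isUnit h
    have h2 : P0.natDegree ≤ 0 := by
      rw [hT]
      refine le_trans Polynomial.natDegree_mul_le ?_
      simp [h1]
    omega

lemma exists_bezout_mv (P Q : Polynomial (MvPolynomial (Fin r) K)) (hP : P ≠ 0)
    (hroot : phiHom y0 P = 0) (hQ : phiHom y0 Q ≠ 0) :
    ∃ P0 H : Polynomial (MvPolynomial (Fin r) K), P = P0 * H ∧ phiHom y0 P0 = 0 ∧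
      1 ≤ P0.natDegree ∧
      ∃ A B : Polynomial (MvPolynomial (Fin r) K), ∃ c : MvPolynomial (Fin r) K,
        c ≠ 0 ∧ A * P0 + B * Q = Polynomial.C c := by
  classical
  obtain ⟨P0, hprime, ⟨H, hH⟩, h0⟩ := exists_prime_factor y0 P hP hroot
  have hdeg : 1 ≤ P0.natDegree := one_le_natDegree_of_root y0 hprime h0
  have hprim : P0.IsPrimitive := isPrimitive_of_prime hprime hdeg
  letI : NormalizationMonoid R := UniqueFactorizationMonoid.normalizationMonoid.toNormalizationMonoid
  letI : NormalizedGCDMonoid R := UniqueFactorizationMonoid.toNormalizedGCDMonoid R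
  set Ff := FractionRing R
  set θ : Polynomial R →+* Polynomial Ff := Polynomial.mapRingHom (algebraMap R Ff) with hθ
  have hinj : Function.Injective (algebraMap R Ff) := IsFractionRing.injective _ _
  have hθinj : Function.Injective θ := by
    rw [hθ, Polynomial.coe_mapRingHom]
    exact Polynomial.map_injective _ hinj
  have hirr : Irreducible (θ P0) := by
    rw [hθ, Polynomial.coe_mapRingHom]
    exact (hprim.irreducible_iff_irreducible_map_fraction_map).mp hprime.irreducible
  by_cases hdvd : θ P0 ∣ θ Q
  · exfalso
    obtain ⟨S, hS⟩ := hdvd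
    obtain ⟨⟨d, hd⟩, hsd⟩ := IsLocalization.integerNormalization_map_to_map
      (nonZeroDivisors R) S
    have hd0 : d ≠ 0 := nonZeroDivisors.ne_zero hd
    have hsd' : θ (IsLocalization.integerNormalization (nonZeroDivisors R) S)
        = ((⟨d, hd⟩ : nonZeroDivisors R) : R) • S := by
      rw [hθ, Polynomial.coe_mapRingHom]; exact hsd
    have key : θ (Polynomial.C d * Q) = θ (P0 * IsLocalization.integerNormalization
        (nonZeroDivisors R) S) := by
      rw [map_mul, map_mul, hsd']
      have h1 : θ (Polynomial.C d) = Polynomial.C (algebraMap R Ff d) := by simp [hθ]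
      have h2 : ((⟨d, hd⟩ : nonZeroDivisors R) : R) • S
          = Polynomial.C (algebraMap R Ff d) * S := by
        rw [Subtype.coe_mk, ← IsScalarTower.algebraMap_smul Ff d S, Polynomial.smul_eq_C_mul]
      rw [h1, h2, hS]
      ring
    have keyR : Polynomial.C d * Q = P0 * IsLocalization.integerNormalization
        (nonZeroDivisors R) S := hθinj key
    have := congrArg (phiHom y0) keyR
    rw [map_mul, map_mul, h0, zero_mul] at this
    have hCd : phiHom y0 (Polynomial.C d) = (d : MvPowerSeries (Fin r) K) := by simp [phiHom]
    rw [hCd] at this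
    rcases mul_eq_zero.mp this with h | h
    · exact hd0 (coe_inj_mv h)
    · exact hQ h
  · have hcop : IsCoprime (θ P0) (θ Q) := (hirr.coprime_iff_not_dvd).mpr hdvd
    obtain ⟨a, b, hab⟩ := hcop
    obtain ⟨⟨sa, hsa⟩, ha⟩ := IsLocalization.integerNormalization_map_to_map
      (nonZeroDivisors R) a
    obtain ⟨⟨sb, hsb⟩, hb⟩ := IsLocalization.integerNormalization_map_to_map
      (nonZeroDivisors R) b
    have hsmul : ∀ (s : R) (hs : s ∈ nonZeroDivisors R) (x : Polynomial Ff),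
        ((⟨s, hs⟩ : nonZeroDivisors R) : R) • x = Polynomial.C (algebraMap R Ff s) * x := by
      intro s hs x
      rw [Subtype.coe_mk, ← IsScalarTower.algebraMap_smul Ff s x, Polynomial.smul_eq_C_mul]
    refine ⟨P0, H, hH, h0, hdeg,
      Polynomial.C sb * IsLocalization.integerNormalization (nonZeroDivisors R) a,
      Polynomial.C sa * IsLocalization.integerNormalization (nonZeroDivisors R) b,
      sa * sb, mul_ne_zero (nonZeroDivisors.ne_zero hsa) (nonZeroDivisors.ne_zero hsb), ?_⟩
    have ha' : θ (IsLocalization.integerNormalization (nonZeroDivisors R) a)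
        = ((⟨sa, hsa⟩ : nonZeroDivisors R) : R) • a := by
      rw [hθ, Polynomial.coe_mapRingHom]; exact ha
    have hb' : θ (IsLocalization.integerNormalization (nonZeroDivisors R) b)
        = ((⟨sb, hsb⟩ : nonZeroDivisors R) : R) • b := by
      rw [hθ, Polynomial.coe_mapRingHom]; exact hb
    apply hθinj
    rw [map_add, map_mul, map_mul, map_mul, map_mul, ha', hb']
    have h1 : θ (Polynomial.C sb) = Polynomial.C (algebraMap R Ff sb) := by simp [hθ]
    have h2 : θ (Polynomial.C sa) = Polynomial.C (algebraMap R Ff sa) := by simp [hθ]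
    have h3 : θ (Polynomial.C (sa * sb)) = Polynomial.C (algebraMap R Ff (sa * sb)) := by
      simp [hθ]
    rw [h1, h2, h3, hsmul sa hsa, hsmul sb hsb, map_mul]
    calc Polynomial.C (algebraMap R Ff sb) * (Polynomial.C (algebraMap R Ff sa) * a) * θ P0 +
          Polynomial.C (algebraMap R Ff sa) * (Polynomial.C (algebraMap R Ff sb) * b) * θ Q
        = Polynomial.C (algebraMap R Ff sa) * Polynomial.C (algebraMap R Ff sb) *
            (a * θ P0 + b * θ Q) := by ring
      _ = Polynomial.C (algebraMap R Ff sa) * Polynomial.C (algebraMap R Ff sb) := by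
          rw [hab, mul_one]
      _ = _ := by rw [← map_mul]

end MvSection

lemma exists_eval_ne_zero_generic {K : Type*} [Field K] [Infinite K] {r : ℕ}
    {g : MvPolynomial (Fin r) K} (hg : g ≠ 0) :
    ∃ χ : Fin r → K, MvPolynomial.eval χ g ≠ 0 := by
  by_contra h
  push_neg at h
  exact hg (MvPolynomial.funext fun x => by rw [h x, map_zero])


/-- Let `K` be a field of characteristic zero and `y₀ ∈ K[[x₁,…,x_r]]` a power series with
zero constant term satisfying `P(x, y₀) = 0`, where `P ∈ K[x₁,…,x_r][y]` is nonzero of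
total `x`-degree at most `d_x` and `y`-degree at most `d_y`.  Then for every polynomial
`Q ∈ K[x₁,…,x_r][y]` with the same degree bounds such that `Q(x, y₀) ≠ 0`, the order of
the power series `Q(x, y₀)` is at most `2·d_x·d_y`, i.e. `Q(x, y₀)` has a nonzero
coefficient in total degree at most `2·d_x·d_y`. -/
theorem order_eval_le (K : Type*) [Field K] [CharZero K] (r dx dy : ℕ)
    (y0 : MvPowerSeries (Fin r) K)
    (h0 : MvPowerSeries.constantCoeff y0 = 0)
    (P : Polynomial (MvPolynomial (Fin r) K)) (hP : P ≠ 0)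
    (hPx : ∀ j, (P.coeff j).totalDegree ≤ dx) (hPy : P.natDegree ≤ dy)
    (hroot : Polynomial.eval₂ MvPolynomial.coeToMvPowerSeries.ringHom y0 P = 0)
    (Q : Polynomial (MvPolynomial (Fin r) K))
    (hQx : ∀ j, (Q.coeff j).totalDegree ≤ dx) (hQy : Q.natDegree ≤ dy)
    (hQ : Polynomial.eval₂ MvPolynomial.coeToMvPowerSeries.ringHom y0 Q ≠ 0) :
    ∃ n : Fin r →₀ ℕ,
      MvPowerSeries.coeff n (Polynomial.eval₂ MvPolynomial.coeToMvPowerSeries.ringHom y0 Q) ≠ 0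
        ∧ (∑ i, n i) ≤ 2 * dx * dy := by
  classical
  have hroot' : phiHom y0 P = 0 := hroot
  have hQ' : phiHom y0 Q ≠ 0 := hQ
  obtain ⟨P0, H, hH, hP00, hdeg, A₂, B₂, c, hc, hbezmv⟩ := exists_bezout_mv y0 P Q hP hroot' hQ'
  have hP0ne : P0 ≠ 0 := fun h => hP (by rw [hH, h, zero_mul])
  have hHne : H ≠ 0 := fun h => hP (by rw [hH, h, mul_zero])
  -- generic point
  have hgne : c * P0.leadingCoeff * H.leadingCoeff ≠ 0 :=
    mul_ne_zero (mul_ne_zero hc (Polynomial.leadingCoeff_ne_zero.mpr hP0ne))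
      (Polynomial.leadingCoeff_ne_zero.mpr hHne)
  obtain ⟨χ, hχ⟩ := exists_eval_ne_zero_generic hgne
  rw [map_mul, map_mul] at hχ
  have hχc : MvPolynomial.eval χ c ≠ 0 := fun h => hχ (by rw [h, zero_mul, zero_mul])
  have hχP0 : MvPolynomial.eval χ P0.leadingCoeff ≠ 0 :=
    fun h => hχ (by rw [h, mul_zero, zero_mul])
  have hχH : MvPolynomial.eval χ H.leadingCoeff ≠ 0 := fun h => hχ (by rw [h, mul_zero])
  -- specialize
  set σ := sigmaHat χ with hσdef
  have hσne : ∀ g : MvPolynomial (Fin r) K, MvPolynomial.eval χ g ≠ 0 → σ g ≠ 0 := by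
    intro g hg hzero
    rw [← eval_one_sigmaHat χ g] at hg
    rw [hσdef] at hzero
    rw [hzero] at hg
    simp at hg
  set p := Polynomial.map σ P0 with hpdef
  set q := Polynomial.map σ Q with hqdef
  have hpdeg : p.natDegree = P0.natDegree :=
    Polynomial.natDegree_map_of_leadingCoeff_ne_zero σ (hσne _ hχP0)
  have hpne : p ≠ 0 := by
    intro h
    have : p.coeff P0.natDegree = σ P0.leadingCoeff := Polynomial.coeff_map _ _
    rw [h, Polynomial.coeff_zero] at this
    exact hσne _ hχP0 this.symm
  have hHmapne : Polynomial.map σ H ≠ 0 := by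
    intro h
    have : (Polynomial.map σ H).coeff H.natDegree = σ H.leadingCoeff :=
      Polynomial.coeff_map _ _
    rw [h, Polynomial.coeff_zero] at this
    exact hσne _ hχH this.symm
  -- inner degree bounds
  have hPmap : ∀ k, ((p * Polynomial.map σ H).coeff k).natDegree ≤ dx := by
    intro k
    rw [hpdef, ← Polynomial.map_mul, ← hH]
    rw [Polynomial.coeff_map]
    exact le_trans (natDegree_sigmaHat_le χ _) (hPx k)
  have hp_inner : ∀ j, (p.coeff j).natDegree ≤ dx :=
    natDegree_coeff_le_of_dvd p (Polynomial.map σ H) hpne hHmapne dx hPmap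
  have hq_inner : ∀ j, (q.coeff j).natDegree ≤ dx := by
    intro j
    rw [hqdef, Polynomial.coeff_map]
    exact le_trans (natDegree_sigmaHat_le χ _) (hQx j)
  have hq_deg : q.natDegree ≤ dy := le_trans (Polynomial.natDegree_map_le) hQy
  have hpdy : P0.natDegree ≤ dy :=
    le_trans (Polynomial.natDegree_le_of_dvd ⟨H, hH⟩ hP) hPy
  -- transported bezout
  have hbez : ∃ (A B : Polynomial (Polynomial K)) (c' : Polynomial K),
      c' ≠ 0 ∧ A * p + B * q = Polynomial.C c' := by
    refine ⟨Polynomial.map σ A₂, Polynomial.map σ B₂, σ c, hσne _ hχc, ?_⟩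
    rw [hpdef, hqdef, ← Polynomial.map_mul, ← Polynomial.map_mul, ← Polynomial.map_add, hbezmv,
      Polynomial.map_C]
  -- core lemma
  obtain ⟨A, B, c', hc', hcdeg', heq'⟩ := core_exists_bezout p q
    (n' := P0.natDegree - 1) hpne (by omega) (by omega) hp_inner hq_inner hq_deg hbez
  -- evaluate at the specialized series
  set ψ := psiHom χ (K := K) (r := r) with hψdef
  set E2 : Polynomial (Polynomial K) →+* PowerSeries K :=
    Polynomial.eval₂RingHom (Polynomial.coeToPowerSeries.ringHom) (ψ y0) with hE2def
  have hcomm : (ψ.comp (MvPolynomial.coeToMvPowerSeries.ringHom)) =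
      ((Polynomial.coeToPowerSeries.ringHom).comp σ) := by
    refine RingHom.ext fun g => ?_
    exact psiHom_coe χ g
  have hE2 : ∀ F : Polynomial (MvPolynomial (Fin r) K),
      E2 (Polynomial.map σ F) = ψ (phiHom y0 F) := by
    intro F
    rw [hE2def, Polynomial.coe_eval₂RingHom, Polynomial.eval₂_map]
    rw [show phiHom y0 F = Polynomial.eval₂ MvPolynomial.coeToMvPowerSeries.ringHom y0 F from rfl]
    rw [Polynomial.hom_eval₂, hcomm]
  have heval := congrArg E2 heq'
  rw [map_add, map_mul, map_mul] at heval
  have hE2p : E2 p = 0 := by rw [hpdef, hE2, hP00, map_zero]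
  have hE2q : E2 q = ψ (phiHom y0 Q) := hE2 Q
  rw [hE2p, mul_zero, zero_add, hE2q] at heval
  have hE2C : E2 (Polynomial.C c') = (c' : PowerSeries K) := by
    rw [hE2def, Polynomial.coe_eval₂RingHom, Polynomial.eval₂_C]
    rfl
  rw [hE2C] at heval
  -- final contradiction
  by_contra hcon
  push_neg at hcon
  rw [show Polynomial.eval₂ MvPolynomial.coeToMvPowerSeries.ringHom y0 Q = phiHom y0 Q
    from rfl] at hcon
  have hψzero : ∀ N, N ≤ 2 * dx * dy → PowerSeries.coeff N (ψ (phiHom y0 Q)) = 0 := by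
    intro N hN
    have : ψ (phiHom y0 Q) = PowerSeries.mk (psiCoeff χ (phiHom y0 Q)) := rfl
    rw [this, PowerSeries.coeff_mk, psiCoeff]
    refine Finset.sum_eq_zero fun n hn => ?_
    rw [mem_degSlice] at hn
    have hzero : MvPowerSeries.coeff n (phiHom y0 Q) = 0 := by
      by_contra hne
      have := hcon n hne
      omega
    rw [hzero, zero_mul]
  have hprodzero : PowerSeries.coeff c'.natDegree ((c' : PowerSeries K)) = 0 := by
    rw [← heval, PowerSeries.coeff_mul]
    refine Finset.sum_eq_zero fun ij hij => ?_
    have := Finset.HasAntidiagonal.mem_antidiagonal.mp hij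
    rw [hψzero ij.2 (by omega), mul_zero]
  rw [Polynomial.coeff_coe] at hprodzero
  exact hc' (Polynomial.leadingCoeff_eq_zero.mp hprodzero)
end

section
/- Let K be a field of characteristic zero and let y_0 ∈ K[[x_1,...,x_r]] be a simple root of a nonzero polynomial P(x,y) ∈ K[x_1,...,x_r, y] with deg_x P ≤ d_x and deg_y P ≤ d_y (simple root means P(x,y_0) = 0 and ∂P/∂y (x, y_0) ≠ 0). If y_1 ∈ K[[x_1,...,x_r]] is any other root of P with y_1 ≠ y_0, then the order of the power series y_0 − y_1 is at most 2·d_x·d_y. -/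
/-!
Pass from `P` to a divisor `H ∈ K[x][y]` that still vanishes at `y₀` and `y₁` but is separable
over `K(x)`: an irreducible factor vanishing at `y₀`, times one vanishing at `y₁` if that is a
different one. Then `ρ = Res_y(H, ∂H/∂y)` is a nonzero polynomial of degree at most
`(2 deg_y H - 1)·d_x ≤ 2·d_x·d_y`, since the `x`-degree of a divisor of `P` is at most `d_x`.
Writing `ρ = A·H + B·∂H/∂y` and evaluating at `y₀` gives `ρ = B(y₀)·∂H/∂y(x, y₀)`, and Taylor's
formula at `y₀` with increment `y₁ - y₀` shows that `y₀ - y₁` divides `∂H/∂y(x, y₀)`. Hence the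
order of `y₀ - y₁` is at most that of `ρ`, which is at most its total degree.
-/

open Polynomial

theorem UniqueFactorizationMonoid.exists_prime_dvd_of_map_eq_zero
    {M N F : Type*} [CommMonoidWithZero M] [UniqueFactorizationMonoid M]
    [MonoidWithZero N] [NoZeroDivisors N] [Nontrivial N] [FunLike F M N]
    [MonoidWithZeroHomClass F M N] (f : F) {x : M} (hx : x ≠ 0) (hfx : f x = 0) :
    ∃ p, Prime p ∧ p ∣ x ∧ f p = 0 := by
  induction x using UniqueFactorizationMonoid.induction_on_prime with
  | h₁ => exact absurd rfl hx
  | h₂ u hu => exact absurd hfx (hu.map f).ne_zero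
  | h₃ a p ha hp ih =>
    rw [map_mul] at hfx
    rcases mul_eq_zero.mp hfx with hfp | hfa
    · exact ⟨p, hp, dvd_mul_right p a, hfp⟩
    · obtain ⟨q, hq, hqa, hfq⟩ := ih ha hfa
      exact ⟨q, hq, hqa.mul_left p, hfq⟩

namespace Polynomial

section Roots

variable {A R : Type*} [CommRing A] [CommRing R]

lemma natDegree_ne_zero_of_eval₂_eq_zero {φ : A →+* R} (hφ : Function.Injective φ) {Q : A[X]}
    (hQ : Q ≠ 0) {a : R} (ha : Q.eval₂ φ a = 0) : Q.natDegree ≠ 0 := by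
  intro h
  rw [eq_C_of_natDegree_eq_zero h, eval₂_C, map_eq_zero_iff φ hφ] at ha
  exact hQ (by rw [eq_C_of_natDegree_eq_zero h, ha, C_0])

variable [IsDomain R]

lemma sub_dvd_eval_derivative {f : R[X]} {a b : R} (ha : f.eval a = 0) (hb : f.eval b = 0)
    (hab : a ≠ b) : a - b ∣ (derivative f).eval a := by
  obtain ⟨k, hk⟩ := binomExpansion f a (b - a)
  rw [add_sub_cancel, hb, ha] at hk
  exact ⟨k, mul_left_cancel₀ (sub_ne_zero.mpr hab) (by linear_combination hk)⟩

lemma sub_dvd_resultant_derivative (φ : A →+* R) {H : A[X]} (hH : H.natDegree ≠ 0) {a b : R}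
    (ha : H.eval₂ φ a = 0) (hb : H.eval₂ φ b = 0) (hab : a ≠ b) :
    a - b ∣ φ (resultant H (derivative H)) := by
  obtain ⟨p, q, -, -, hpq⟩ :=
    exists_mul_add_mul_eq_C_resultant H (derivative H) le_rfl le_rfl (Or.inl hH)
  have hpq_a := congrArg (eval₂ φ a) hpq
  rw [eval₂_C, eval₂_add, eval₂_mul, eval₂_mul, ha, zero_mul, zero_add] at hpq_a
  rw [← hpq_a, ← eval_map, ← derivative_map]
  exact (sub_dvd_eval_derivative (by rwa [eval_map]) (by rwa [eval_map]) hab).mul_right _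

end Roots

lemma resultant_derivative_ne_zero {A K : Type*} [CommRing A] [Field K] {φ : A →+* K}
    (hφ : Function.Injective φ) {H : A[X]} (hH : (H.map φ).Separable) :
    resultant H (derivative H) ≠ 0 := by
  have h := resultant_ne_zero _ _ hH
  rw [derivative_map, natDegree_map_eq_of_injective hφ, natDegree_map_eq_of_injective hφ,
    resultant_map_map] at h
  exact fun h0 => h (by rw [h0, map_zero])

section Separable

variable {A : Type*} [CommRing A] [IsDomain A] [UniqueFactorizationMonoid A]
  (K : Type*) [Field K] [Algebra A K] [IsFractionRing A K]

lemma separable_map_of_irreducible [CharZero K] {Q : A[X]} (hQ : Irreducible Q)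
    (hdeg : Q.natDegree ≠ 0) :
    (Q.map (algebraMap A K)).Separable :=
  ((hQ.isPrimitive hdeg).irreducible_iff_irreducible_map_fraction_map.mp hQ).separable

lemma isCoprime_map_of_irreducible {Q₁ Q₂ : A[X]} (h₁ : Irreducible Q₁) (h₂ : Irreducible Q₂)
    (hdeg : Q₁.natDegree ≠ 0) (hdvd : ¬ Q₂ ∣ Q₁) :
    IsCoprime (Q₁.map (algebraMap A K)) (Q₂.map (algebraMap A K)) := by
  have hprim := h₁.isPrimitive hdeg
  rw [(hprim.irreducible_iff_irreducible_map_fraction_map.mp h₁).coprime_iff_not_dvd]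
  exact fun h => hdvd (h₁.dvd_symm h₂ (hprim.dvd_of_fraction_map_dvd_fraction_map h))

theorem exists_dvd_separable_of_eval₂_eq_zero [CharZero K] {R : Type*} [CommRing R]
    [IsDomain R] {φ : A →+* R} (hφ : Function.Injective φ) {P : A[X]} (hP : P ≠ 0) {a b : R}
    (ha : P.eval₂ φ a = 0) (hb : P.eval₂ φ b = 0) :
    ∃ H : A[X], H ∣ P ∧ H.eval₂ φ a = 0 ∧ H.eval₂ φ b = 0 ∧ H.natDegree ≠ 0 ∧
      (H.map (algebraMap A K)).Separable := by
  obtain ⟨Q₀, hQ₀, hQ₀P, hQ₀a : Q₀.eval₂ φ a = 0⟩ :=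
    UniqueFactorizationMonoid.exists_prime_dvd_of_map_eq_zero (eval₂RingHom φ a) hP ha
  have hdeg₀ := natDegree_ne_zero_of_eval₂_eq_zero hφ hQ₀.ne_zero hQ₀a
  have hsep₀ := separable_map_of_irreducible K hQ₀.irreducible hdeg₀
  by_cases hQ₀b : Q₀.eval₂ φ b = 0
  · exact ⟨Q₀, hQ₀P, hQ₀a, hQ₀b, hdeg₀, hsep₀⟩
  obtain ⟨P₁, rfl⟩ := hQ₀P
  have hP₁b : P₁.eval₂ φ b = 0 := by
    rw [eval₂_mul] at hb
    exact (mul_eq_zero.mp hb).resolve_left hQ₀b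
  obtain ⟨Q₁, hQ₁, hQ₁P₁, hQ₁b : Q₁.eval₂ φ b = 0⟩ :=
    UniqueFactorizationMonoid.exists_prime_dvd_of_map_eq_zero (eval₂RingHom φ b)
      (right_ne_zero_of_mul hP) hP₁b
  have hdeg₁ := natDegree_ne_zero_of_eval₂_eq_zero hφ hQ₁.ne_zero hQ₁b
  have hQ₁Q₀ : ¬ Q₁ ∣ Q₀ := fun ⟨c, hc⟩ => hQ₀b (by rw [hc, eval₂_mul, hQ₁b, zero_mul])
  refine ⟨Q₀ * Q₁, mul_dvd_mul_left Q₀ hQ₁P₁, by rw [eval₂_mul, hQ₀a, zero_mul],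
    by rw [eval₂_mul, hQ₁b, mul_zero], ?_, ?_⟩
  · rw [natDegree_mul hQ₀.ne_zero hQ₁.ne_zero]
    omega
  · rw [Polynomial.map_mul]
    exact hsep₀.mul (separable_map_of_irreducible K hQ₁.irreducible hdeg₁)
      (isCoprime_map_of_irreducible K hQ₀.irreducible hQ₁.irreducible hdeg₀ hQ₁Q₀)

end Separable

end Polynomial

namespace MvPolynomial

variable {σ R : Type*} [CommRing R]

lemma totalDegree_det_le {ι : Type*} [Fintype ι] [DecidableEq ι]
    (M : Matrix ι ι (MvPolynomial σ R)) {d : ℕ} (hM : ∀ i j, (M i j).totalDegree ≤ d) :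
    M.det.totalDegree ≤ Fintype.card ι * d := by
  rw [Matrix.det_apply]
  refine (totalDegree_finsetSum _ _).trans (Finset.sup_le fun τ _ => ?_)
  rw [Units.smul_def]
  refine (totalDegree_smul_le _ _).trans ((totalDegree_finsetProd _ _).trans ?_)
  refine (Finset.sum_le_sum fun i _ => hM (τ i) i).trans_eq ?_
  rw [Finset.sum_const, Finset.card_univ, smul_eq_mul]

variable {f g : (MvPolynomial σ R)[X]} {d : ℕ}

lemma totalDegree_coeff_derivative_le (hf : ∀ j, (f.coeff j).totalDegree ≤ d) (j : ℕ) :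
    ((derivative f).coeff j).totalDegree ≤ d := by
  rw [coeff_derivative, ← Nat.cast_succ, mul_comm, ← nsmul_eq_mul]
  exact (totalDegree_smul_le _ _).trans (hf _)

lemma totalDegree_resultant_le (hf : ∀ j, (f.coeff j).totalDegree ≤ d)
    (hg : ∀ j, (g.coeff j).totalDegree ≤ d) (m n : ℕ) :
    (resultant f g m n).totalDegree ≤ (m + n) * d := by
  classical
  refine (totalDegree_det_le (d := d) _ fun i j => ?_).trans (by simp)
  induction j using Fin.addCases <;>
    simp only [sylvester, Matrix.of_apply, Fin.addCases_left, Fin.addCases_right] <;>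
    split_ifs <;> simp [hf, hg]

/-- Reads `F ∈ R[x][y]` as a polynomial in `x` over `R[y]`; its total degree is the `x`-degree of
`F`, which is therefore additive on products when `R` is a domain. -/
noncomputable def polynomialSwap : (MvPolynomial σ R)[X] →+* MvPolynomial σ R[X] :=
  eval₂RingHom (map Polynomial.C) (C Polynomial.X)

lemma coeff_coeff_polynomialSwap (F : (MvPolynomial σ R)[X]) (m : σ →₀ ℕ) (j : ℕ) :
    ((polynomialSwap F).coeff m).coeff j = (F.coeff j).coeff m := by
  induction F using Polynomial.induction_on' with
  | add p q hp hq => simp [hp, hq]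
  | monomial k c =>
    rw [polynomialSwap, coe_eval₂RingHom, Polynomial.eval₂_monomial, ← map_pow, mul_comm,
      coeff_C_mul, coeff_map, Polynomial.coeff_X_pow_mul', Polynomial.coeff_C,
      Polynomial.coeff_monomial]
    split_ifs <;> first | omega | simp

lemma polynomialSwap_injective : Function.Injective (polynomialSwap (σ := σ) (R := R)) := by
  refine (injective_iff_map_eq_zero _).mpr fun F hF => Polynomial.ext fun j => ?_
  ext m
  rw [← coeff_coeff_polynomialSwap, hF]
  simp

lemma totalDegree_coeff_le_totalDegree_polynomialSwap (F : (MvPolynomial σ R)[X]) (j : ℕ) :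
    (F.coeff j).totalDegree ≤ (polynomialSwap F).totalDegree := by
  refine Finset.sup_le fun m hm => le_totalDegree (MvPolynomial.mem_support_iff.mpr fun h => ?_)
  rw [MvPolynomial.mem_support_iff, ← coeff_coeff_polynomialSwap, h, Polynomial.coeff_zero] at hm
  exact hm rfl

lemma totalDegree_polynomialSwap_le {F : (MvPolynomial σ R)[X]} {d : ℕ}
    (hF : ∀ j, (F.coeff j).totalDegree ≤ d) : (polynomialSwap F).totalDegree ≤ d := by
  refine Finset.sup_le fun m hm => ?_
  obtain ⟨j, hj⟩ : ∃ j, ((polynomialSwap F).coeff m).coeff j ≠ 0 := by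
    by_contra! h
    exact MvPolynomial.mem_support_iff.mp hm (Polynomial.ext h)
  rw [coeff_coeff_polynomialSwap] at hj
  exact (le_totalDegree (MvPolynomial.mem_support_iff.mpr hj)).trans (hF j)

lemma totalDegree_coeff_le_of_dvd [IsDomain R] {F G : (MvPolynomial σ R)[X]} (hFG : F ∣ G)
    (hG : G ≠ 0) {d : ℕ} (hGd : ∀ j, (G.coeff j).totalDegree ≤ d) (j : ℕ) :
    (F.coeff j).totalDegree ≤ d :=
  (totalDegree_coeff_le_totalDegree_polynomialSwap F j).trans <|
    (totalDegree_le_of_dvd_of_isDomain (map_dvd polynomialSwap hFG)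
      ((map_ne_zero_iff _ polynomialSwap_injective).mpr hG)).trans
    (totalDegree_polynomialSwap_le hGd)

end MvPolynomial

namespace MvPowerSeries

variable {σ R : Type*} [CommSemiring R]

lemma order_coe_le_totalDegree {p : MvPolynomial σ R} (hp : p ≠ 0) :
    order (p : MvPowerSeries σ R) ≤ p.totalDegree := by
  obtain ⟨m, hm⟩ := MvPolynomial.support_nonempty.mpr hp
  have hcoeff : coeff m (p : MvPowerSeries σ R) ≠ 0 := by
    rwa [MvPolynomial.coeff_coe, ← MvPolynomial.mem_support_iff]
  exact (order_le hcoeff).trans (by exact_mod_cast MvPolynomial.le_totalDegree hm)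

lemma exists_coeff_ne_zero_degree_le_of_dvd {f : MvPowerSeries σ R} {p : MvPolynomial σ R}
    (hp : p ≠ 0) (hfp : f ∣ p) :
    ∃ n, coeff n f ≠ 0 ∧ n.degree ≤ p.totalDegree := by
  have hf : f ≠ 0 := by
    rintro rfl
    exact hp (MvPolynomial.coe_injective σ R (by simpa using hfp))
  obtain ⟨n, hn, hdeg⟩ := exists_coeff_ne_zero_and_order (ne_zero_iff_order_finite.mp hf)
  obtain ⟨g, hg⟩ := hfp
  refine ⟨n, hn, ?_⟩
  have := calc (n.degree : ℕ∞) = f.order := hdeg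
    _ ≤ f.order + g.order := le_self_add
    _ ≤ (f * g).order := le_order_mul
    _ ≤ p.totalDegree := hg ▸ order_coe_le_totalDegree hp
  exact_mod_cast this

end MvPowerSeries

theorem order_sub_roots_le_general (K : Type*) [Field K] [CharZero K] (r dx dy : ℕ)
    (P : Polynomial (MvPolynomial (Fin r) K)) (hP : P ≠ 0)
    (hPx : ∀ j, (P.coeff j).totalDegree ≤ dx) (hPy : P.natDegree ≤ dy)
    (y0 y1 : MvPowerSeries (Fin r) K)
    (hroot : Polynomial.eval₂ MvPolynomial.coeToMvPowerSeries.ringHom y0 P = 0)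
    (hroot1 : Polynomial.eval₂ MvPolynomial.coeToMvPowerSeries.ringHom y1 P = 0)
    (hne : y1 ≠ y0) :
    ∃ n : Fin r →₀ ℕ,
      MvPowerSeries.coeff n (y0 - y1) ≠ 0 ∧ (∑ i, n i) ≤ 2 * dx * dy := by
  have := NoZeroDivisors.to_isDomain (MvPowerSeries (Fin r) K)
  obtain ⟨H, hHP, hH0, hH1, hHdeg, hHsep⟩ :=
    exists_dvd_separable_of_eval₂_eq_zero (FractionRing (MvPolynomial (Fin r) K))
      (MvPolynomial.coe_injective (Fin r) K) hP hroot hroot1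
  have hρ : resultant H (derivative H) ≠ 0 :=
    resultant_derivative_ne_zero (IsFractionRing.injective _ _) hHsep
  have hHx := MvPolynomial.totalDegree_coeff_le_of_dvd hHP hP hPx
  have hρdeg : (resultant H (derivative H)).totalDegree ≤ 2 * dx * dy := by
    refine (MvPolynomial.totalDegree_resultant_le hHx
      (MvPolynomial.totalDegree_coeff_derivative_le hHx) _ _).trans ?_
    have hdeg : H.natDegree + (derivative H).natDegree ≤ 2 * dy := by
      have := natDegree_derivative_le H
      have := (natDegree_le_of_dvd hHP hP).trans hPy
      omega
    calc _ ≤ 2 * dy * dx := Nat.mul_le_mul_right dx hdeg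
      _ = 2 * dx * dy := by ring
  obtain ⟨n, hn, hndeg⟩ := MvPowerSeries.exists_coeff_ne_zero_degree_le_of_dvd hρ
    (sub_dvd_resultant_derivative _ hHdeg hH0 hH1 hne.symm)
  exact ⟨n, hn, by rw [← Finsupp.degree_eq_sum]; omega⟩

/-- Let `K` be a field of characteristic zero and `y₀ ∈ K[[x₁,…,x_r]]` a simple root of a
nonzero polynomial `P ∈ K[x₁,…,x_r][y]` with `deg_x P ≤ d_x` and `deg_y P ≤ d_y`
(simple root: `P(x,y₀) = 0` and `∂P/∂y(x,y₀) ≠ 0`).  If `y₁ ∈ K[[x₁,…,x_r]]` is any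
other root of `P` with `y₁ ≠ y₀`, then the order of `y₀ - y₁` is at most `2·d_x·d_y`,
i.e. `y₀ - y₁` has a nonzero coefficient in total degree at most `2·d_x·d_y`. -/
theorem order_sub_roots_le (K : Type*) [Field K] [CharZero K] (r dx dy : ℕ)
    (P : Polynomial (MvPolynomial (Fin r) K)) (hP : P ≠ 0)
    (hPx : ∀ j, (P.coeff j).totalDegree ≤ dx) (hPy : P.natDegree ≤ dy)
    (y0 y1 : MvPowerSeries (Fin r) K)
    (hroot : Polynomial.eval₂ MvPolynomial.coeToMvPowerSeries.ringHom y0 P = 0)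
    (hsimple : Polynomial.eval₂ MvPolynomial.coeToMvPowerSeries.ringHom y0
      (Polynomial.derivative P) ≠ 0)
    (hroot1 : Polynomial.eval₂ MvPolynomial.coeToMvPowerSeries.ringHom y1 P = 0)
    (hne : y1 ≠ y0) :
    ∃ n : Fin r →₀ ℕ,
      MvPowerSeries.coeff n (y0 - y1) ≠ 0 ∧ (∑ i, n i) ≤ 2 * dx * dy :=
  order_sub_roots_le_general K r dx dy P hP hPx hPy y0 y1 hroot hroot1 hne
end

section
/- Let K be a field of characteristic zero, P ∈ K[x,y] a nonzero polynomial in one variable x and one variable y with deg_x P ≤ d_x and deg_y P ≤ d_y, and suppose y_0 ∈ K[[x]] is a root of P with ∂P/∂y(x, y_0) ≠ 0. Then ord_x(∂P/∂y(x, y_0)) ≤ 2·d_x·d_y. Moreover, if P has only simple roots (nonzero discriminant), then ord_x(∂P/∂y(x, y_0)) ≤ d_x·(2·d_y − 1). -/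
/-!
Some irreducible factor `μ` of `P` vanishes at `y₀`. By Gauss's lemma `μ` stays irreducible
over `K(x)`, and it cannot divide `∂P/∂y` there because `∂P/∂y(x, y₀) ≠ 0`; hence `μ` and
`∂P/∂y` are coprime over `K(x)` and their resultant `r ∈ K[x]` is nonzero. Evaluating the
identity `a μ + b ∂P/∂y = r` at `y₀` gives `ord_x (∂P/∂y(x, y₀)) ≤ ord_x r ≤ deg r`, and
expanding the Sylvester determinant bounds `deg r ≤ d_x (deg_y μ + deg_y ∂P/∂y) ≤ d_x (2 d_y - 1)`.
-/

open Polynomial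

theorem exists_irreducible_dvd_of_map_eq_zero {R S F : Type*} [CommMonoidWithZero R]
    [WfDvdMonoid R] [MonoidWithZero S] [NoZeroDivisors S] [Nontrivial S] [FunLike F R S]
    [MonoidWithZeroHomClass F R S] (φ : F) {a : R} (ha : a ≠ 0) (hφa : φ a = 0) :
    ∃ p, Irreducible p ∧ p ∣ a ∧ φ p = 0 := by
  induction a using WfDvdMonoid.induction_on_irreducible with
  | zero => exact absurd rfl ha
  | unit u hu => exact absurd hφa (hu.map φ).ne_zero
  | mul a p ha0 hp ih =>
    rw [map_mul, mul_eq_zero] at hφa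
    rcases hφa with hφp | hφa
    · exact ⟨p, hp, dvd_mul_right p a, hφp⟩
    · obtain ⟨q, hq, hqa, hφq⟩ := ih ha0 hφa
      exact ⟨q, hq, hqa.mul_left p, hφq⟩

theorem PowerSeries.order_coe_le_natDegree {R : Type*} [Semiring R] {p : R[X]} (hp : p ≠ 0) :
    (p : PowerSeries R).order ≤ p.natDegree :=
  order_le _ (by rwa [Polynomial.coeff_coe, ← leadingCoeff, leadingCoeff_ne_zero])

namespace Polynomial

variable {R : Type*} [CommRing R]

namespace Bivariate

theorem coeff_coeff_swap (p : R[X][X]) (i j : ℕ) :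
    ((swap p).coeff i).coeff j = (p.coeff j).coeff i := by
  induction p using Polynomial.induction_on' with
  | add f g hf hg => simp [hf, hg]
  | monomial n a =>
    induction a using Polynomial.induction_on' with
    | add f g hf hg => simp only [map_add, coeff_add, hf, hg]
    | monomial m r =>
      by_cases hn : n = j <;> by_cases hm : m = i <;>
        simp [swap_monomial_monomial, coeff_monomial, hn, hm]

theorem natDegree_swap_le_iff {p : R[X][X]} {d : ℕ} :
    (swap p).natDegree ≤ d ↔ ∀ j, (p.coeff j).natDegree ≤ d := by
  simp only [natDegree_le_iff_coeff_eq_zero, Polynomial.ext_iff, coeff_coeff_swap, coeff_zero]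
  exact ⟨fun h j i hi => h i hi j, fun h i hi j => h j i hi⟩

theorem natDegree_coeff_le_of_dvd [IsDomain R] {p q : R[X][X]} (hqp : q ∣ p) (hp : p ≠ 0)
    {d : ℕ} (hpd : ∀ j, (p.coeff j).natDegree ≤ d) (j : ℕ) : (q.coeff j).natDegree ≤ d :=
  natDegree_swap_le_iff.mp ((natDegree_le_of_dvd (_root_.map_dvd swap hqp)
    ((map_ne_zero_iff _ swap.injective).mpr hp)).trans (natDegree_swap_le_iff.mpr hpd)) j

end Bivariate

theorem natDegree_coeff_derivative_le {p : R[X][X]} {d : ℕ}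
    (hp : ∀ j, (p.coeff j).natDegree ≤ d) (j : ℕ) : ((derivative p).coeff j).natDegree ≤ d := by
  rw [coeff_derivative, ← Nat.cast_succ]
  exact natDegree_mul_le.trans (by rw [natDegree_natCast, add_zero]; exact hp (j + 1))

theorem natDegree_det_le {n : Type*} [Fintype n] [DecidableEq n] (A : Matrix n n R[X])
    {d : ℕ} (hA : ∀ i j, (A i j).natDegree ≤ d) : A.det.natDegree ≤ Fintype.card n * d := by
  rw [Matrix.det_apply]
  refine natDegree_sum_le_of_forall_le _ _ fun σ _ => ?_
  calc (Equiv.Perm.sign σ • ∏ i, A (σ i) i).natDegree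
      ≤ (∏ i, A (σ i) i).natDegree := by
        rw [Units.smul_def]; exact natDegree_smul_le _ _
    _ ≤ ∑ i, (A (σ i) i).natDegree := natDegree_prod_le _ _
    _ ≤ ∑ _i : n, d := Finset.sum_le_sum fun i _ => hA _ _
    _ = Fintype.card n * d := by simp

theorem natDegree_resultant_le {f g : R[X][X]} {d : ℕ} (hf : ∀ j, (f.coeff j).natDegree ≤ d)
    (hg : ∀ j, (g.coeff j).natDegree ≤ d) (m n : ℕ) :
    (resultant f g m n).natDegree ≤ (m + n) * d := by
  simpa [resultant] using natDegree_det_le (sylvester f g m n) fun i j => by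
    induction j using Fin.addCases <;> simp only [sylvester, Matrix.of_apply, Fin.addCases_left,
      Fin.addCases_right] <;> split_ifs <;> simp [hf, hg]

theorem resultant_ne_zero_of_isCoprime_map {S : Type*} [CommRing S] [IsDomain S] {φ : R →+* S}
    (hφ : Function.Injective φ) {f g : R[X]} (hfg : IsCoprime (f.map φ) (g.map φ)) :
    resultant f g ≠ 0 := by
  have := resultant_ne_zero _ _ hfg
  rwa [natDegree_map_eq_of_injective hφ, natDegree_map_eq_of_injective hφ, resultant_map_map,
    map_ne_zero_iff _ hφ] at this

theorem isCoprime_map_of_map_eq_zero [IsDomain R] [IsGCDMonoid R] {K S : Type*} [Field K]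
    [Algebra R K] [IsFractionRing R K] [Semiring S] (ev : R[X] →+* S) {p q : R[X]}
    (hp : Irreducible p) (hp0 : p.natDegree ≠ 0) (hevp : ev p = 0) (hevq : ev q ≠ 0) :
    IsCoprime (p.map (algebraMap R K)) (q.map (algebraMap R K)) := by
  have hprim := hp.isPrimitive hp0
  refine (hprim.irreducible_iff_irreducible_map_fraction_map.mp hp).coprime_iff_not_dvd.mpr ?_
  rw [← hprim.dvd_iff_fraction_map_dvd_fraction_map K]
  rintro ⟨r, rfl⟩
  exact hevq (by rw [map_mul, hevp, zero_mul])

theorem order_eval₂_le_natDegree_resultant {p q : R[X][X]} (y : PowerSeries R)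
    (hpy : p.eval₂ coeToPowerSeries.ringHom y = 0) (hp : p.natDegree ≠ 0)
    (hres : resultant p q ≠ 0) :
    (q.eval₂ coeToPowerSeries.ringHom y).order ≤ (resultant p q).natDegree := by
  obtain ⟨a, b, -, -, hab⟩ := exists_mul_add_mul_eq_C_resultant p q le_rfl le_rfl (.inl hp)
  have hevab := congrArg (eval₂ coeToPowerSeries.ringHom y) hab
  rw [eval₂_add, eval₂_mul, eval₂_mul, hpy, zero_mul, zero_add, eval₂_C,
    coeToPowerSeries.ringHom_apply] at hevab
  calc _ ≤ _ + (b.eval₂ coeToPowerSeries.ringHom y).order := le_self_add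
    _ ≤ _ := PowerSeries.le_order_mul _ _
    _ ≤ _ := hevab ▸ PowerSeries.order_coe_le_natDegree hres

end Polynomial

theorem order_derivative_eval_le_general (K : Type*) [Field K] (dx dy : ℕ)
    (P : Polynomial (Polynomial K)) (hP : P ≠ 0)
    (hPx : ∀ j, (P.coeff j).natDegree ≤ dx) (hPy : P.natDegree ≤ dy)
    (y0 : PowerSeries K)
    (hroot : Polynomial.eval₂ Polynomial.coeToPowerSeries.ringHom y0 P = 0)
    (hder : Polynomial.eval₂ Polynomial.coeToPowerSeries.ringHom y0
      (Polynomial.derivative P) ≠ 0) :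
    (Polynomial.eval₂ Polynomial.coeToPowerSeries.ringHom y0
        (Polynomial.derivative P)).order ≤ ((2 * dx * dy : ℕ) : ℕ∞) ∧
      (IsCoprime (P.map (algebraMap (Polynomial K) (RatFunc K)))
          ((Polynomial.derivative P).map (algebraMap (Polynomial K) (RatFunc K))) →
        (Polynomial.eval₂ Polynomial.coeToPowerSeries.ringHom y0
            (Polynomial.derivative P)).order ≤ ((dx * (2 * dy - 1) : ℕ) : ℕ∞)) := by
  let ev := eval₂RingHom (coeToPowerSeries.ringHom : K[X] →+* PowerSeries K) y0
  obtain ⟨μ, hμ, hμP, hμy0⟩ := exists_irreducible_dvd_of_map_eq_zero ev hP hroot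
  have hμdeg : μ.natDegree ≠ 0 := fun h => hμ.ne_zero <| by
    rw [eq_C_of_natDegree_eq_zero h] at hμy0 ⊢
    simpa [ev] using hμy0
  have hres : resultant μ (derivative P) ≠ 0 :=
    resultant_ne_zero_of_isCoprime_map (RatFunc.algebraMap_injective K)
      (isCoprime_map_of_map_eq_zero ev hμ hμdeg hμy0 hder)
  have hdeg : (resultant μ (derivative P)).natDegree ≤ dx * (2 * dy - 1) := by
    refine (natDegree_resultant_le (Bivariate.natDegree_coeff_le_of_dvd hμP hP hPx)
      (natDegree_coeff_derivative_le hPx) _ _).trans ?_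
    have hμdy := (natDegree_le_of_dvd hμP hP).trans hPy
    have hQdy := (natDegree_derivative_le P).trans (Nat.sub_le_sub_right hPy 1)
    exact (Nat.mul_le_mul_right dx (by omega)).trans_eq (mul_comm _ _)
  have hord := (order_eval₂_le_natDegree_resultant y0 hμy0 hμdeg hres).trans
    (Nat.cast_le.mpr hdeg)
  refine ⟨hord.trans (Nat.cast_le.mpr ?_), fun _ => hord⟩
  exact (Nat.mul_le_mul_left dx (Nat.sub_le _ _)).trans_eq (by ring)

/-- Let `K` be a field of characteristic zero, `P ∈ K[x][y]` nonzero with `deg_x P ≤ d_x`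
and `deg_y P ≤ d_y`, and `y₀ ∈ K[[x]]` a root of `P` with `∂P/∂y(x, y₀) ≠ 0`.  Then
`ord_x(∂P/∂y(x, y₀)) ≤ 2·d_x·d_y`.  Moreover if `P` has only simple roots (i.e. `P` and
`∂P/∂y` are coprime over the field of rational functions `K(x)`; equivalently the
discriminant of `P` is nonzero), then `ord_x(∂P/∂y(x, y₀)) ≤ d_x·(2·d_y - 1)`. -/
theorem order_derivative_eval_le (K : Type*) [Field K] [CharZero K] (dx dy : ℕ)
    (P : Polynomial (Polynomial K)) (hP : P ≠ 0)
    (hPx : ∀ j, (P.coeff j).natDegree ≤ dx) (hPy : P.natDegree ≤ dy)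
    (y0 : PowerSeries K)
    (hroot : Polynomial.eval₂ Polynomial.coeToPowerSeries.ringHom y0 P = 0)
    (hder : Polynomial.eval₂ Polynomial.coeToPowerSeries.ringHom y0
      (Polynomial.derivative P) ≠ 0) :
    (Polynomial.eval₂ Polynomial.coeToPowerSeries.ringHom y0
        (Polynomial.derivative P)).order ≤ ((2 * dx * dy : ℕ) : ℕ∞) ∧
      (IsCoprime (P.map (algebraMap (Polynomial K) (RatFunc K)))
          ((Polynomial.derivative P).map (algebraMap (Polynomial K) (RatFunc K))) →
        (Polynomial.eval₂ Polynomial.coeToPowerSeries.ringHom y0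
            (Polynomial.derivative P)).order ≤ ((dx * (2 * dy - 1) : ℕ) : ℕ∞)) :=
  order_derivative_eval_le_general K dx dy P hP hPx hPy y0 hroot hder
end

section
/- Any finitely generated submonoid of ℤ^r consisting of elements that are ≥ 0 for the graded lexicographic order, equipped with the graded lexicographic order, is a well-ordered set. -/
/-!
Write `S` as the image of `c ↦ ∑ g, c g • g` on `ℕ`-coefficient vectors over a finite
generating set. By Dickson's lemma any sequence `s₀, s₁, …` in `S` has `m < n` whose
coefficient vectors satisfy `c_m ≤ c_n`, so `s_n = s_m + d` with `d ∈ S`. As `d ≥ 0` and the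
order is translation invariant, `s_m ≤ s_n`; hence there is no strictly descending sequence in
`S`. Translation invariance of grlex holds because it is the order pulled back along the
additive map `a ↦ (∑ i, a i, a)` into the ordered group `ℤ ×ₗ Lex (Fin r → ℤ)`.
-/

/-- Lexicographic strict order on `ℤ^r`. -/
def finsuppLexLtZ {r : ℕ} (a b : Fin r →₀ ℤ) : Prop :=
  ∃ i : Fin r, (∀ j : Fin r, j < i → a j = b j) ∧ a i < b i

/-- Graded lexicographic strict order on `ℤ^r`: compare the sums of the coordinates
first, then lexicographically. -/
def grlexLtZ {r : ℕ} (a b : Fin r →₀ ℤ) : Prop :=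
  (∑ i, a i) < (∑ i, b i) ∨ ((∑ i, a i) = (∑ i, b i) ∧ finsuppLexLtZ a b)

namespace AddSubmonoid.FG

variable {M : Type*} [AddCommMonoid M] {S : AddSubmonoid M}

theorem partiallyWellOrderedOn_exists_add (hS : S.FG) :
    (S : Set M).PartiallyWellOrderedOn fun a b => ∃ d ∈ S, b = a + d := by
  classical
  obtain ⟨T, rfl⟩ := hS
  let φ : (T → ℕ) → M := fun c => ∑ g, c g • (g : M)
  have hφ_add : ∀ c c', φ (c + c') = φ c + φ c' := fun c c' => by
    simp only [φ, Pi.add_apply, add_nsmul, Finset.sum_add_distrib]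
  have hφ_mem : ∀ c, φ c ∈ closure (T : Set M) := fun c =>
    AddSubmonoid.sum_mem _ fun g _ => AddSubmonoid.nsmul_mem _ (subset_closure g.2) _
  have hrange : (closure (T : Set M) : Set M) = φ '' Set.univ := by
    ext x
    simp [mem_closure_finset', φ, eq_comm]
  have hdickson : (Set.univ : Set (T → ℕ)).PartiallyWellOrderedOn (· ≤ ·) :=
    Set.partiallyWellOrderedOn_of_wellQuasiOrdered wellQuasiOrdered_le _
  rw [hrange]
  exact hdickson.image_of_monotone_on fun c _ c' _ hcc' =>
    ⟨φ (c' - c), hφ_mem _, by rw [← hφ_add, add_tsub_cancel_of_le hcc']⟩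

theorem wellFoundedOn_of_forall_nonneg {r : M → M → Prop} [IsStrictOrder M r]
    (hr : ∀ a b c, r a b → r (a + c) (b + c)) (hS : S.FG)
    (hpos : ∀ s ∈ S, s = 0 ∨ r 0 s) :
    (S : Set M).WellFoundedOn r := by
  rw [Set.wellFoundedOn_iff_no_descending_seq]
  intro f hf
  obtain ⟨m, n, hmn, d, hd, hfn⟩ := hS.partiallyWellOrderedOn_exists_add.exists_lt hf
  have hdesc : r (f n) (f m) := f.map_rel_iff.2 hmn
  rcases hpos d hd with rfl | hd_pos
  · rw [add_zero] at hfn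
    exact irrefl _ (hfn ▸ hdesc)
  · have hasc : r (f m) (f n) := by simpa [hfn, add_comm] using hr 0 d (f m) hd_pos
    exact irrefl _ (_root_.trans hdesc hasc)

end AddSubmonoid.FG

noncomputable def grlexKey {r : ℕ} (a : Fin r →₀ ℤ) : ℤ ×ₗ Lex (Fin r → ℤ) :=
  toLex (∑ i, a i, toLex ⇑a)

theorem grlexLtZ_iff_grlexKey_lt {r : ℕ} {a b : Fin r →₀ ℤ} :
    grlexLtZ a b ↔ grlexKey a < grlexKey b := by
  rw [grlexKey, grlexKey, Prod.Lex.toLex_lt_toLex]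
  rfl

theorem grlexKey_add {r : ℕ} (a b : Fin r →₀ ℤ) :
    grlexKey (a + b) = grlexKey a + grlexKey b := by
  simp only [grlexKey, Finsupp.coe_add, Pi.add_apply, Finset.sum_add_distrib, toLex_add]
  rfl

instance grlexLtZ.isStrictOrder {r : ℕ} : IsStrictOrder (Fin r →₀ ℤ) grlexLtZ where
  irrefl a := by simp [grlexLtZ_iff_grlexKey_lt]
  trans a b c := by simpa only [grlexLtZ_iff_grlexKey_lt] using lt_trans

theorem grlexLtZ.add_right {r : ℕ} {a b : Fin r →₀ ℤ} (h : grlexLtZ a b) (c : Fin r →₀ ℤ) :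
    grlexLtZ (a + c) (b + c) := by
  rw [grlexLtZ_iff_grlexKey_lt, grlexKey_add, grlexKey_add]
  exact add_lt_add_left (grlexLtZ_iff_grlexKey_lt.1 h) _

/-- Any finitely generated submonoid of `ℤ^r` all of whose elements are `≥ 0` for the
graded lexicographic order is well-ordered by the graded lexicographic order (every
nonempty subset has a minimal, hence least, element). -/
theorem fg_submonoid_grlex_wellOrdered (r : ℕ) (S : AddSubmonoid (Fin r →₀ ℤ))
    (hfg : S.FG) (hpos : ∀ s ∈ S, s = 0 ∨ grlexLtZ 0 s) :
    (S : Set (Fin r →₀ ℤ)).WellFoundedOn grlexLtZ :=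
  hfg.wellFoundedOn_of_forall_nonneg (fun _ _ c h => h.add_right c) hpos
end

section
/- Let K be a field of characteristic zero. Consider a strongly reduced Henselian equation y = Q(x, y), where Q(x,y) ∈ K[x_1, x_1^{-1}, ..., x_r, x_r^{-1}][y] is a Laurent-polynomial-in-x, polynomial-in-y expression such that every monomial x^i y^j appearing in Q has exponent i >_grlex 0, and Q(x, 0) is not identically zero. Then this equation admits a unique solution y_0 = Σ_{n >_grlex 0} c_n x^n in the field of generalized series K((x_1^ℤ, ..., x_r^ℤ))^grlex with well-ordered support for the graded lexicographic order. -/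
/-- `ℤ^r`, to be equipped below with the graded lexicographic order. -/
def GrLexZ (r : ℕ) : Type := Fin r →₀ ℤ

namespace GrLexZ

variable {r : ℕ}

noncomputable instance : AddCommGroup (GrLexZ r) := inferInstanceAs (AddCommGroup (Fin r →₀ ℤ))

/-- The underlying finitely supported function of an element of `GrLexZ r`. -/
def toFinsupp (v : GrLexZ r) : Fin r →₀ ℤ := v

theorem toFinsupp_add (a b : GrLexZ r) : toFinsupp (a + b) = toFinsupp a + toFinsupp b := rfl

theorem toFinsupp_injective : Function.Injective (toFinsupp (r := r)) := fun _ _ h => h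

/-- Embedding of grlex `ℤ^r` into lex `ℤ^{r+1}`, prepending the total degree. -/
noncomputable def embed (r : ℕ) : GrLexZ r → Lex (Fin (r + 1) →₀ ℤ) := fun v =>
  toLex (Finsupp.equivFunOnFinite.symm (Fin.cons (∑ i, toFinsupp v i) ⇑(toFinsupp v)))

theorem embed_add (a b : GrLexZ r) : embed r (a + b) = embed r a + embed r b := by
  show toLex _ = toLex _ + toLex _
  rw [← toLex_add]
  congr 1
  ext i
  simp only [Finsupp.add_apply]
  refine Fin.cases ?_ ?_ i <;>
    simp [Fin.cons_zero, Fin.cons_succ, toFinsupp_add, Finsupp.add_apply,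
      Finset.sum_add_distrib]

theorem embed_injective : Function.Injective (embed (r := r)) := by
  intro a b h
  have h1 := toLex.injective h
  have h2 := Finsupp.equivFunOnFinite.symm.injective h1
  have h3 : ⇑(toFinsupp a) = ⇑(toFinsupp b) := by
    funext i
    have := congrFun h2 i.succ
    simpa [Fin.cons_succ] using this
  exact toFinsupp_injective (DFunLike.coe_injective h3)

noncomputable instance : LinearOrder (GrLexZ r) :=
  LinearOrder.lift' (embed r) embed_injective

theorem le_def (a b : GrLexZ r) : a ≤ b ↔ embed r a ≤ embed r b := Iff.rfl

noncomputable instance : IsOrderedAddMonoid (GrLexZ r) :=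
  { add_le_add_left := by
      intro a b hab c
      rw [le_def] at hab ⊢
      rw [embed_add, embed_add]
      first | exact add_le_add_right hab _ | exact add_le_add_left hab _ }

end GrLexZ

section HenselAux

open HahnSeries

variable {Γ : Type*} [AddCommGroup Γ] [LinearOrder Γ] [IsOrderedAddMonoid Γ] {K : Type*} [Field K]

namespace HenselAux

/-- The right-hand side of the Henselian equation, as an operator on Hahn series. -/
noncomputable def Phi (s : Finset (Γ × ℕ)) (a : Γ × ℕ → K) (y : HahnSeries Γ K) :
    HahnSeries Γ K :=
  ∑ p ∈ s, HahnSeries.single p.1 (a p) * y ^ p.2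

lemma coeff_sum {ι : Type*} (t : Finset ι) (f : ι → HahnSeries Γ K) (n : Γ) :
    (∑ i ∈ t, f i).coeff n = ∑ i ∈ t, (f i).coeff n :=
  map_sum (HahnSeries.coeff.addMonoidHom n) f t

lemma support_pow_subset {S : AddSubmonoid Γ} {y : HahnSeries Γ K}
    (hy : y.support ⊆ (S : Set Γ)) (j : ℕ) : (y ^ j).support ⊆ (S : Set Γ) := by
  induction j with
  | zero =>
    intro g hg
    rw [pow_zero, ← HahnSeries.single_zero_one] at hg
    have := HahnSeries.support_single_subset hg
    simp only [Set.mem_singleton_iff] at this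
    rw [this]; exact S.zero_mem
  | succ j ih =>
    intro g hg
    rw [pow_succ] at hg
    obtain ⟨g1, hg1, g2, hg2, rfl⟩ := HahnSeries.support_mul_subset hg
    exact S.add_mem (ih hg1) (hy hg2)

lemma support_sum_subset {ι : Type*} {t : Finset ι} {f : ι → HahnSeries Γ K} {U : Set Γ}
    (h : ∀ i ∈ t, (f i).support ⊆ U) : (∑ i ∈ t, f i).support ⊆ U := by
  intro g hg
  rw [HahnSeries.mem_support, coeff_sum] at hg
  obtain ⟨i, hi, hne⟩ := Finset.exists_ne_zero_of_sum_ne_zero hg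
  exact h i hi hne

lemma support_Phi_subset {s : Finset (Γ × ℕ)} {a : Γ × ℕ → K} {S : AddSubmonoid Γ}
    (hs : ∀ p ∈ s, p.1 ∈ S) {y : HahnSeries Γ K} (hy : y.support ⊆ (S : Set Γ)) :
    (Phi s a y).support ⊆ (S : Set Γ) := by
  refine support_sum_subset fun p hp => ?_
  intro g hg
  obtain ⟨g1, hg1, g2, hg2, rfl⟩ := HahnSeries.support_mul_subset hg
  have h1 : g1 = p.1 := HahnSeries.support_single_subset hg1
  exact S.add_mem (h1 ▸ hs p hp) (support_pow_subset hy p.2 hg2)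

/-- The nonnegative elements form an additive submonoid. -/
def nonnegSubmonoid : AddSubmonoid Γ where
  carrier := {g | 0 ≤ g}
  zero_mem' := le_refl 0
  add_mem' := fun ha hb => add_nonneg ha hb

lemma support_Phi_pos {s : Finset (Γ × ℕ)} {a : Γ × ℕ → K} (hpos : ∀ p ∈ s, 0 < p.1)
    {y : HahnSeries Γ K} (hy : ∀ m ∈ y.support, (0 : Γ) ≤ m) :
    ∀ g ∈ (Phi s a y).support, 0 < g := by
  intro g hg
  rw [Phi, HahnSeries.mem_support, coeff_sum] at hg
  obtain ⟨p, hp, hne⟩ := Finset.exists_ne_zero_of_sum_ne_zero hg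
  obtain ⟨g1, hg1, g2, hg2, rfl⟩ := HahnSeries.support_mul_subset hne
  have h1 : g1 = p.1 := HahnSeries.support_single_subset hg1
  have h2 : (0 : Γ) ≤ g2 :=
    support_pow_subset (S := nonnegSubmonoid) (fun m hm => hy m hm) p.2 hg2
  calc (0 : Γ) < p.1 := hpos p hp
    _ = g1 + 0 := by rw [h1, add_zero]
    _ ≤ g1 + g2 := add_le_add_right h2 g1

/-- The key contraction property: if `y` and `y'` (with nonnegative supports) agree in
all coefficients below `n`, then `Phi y` and `Phi y'` agree at all coefficients `≤ n`. -/
lemma Phi_contract {s : Finset (Γ × ℕ)} {a : Γ × ℕ → K} (hpos : ∀ p ∈ s, 0 < p.1)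
    {y y' : HahnSeries Γ K} (hy : ∀ m ∈ y.support, (0 : Γ) ≤ m)
    (hy' : ∀ m ∈ y'.support, (0 : Γ) ≤ m) {n : Γ}
    (hagree : ∀ m < n, y.coeff m = y'.coeff m) :
    ∀ m ≤ n, (Phi s a y).coeff m = (Phi s a y').coeff m := by
  intro m hm
  have key : ∀ p ∈ s,
      ((HahnSeries.single p.1 (a p)) * (y ^ p.2 - y' ^ p.2)).coeff m = 0 := by
    intro p hp
    by_contra h
    have hm' : m ∈ ((HahnSeries.single p.1 (a p)) * (y ^ p.2 - y' ^ p.2)).support := h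
    obtain ⟨g1, hg1, g2, hg2, hsum⟩ := HahnSeries.support_mul_subset hm'
    have h1 : g1 = p.1 := HahnSeries.support_single_subset hg1
    rw [← geom_sum₂_mul y y' p.2] at hg2
    obtain ⟨u, hu, v, hv, hg2'⟩ := HahnSeries.support_mul_subset hg2
    have hgeom : (∑ i ∈ Finset.range p.2, y ^ i * y' ^ (p.2 - 1 - i)).support ⊆
        ((nonnegSubmonoid : AddSubmonoid Γ) : Set Γ) := by
      refine support_sum_subset fun i _ => ?_
      intro g hg
      obtain ⟨a1, ha1, a2, ha2, rfl⟩ := HahnSeries.support_mul_subset hg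
      exact AddSubmonoid.add_mem _
        (support_pow_subset (S := nonnegSubmonoid) hy i ha1)
        (support_pow_subset (S := nonnegSubmonoid) hy' _ ha2)
    have hu0 : (0 : Γ) ≤ u := hgeom hu
    have hvn : n ≤ v := by
      by_contra hlt
      push_neg at hlt
      have : (y - y').coeff v = 0 := by
        rw [HahnSeries.coeff_sub, hagree v hlt, sub_self]
      exact hv this
    have hsum2 : g1 + g2 = m := hsum
    have hg2'' : u + v = g2 := hg2'
    have : n < m := by
      rw [← hsum2, ← hg2'', h1]
      calc n = 0 + (0 + n) := by rw [zero_add, zero_add]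
        _ ≤ 0 + (u + v) := by
            exact add_le_add_right (add_le_add hu0 hvn) 0
        _ < p.1 + (u + v) := add_lt_add_left (hpos p hp) _
    exact absurd hm (not_le.mpr this)
  rw [Phi, Phi, coeff_sum, coeff_sum, ← sub_eq_zero, ← Finset.sum_sub_distrib]
  refine Finset.sum_eq_zero fun p hp => ?_
  rw [← HahnSeries.coeff_sub, ← mul_sub]
  exact key p hp

end HenselAux

end HenselAux

/-- **Hensel's lemma for strongly reduced Henselian equations.**
Let `K` be a field of characteristic zero.  Consider a strongly reduced Henselian
equation `y = Q(x, y)`, where `Q(x,y) = Σ_{(i,j) ∈ s} a_{i,j} x^i y^j` is a Laurent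
polynomial in `x₁,…,x_r`, polynomial in `y`, such that every exponent `i` appearing in
`Q` is `>_grlex 0` and `Q(x, 0)` is not identically zero.  Then the equation admits a
unique solution `y₀ = Σ_{n >_grlex 0} c_n x^n` in the field of generalized (Hahn) series
with exponents in `ℤ^r` ordered by the graded lexicographic order. -/
theorem strongly_reduced_henselian_unique_solution (K : Type*) [Field K] [CharZero K]
    (r : ℕ) (s : Finset (GrLexZ r × ℕ)) (a : GrLexZ r × ℕ → K)
    (hpos : ∀ p ∈ s, (0 : GrLexZ r) < p.1)
    (hQ0 : ∃ i : GrLexZ r, (i, 0) ∈ s ∧ a (i, 0) ≠ 0) :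
    ∃! y0 : HahnSeries (GrLexZ r) K,
      (∀ n ∈ y0.support, (0 : GrLexZ r) < n) ∧
        y0 = ∑ p ∈ s, (HahnSeries.single p.1 (a p)) * y0 ^ p.2 := by
  classical
  set S : AddSubmonoid (GrLexZ r) := AddSubmonoid.closure (Prod.fst '' (s : Set (GrLexZ r × ℕ))) with hS
  have hSnn : ∀ g ∈ S, (0 : GrLexZ r) ≤ g := by
    intro g hg
    refine AddSubmonoid.closure_induction ?_ le_rfl
      (fun x y _ _ hx hy => add_nonneg hx hy) hg
    rintro x ⟨p, hp, rfl⟩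
    exact (hpos p hp).le
  have hmem : ∀ p ∈ s, p.1 ∈ S := fun p hp => AddSubmonoid.subset_closure ⟨p, hp, rfl⟩
  have hSpwo : ((S : Set (GrLexZ r))).IsPWO := by
    refine Set.IsPWO.addSubmonoid_closure ?_ ?_
    · rintro x ⟨p, hp, rfl⟩
      exact (hpos p hp).le
    · exact (s.finite_toSet.image _).isPWO
  have hwf : WellFounded fun (x y : (S : Set (GrLexZ r))) => (x : GrLexZ r) < y :=
    hSpwo.isWF
  -- the truncated series built out of a partial coefficient function
  let mk : ∀ (n : GrLexZ r),
      (∀ m : ↥(S : Set (GrLexZ r)), (m : GrLexZ r) < n → K) → HahnSeries (GrLexZ r) K :=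
    fun n prev =>
      { coeff := fun m =>
          if h : m ∈ (S : Set (GrLexZ r)) ∧ m < n then prev ⟨m, h.1⟩ h.2 else 0
        isPWO_support' := hSpwo.mono (fun m hm => by
          by_contra hns
          simp only [Function.mem_support] at hm
          rw [dif_neg (fun h => hns h.1)] at hm
          exact hm rfl) }
  let F : ∀ n : ↥(S : Set (GrLexZ r)),
      (∀ m : ↥(S : Set (GrLexZ r)), (m : GrLexZ r) < (n : GrLexZ r) → K) → K :=
    fun n prev => (HenselAux.Phi s a (mk n prev)).coeff n
  let c : ↥(S : Set (GrLexZ r)) → K := hwf.fix F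
  have hc : ∀ n, c n = F n fun m _ => c m := fun n => hwf.fix_eq F n
  let y0 : HahnSeries (GrLexZ r) K :=
    { coeff := fun m => if h : m ∈ (S : Set (GrLexZ r)) then c ⟨m, h⟩ else 0
      isPWO_support' := hSpwo.mono (fun m hm => by
        by_contra hns
        simp only [Function.mem_support] at hm
        rw [dif_neg hns] at hm
        exact hm rfl) }
  have hy0S : y0.support ⊆ (S : Set (GrLexZ r)) := by
    intro m hm
    by_contra hns
    exact hm (dif_neg hns)
  have hy0nn : ∀ m ∈ y0.support, (0 : GrLexZ r) ≤ m := fun m hm => hSnn m (hy0S hm)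
  have hmkcoeff : ∀ n m, m < n → (mk n fun m _ => c m).coeff m = y0.coeff m := by
    intro n m hmn
    show (if h : m ∈ (S : Set (GrLexZ r)) ∧ m < n then _ else 0)
      = (if h : m ∈ (S : Set (GrLexZ r)) then _ else 0)
    by_cases h : m ∈ (S : Set (GrLexZ r))
    · rw [dif_pos ⟨h, hmn⟩, dif_pos h]
    · rw [dif_neg (fun hh => h hh.1), dif_neg h]
  have hmkS : ∀ n, (mk n fun m _ => c m).support ⊆ (S : Set (GrLexZ r)) := by
    intro n m hm
    by_contra hns
    exact hm (dif_neg (fun hh => hns hh.1))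
  have hmknn : ∀ n, ∀ m ∈ (mk n fun m _ => c m).support, (0 : GrLexZ r) ≤ m :=
    fun n m hm => hSnn m (hmkS n hm)
  have hfix : HenselAux.Phi s a y0 = y0 := by
    ext n
    by_cases h : n ∈ (S : Set (GrLexZ r))
    · have h1 : y0.coeff n = c ⟨n, h⟩ := dif_pos h
      have h2 : c ⟨n, h⟩ = (HenselAux.Phi s a (mk n fun m _ => c m)).coeff n := hc ⟨n, h⟩
      rw [h1, h2]
      exact (HenselAux.Phi_contract hpos (hmknn n) hy0nn
        (fun m hm => hmkcoeff n m hm) n le_rfl).symm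
    · have h0 : (HenselAux.Phi s a y0).coeff n = 0 := by
        by_contra hne
        exact h (HenselAux.support_Phi_subset hmem hy0S hne)
      rw [h0]
      exact Eq.symm (show y0.coeff n = 0 from dif_neg h)
  have hy0pos : ∀ n ∈ y0.support, (0 : GrLexZ r) < n := fun n hn =>
    HenselAux.support_Phi_pos hpos hy0nn n (by rw [hfix]; exact hn)
  refine ⟨y0, ⟨hy0pos, hfix.symm⟩, ?_⟩
  rintro z ⟨hz1, hz2⟩
  by_contra hne
  have hd : z - y0 ≠ 0 := sub_ne_zero.mpr hne
  have hdsupp := (z - y0).isWF_support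
  have hne' : (z - y0).support.Nonempty := HahnSeries.support_nonempty_iff.2 hd
  set n := hdsupp.min hne' with hn
  have hmin := hdsupp.min_mem hne'
  have hagree : ∀ m < n, z.coeff m = y0.coeff m := by
    intro m hmn
    by_contra hne2
    have hms : m ∈ (z - y0).support := by
      rw [HahnSeries.mem_support, HahnSeries.coeff_sub]
      exact sub_ne_zero.mpr hne2
    exact hdsupp.not_lt_min hne' hms hmn
  have hkey := HenselAux.Phi_contract (a := a) hpos (fun m hm => (hz1 m hm).le) hy0nn hagree n le_rfl
  have hz2' : HenselAux.Phi s a z = z := hz2.symm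
  rw [hz2', hfix] at hkey
  have hzero : (z - y0).coeff n = 0 := by rw [HahnSeries.coeff_sub, hkey, sub_self]
  exact hmin hzero
end

section
/- Let K be a field of characteristic zero and Q(x,y) ∈ K[x_1,...,x_r, y] a polynomial (no negative exponents) with Q(x,0) ≢ 0 and all monomials x^i y^j of Q satisfying i >_grlex 0. Let y_0 = Σ_{n >_grlex 0} c_n x^n ∈ K[[x_1,...,x_r]] be the unique solution of y = Q(x,y). Then for every n ∈ ℕ^r, the coefficient c_n is given by the multivariate Flajolet–Soria formula: c_n = Σ_{m=1}^{μ_n} (1/m) Σ_{|M| = m, ‖M‖ = m−1, G(M) = n} (m!/M!) · A^M, where the inner sum is over tuples M = (m_{i,j}) of natural numbers indexed by the monomials of Q, A^M := ∏_{i,j} a_{i,j}^{m_{i,j}}, |M| := Σ m_{i,j}, ‖M‖ := Σ m_{i,j}·j, G(M) := Σ m_{i,j}·i, and μ_n ≤ 2|n| − n_r. -/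
/-!
Expanding one factor of `y ^ (k + 1) = y * y ^ k` with `y = Q(x, y)` expresses the coefficient
of `x ^ n` in `y ^ (k + 1)` through coefficients of the powers `y ^ (j + k)` at multidegrees
`n - i` of smaller size, since every `i ≠ 0`. The Lagrange weights `k (|M| - 1)! / M!` obey the
same recursion: removing the root of the first tree from a forest of `k + 1` trees, when that
root has type `(i, j)`, leaves a forest of `j + k` trees. Hence, by strong induction on `|n|`,
the coefficient of `x ^ n` in `y ^ k` is `∑ k (|M| - 1)! / M! · A ^ M` over the node profiles `M`
of forests of `k` trees with `G(M) = n`. For `k = 1` this is the formula, grouped by `m = |M|`;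
the range of `m` is bounded because `|M| ≤ |G(M)| = |n|`.
-/

open Finset Finsupp MvPowerSeries
open scoped Nat

namespace FlajoletSoria

variable {α σ K : Type*}

theorem degree_le_degree_weight {w : α → σ →₀ ℕ} {M : α →₀ ℕ} (hw : ∀ p ∈ M.support, w p ≠ 0) :
    M.degree ≤ (weight w M).degree := by
  rw [weight_apply, Finsupp.sum, map_sum, degree_apply]
  refine sum_le_sum fun p hp => ?_
  rw [map_nsmul, smul_eq_mul]
  exact Nat.le_mul_of_pos_right _ (Nat.pos_of_ne_zero ((degree_eq_zero_iff _).not.mpr (hw p hp)))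

theorem degree_tsub_lt {i n : σ →₀ ℕ} (hi : i ≠ 0) (hin : i ≤ n) : (n - i).degree < n.degree := by
  have hsplit := congrArg degree (tsub_add_cancel_of_le hin)
  have := (degree_eq_zero_iff i).not.mpr hi
  rw [map_add] at hsplit
  omega

theorem single_one_le_of_mem_support {M : α →₀ ℕ} {p : α} (hp : p ∈ M.support) :
    single p 1 ≤ M :=
  single_le_iff.mpr (Nat.one_le_iff_ne_zero.mpr (mem_support_iff.mp hp))

theorem prod_factorial_sub_single_mul [CommSemiring K] {M : α →₀ ℕ} {p : α} (hp : p ∈ M.support) :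
    ((M - single p 1).prod fun _ v => (v ! : K)) * M p = M.prod fun _ v => (v ! : K) := by
  classical
  have hfac : ∀ _ : α, ((0 ! : ℕ) : K) = 1 := fun _ => by simp
  have herase : (M - single p 1).erase p = M.erase p := by
    ext q
    rcases eq_or_ne q p with rfl | hqp
    · simp
    · simp [erase_ne hqp, single_eq_of_ne hqp]
  rw [← mul_prod_erase' M p _ hfac, ← mul_prod_erase' (M - single p 1) p _ hfac, herase,
    mul_right_comm, tsub_apply, single_eq_same, ← Nat.cast_mul, mul_comm ((M p - 1)!),
    Nat.mul_factorial_pred (mem_support_iff.mp hp), mul_comm]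

theorem prod_factorial_ne_zero [CommSemiring K] [NoZeroDivisors K] [CharZero K] (M : α →₀ ℕ) :
    (M.prod fun _ v => (v ! : K)) ≠ 0 :=
  Finset.prod_ne_zero_iff.mpr fun _ _ => Nat.cast_ne_zero.mpr (Nat.factorial_ne_zero _)

theorem prod_pow_eq_mul_prod_pow_sub_single [CommMonoid K] (a : α → K) {M : α →₀ ℕ} {p : α}
    (hp : p ∈ M.support) :
    (M.prod fun q v => a q ^ v) = a p * (M - single p 1).prod fun q v => a q ^ v := by
  conv_lhs => rw [← tsub_add_cancel_of_le (single_one_le_of_mem_support hp)]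
  rw [prod_add_index' (fun _ => pow_zero _) (fun _ _ _ => pow_add _ _ _),
    prod_single_index (h := fun q v => a q ^ v) (pow_zero _), pow_one, mul_comm]

theorem degree_sub_single_add_one {M : α →₀ ℕ} {p : α} (hp : p ∈ M.support) :
    (M - single p 1).degree + 1 = M.degree := by
  simpa only [map_add, degree_single] using
    congrArg degree (tsub_add_cancel_of_le (single_one_le_of_mem_support hp))

/-- `k (|M| - 1)! / M!` counts the forests of `k` plane trees whose node types, with multiplicities,
are given by `M` (Raney's lemma); the empty forest counts once. -/
noncomputable def lagrangeWeight (K : Type*) [Field K] (k : ℕ) (M : α →₀ ℕ) : K :=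
  open Classical in
  if M = 0 then 1 else k * (M.degree - 1)! / M.prod fun _ v => (v ! : K)

theorem lagrangeWeight_zero (K : Type*) [Field K] (k : ℕ) :
    lagrangeWeight K k (0 : α →₀ ℕ) = 1 := if_pos rfl

theorem lagrangeWeight_of_ne_zero [Field K] (k : ℕ) {M : α →₀ ℕ} (hM : M ≠ 0) :
    lagrangeWeight K k M = k * (M.degree - 1)! / M.prod fun _ v => (v ! : K) := if_neg hM

theorem lagrangeWeight_sub_single [Field K] [CharZero K] (c : ℕ) {M : α →₀ ℕ} {p : α}
    (hp : p ∈ M.support) (hM : 2 ≤ M.degree) :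
    lagrangeWeight K c (M - single p 1) =
      (c * M p : ℕ) * (M.degree - 2)! / M.prod fun _ v => (v ! : K) := by
  have hdeg := degree_sub_single_add_one hp
  have hne : M - single p 1 ≠ 0 := by
    rintro h
    rw [h, map_zero] at hdeg
    omega
  have := prod_factorial_ne_zero (K := K) (M - single p 1)
  have : (M p : K) ≠ 0 := Nat.cast_ne_zero.mpr (mem_support_iff.mp hp)
  have hdeg' : (M - single p 1).degree - 1 = M.degree - 2 := by omega
  rw [lagrangeWeight_of_ne_zero _ hne, ← prod_factorial_sub_single_mul hp, hdeg']
  push_cast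
  field_simp

theorem sum_lagrangeWeight_sub_single [Field K] [CharZero K] {j : α → ℕ} {k : ℕ} {M : α →₀ ℕ}
    (hM : M.degree = weight j M + (k + 1)) :
    ∑ p ∈ M.support, lagrangeWeight K (j p + k) (M - single p 1) = lagrangeWeight K (k + 1) M := by
  obtain hM1 | hM2 : M.degree = 1 ∨ 2 ≤ M.degree := by omega
  · obtain ⟨q, rfl⟩ := (sum_eq_one_iff M).mp hM1
    have hk : k = 0 := by
      rw [degree_single, weight_single] at hM
      omega
    rw [support_single q one_ne_zero, sum_singleton, tsub_self, lagrangeWeight_zero,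
      lagrangeWeight_of_ne_zero _ (single_ne_zero.mpr one_ne_zero), degree_single, hk]
    simp
  · have hM0 : M ≠ 0 := by
      rintro rfl
      simp at hM2
    have hterm := fun p (hp : p ∈ M.support) => lagrangeWeight_sub_single (K := K) (j p + k) hp hM2
    have hcount : ∑ p ∈ M.support, (j p + k) * M p = (k + 1) * (M.degree - 1) := by
      have : ∑ p ∈ M.support, (j p + k) * M p = weight j M + k * M.degree := by
        simp only [add_mul, sum_add_distrib, weight_apply, Finsupp.sum, degree_apply,
          Finset.mul_sum, smul_eq_mul, mul_comm]
      rw [this, hM, ← add_assoc, Nat.add_sub_cancel]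
      ring
    rw [sum_congr rfl hterm, ← Finset.sum_div, ← Finset.sum_mul, ← Nat.cast_sum, hcount,
      lagrangeWeight_of_ne_zero _ hM0, ← Nat.mul_factorial_pred (n := M.degree - 1) (by omega),
      show M.degree - 1 - 1 = M.degree - 2 by omega]
    push_cast
    ring

/-- `M (i, j)` counts the nodes of type `(i, j)`, a node of type `(i, j)` having `j` children and
weight `x ^ i`; `|M| = ‖M‖ + k` says that these nodes form a forest of `k` trees. -/
noncomputable def forestProfiles (s : Finset ((σ →₀ ℕ) × ℕ)) (k : ℕ) (n : σ →₀ ℕ) :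
    Finset ((σ →₀ ℕ) × ℕ →₀ ℕ) :=
  open Classical in
  {M ∈ (range (n.degree + 1)).biUnion s.finsuppAntidiag |
    M.degree = weight Prod.snd M + k ∧ weight Prod.fst M = n}

variable {s : Finset ((σ →₀ ℕ) × ℕ)}

theorem mem_forestProfiles (hpos : ∀ p ∈ s, p.1 ≠ 0) {k : ℕ} {n : σ →₀ ℕ}
    {M : (σ →₀ ℕ) × ℕ →₀ ℕ} :
    M ∈ forestProfiles s k n ↔
      M.support ⊆ s ∧ M.degree = weight Prod.snd M + k ∧ weight Prod.fst M = n := by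
  classical
  simp only [forestProfiles, mem_filter, mem_biUnion, mem_range, mem_finsuppAntidiag]
  constructor
  · rintro ⟨⟨_, _, _, hsupp⟩, hdeg⟩
    exact ⟨hsupp, hdeg⟩
  · rintro ⟨hsupp, hdeg, hfst⟩
    have hsum : s.sum M = M.degree :=
      (sum_of_support_subset M hsupp (fun _ v => v) fun _ _ => rfl).symm
    refine ⟨⟨M.degree, ?_, hsum, hsupp⟩, hdeg, hfst⟩
    rw [Nat.lt_succ_iff, ← hfst]
    exact degree_le_degree_weight fun p hp => hpos p (hsupp hp)

theorem add_single_mem_forestProfiles_iff (hpos : ∀ p ∈ s, p.1 ≠ 0) {k : ℕ} {n : σ →₀ ℕ}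
    {p : (σ →₀ ℕ) × ℕ} (hp : p ∈ s) (hpn : p.1 ≤ n) {M : (σ →₀ ℕ) × ℕ →₀ ℕ} :
    M + single p 1 ∈ forestProfiles s (k + 1) n ↔ M ∈ forestProfiles s (p.2 + k) (n - p.1) := by
  classical
  simp only [mem_forestProfiles hpos, support_add_eq_union, support_single p one_ne_zero,
    union_subset_iff, singleton_subset_iff, hp, and_true, map_add, degree_single, weight_single,
    one_smul, eq_tsub_iff_add_eq_of_le hpn]
  have hdeg : M.degree + 1 = weight Prod.snd M + p.2 + (k + 1) ↔
      M.degree = weight Prod.snd M + (p.2 + k) := by omega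
  rw [hdeg]

theorem sum_sum_forestProfiles {R : Type*} [AddCommMonoid R] (hpos : ∀ p ∈ s, p.1 ≠ 0)
    (f : (σ →₀ ℕ) × ℕ → ((σ →₀ ℕ) × ℕ →₀ ℕ) → R) (k : ℕ) (n : σ →₀ ℕ) :
    ∑ p ∈ s with p.1 ≤ n, ∑ M ∈ forestProfiles s (p.2 + k) (n - p.1), f p M =
      ∑ M ∈ forestProfiles s (k + 1) n, ∑ p ∈ M.support, f p (M - single p 1) := by
  rw [sum_sigma', sum_sigma']
  refine sum_nbij' (fun x => ⟨x.2 + single x.1 1, x.1⟩) (fun y => ⟨y.2, y.1 - single y.2 1⟩)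
    ?_ ?_ (fun x _ => by simp) (fun y hy => ?_) (fun x _ => by simp)
  · rintro ⟨p, M⟩ h
    simp only [mem_sigma, mem_filter] at h
    obtain ⟨⟨hp, hpn⟩, hM⟩ := h
    exact mem_sigma.mpr ⟨(add_single_mem_forestProfiles_iff hpos hp hpn).mpr hM, by simp⟩
  · rintro ⟨M, p⟩ h
    obtain ⟨hM, hpM⟩ := mem_sigma.mp h
    obtain ⟨hsupp, -, hfst⟩ := (mem_forestProfiles hpos).mp hM
    have hpn : p.1 ≤ n := hfst ▸ le_weight_of_ne_zero' Prod.fst (mem_support_iff.mp hpM)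
    refine mem_sigma.mpr ⟨mem_filter.mpr ⟨hsupp hpM, hpn⟩, ?_⟩
    rw [← add_single_mem_forestProfiles_iff hpos (hsupp hpM) hpn,
      tsub_add_cancel_of_le (single_one_le_of_mem_support hpM)]
    exact hM
  · have := tsub_add_cancel_of_le (single_one_le_of_mem_support (mem_sigma.mp hy).2)
    simp [this]

theorem coeff_pow_succ_of_eq_sum {R : Type*} [CommSemiring R] {a : (σ →₀ ℕ) × ℕ → R}
    {y : MvPowerSeries σ R} (hy : y = ∑ p ∈ s, monomial p.1 (a p) * y ^ p.2) (k : ℕ)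
    (n : σ →₀ ℕ) :
    coeff n (y ^ (k + 1)) = ∑ p ∈ s with p.1 ≤ n, a p * coeff (n - p.1) (y ^ (p.2 + k)) := by
  calc coeff n (y ^ (k + 1))
      = coeff n ((∑ p ∈ s, monomial p.1 (a p) * y ^ p.2) * y ^ k) := by rw [← hy, pow_succ']
    _ = _ := by
      simp only [Finset.sum_mul, map_sum, mul_assoc, ← pow_add, coeff_monomial_mul, sum_ite,
        sum_const_zero, add_zero]

theorem coeff_pow_eq_sum_forestProfiles [Field K] [CharZero K] (hpos : ∀ p ∈ s, p.1 ≠ 0)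
    {a : (σ →₀ ℕ) × ℕ → K} {y : MvPowerSeries σ K}
    (hy : y = ∑ p ∈ s, monomial p.1 (a p) * y ^ p.2) (k : ℕ) (n : σ →₀ ℕ) :
    coeff n (y ^ k) =
      ∑ M ∈ forestProfiles s k n, lagrangeWeight K k M * M.prod fun p v => a p ^ v := by
  induction hd : n.degree using Nat.strong_induction_on generalizing k n with
  | _ d ih =>
  cases k with
  | zero =>
    classical
    have hweight : ∀ M ∈ forestProfiles s 0 n,
        lagrangeWeight K 0 M * (M.prod fun p v => a p ^ v) = if 0 = M then 1 else 0 := by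
      rintro M -
      rcases eq_or_ne M 0 with rfl | hM
      · simp [lagrangeWeight_zero]
      · simp [lagrangeWeight_of_ne_zero _ hM, hM.symm]
    rw [sum_congr rfl hweight, Finset.sum_ite_eq, pow_zero, coeff_one]
    simp [mem_forestProfiles hpos, eq_comm]
  | succ k =>
    have hrec : ∀ p ∈ {p ∈ s | p.1 ≤ n}, a p * coeff (n - p.1) (y ^ (p.2 + k)) =
        ∑ M ∈ forestProfiles s (p.2 + k) (n - p.1),
          a p * (lagrangeWeight K (p.2 + k) M * M.prod fun p v => a p ^ v) := by
      intro p hp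
      obtain ⟨hps, hpn⟩ := mem_filter.mp hp
      rw [ih _ (hd ▸ degree_tsub_lt (hpos p hps) hpn) _ _ rfl, Finset.mul_sum]
    rw [coeff_pow_succ_of_eq_sum hy, sum_congr rfl hrec, sum_sum_forestProfiles hpos]
    refine sum_congr rfl fun M hM => ?_
    obtain ⟨-, hdeg, -⟩ := (mem_forestProfiles hpos).mp hM
    rw [← sum_lagrangeWeight_sub_single hdeg, Finset.sum_mul]
    refine sum_congr rfl fun p hp => ?_
    rw [prod_pow_eq_mul_prod_pow_sub_single a hp]
    ring

theorem coeff_eq_sum_Icc_sum_forestProfiles [Field K] [CharZero K] (hpos : ∀ p ∈ s, p.1 ≠ 0)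
    {a : (σ →₀ ℕ) × ℕ → K} {y : MvPowerSeries σ K}
    (hy : y = ∑ p ∈ s, monomial p.1 (a p) * y ^ p.2) {n : σ →₀ ℕ} {B : ℕ} (hB : n.degree ≤ B) :
    coeff n y = ∑ m ∈ Icc 1 B, (1 / (m : K)) *
      ∑ M ∈ forestProfiles s 1 n with M.degree = m,
        ((m ! : K) / M.prod fun _ v => (v ! : K)) * M.prod fun p v => a p ^ v := by
  have hmaps : ∀ M ∈ forestProfiles s 1 n, M.degree ∈ Icc 1 B := by
    intro M hM
    obtain ⟨hsupp, hdeg, hfst⟩ := (mem_forestProfiles hpos).mp hM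
    have := hfst ▸ degree_le_degree_weight (w := Prod.fst) fun p hp => hpos p (hsupp hp)
    exact mem_Icc.mpr ⟨by omega, by omega⟩
  rw [← pow_one y, coeff_pow_eq_sum_forestProfiles hpos hy, ← sum_fiberwise_of_maps_to hmaps]
  refine sum_congr rfl fun m hm => ?_
  rw [Finset.mul_sum]
  refine sum_congr rfl fun M hM => ?_
  obtain ⟨-, rfl⟩ := mem_filter.mp hM
  have hdeg : M.degree ≠ 0 := (Nat.one_le_iff_ne_zero.mp (mem_Icc.mp hm).1)
  have hM0 : M ≠ 0 := fun h => hdeg (by rw [h, map_zero])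
  have := prod_factorial_ne_zero (K := K) M
  have : (M.degree : K) ≠ 0 := Nat.cast_ne_zero.mpr hdeg
  rw [lagrangeWeight_of_ne_zero _ hM0, ← Nat.mul_factorial_pred hdeg]
  push_cast
  field_simp

end FlajoletSoria

theorem multivariate_flajolet_soria_general (K : Type*) [Field K] [CharZero K]
    (r : ℕ) (hr : 0 < r)
    (s : Finset ((Fin r →₀ ℕ) × ℕ)) (a : (Fin r →₀ ℕ) × ℕ → K)
    (hpos : ∀ p ∈ s, p.1 ≠ 0)
    (y0 : MvPowerSeries (Fin r) K)
    (heq : y0 = ∑ p ∈ s, (MvPowerSeries.monomial p.1 (a p)) * y0 ^ p.2)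
    (n : Fin r →₀ ℕ) :
    MvPowerSeries.coeff n y0 =
      ∑ m ∈ Finset.Icc 1 (2 * (∑ i, n i) - n ⟨r - 1, Nat.sub_lt hr one_pos⟩),
        (1 / (m : K)) *
          ∑ᶠ (M : ((Fin r →₀ ℕ) × ℕ) →₀ ℕ)
            (_ : ↑M.support ⊆ (s : Set ((Fin r →₀ ℕ) × ℕ)) ∧
              (M.sum fun _ v => v) = m ∧
              (M.sum fun p v => v * p.2) = m - 1 ∧
              (M.sum fun p v => v • p.1) = n),
            ((m.factorial : K) / (M.prod fun _ v => (v.factorial : K))) *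
              (M.prod fun p v => a p ^ v) := by
  have hB : n.degree ≤ 2 * (∑ i, n i) - n ⟨r - 1, Nat.sub_lt hr one_pos⟩ := by
    have := single_le_sum (f := fun i => n i) (fun i _ => zero_le)
      (mem_univ ⟨r - 1, Nat.sub_lt hr one_pos⟩)
    rw [degree_eq_sum]
    omega
  rw [FlajoletSoria.coeff_eq_sum_Icc_sum_forestProfiles hpos heq hB]
  refine sum_congr rfl fun m hm =>
    congrArg _ (finsum_cond_eq_sum_of_cond_iff _ fun {M} _ => ?_).symm
  have hm1 := (mem_Icc.mp hm).1
  rw [mem_filter, FlajoletSoria.mem_forestProfiles hpos, coe_subset]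
  change _ ∧ M.degree = m ∧ weight Prod.snd M = m - 1 ∧ weight Prod.fst M = n ↔ _
  constructor
  · rintro ⟨hsupp, hdeg, hsnd, hfst⟩
    exact ⟨⟨hsupp, by omega, hfst⟩, hdeg⟩
  · rintro ⟨⟨hsupp, hdeg, hfst⟩, rfl⟩
    exact ⟨hsupp, rfl, by omega, hfst⟩

/-- **Multivariate Flajolet–Soria formula (polynomial case).**
Let `K` be a field of characteristic zero and `Q(x,y) = Σ_{(i,j) ∈ s} a_{i,j} x^i y^j` a
polynomial (no negative exponents) with `Q(x,0) ≢ 0` and every exponent `i` nonzero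
(i.e. `i >_grlex 0`).  Let `y₀ ∈ K[[x₁,…,x_r]]` be the unique solution of `y = Q(x,y)`
with zero constant term.  Then for every `n`, writing `|M| = Σ m_{i,j}`,
`‖M‖ = Σ m_{i,j}·j`, `G(M) = Σ m_{i,j}·i` and `A^M = Π a_{i,j}^{m_{i,j}}`,
`c_n = Σ_{m=1}^{μ_n} (1/m) Σ_{|M|=m, ‖M‖=m-1, G(M)=n} (m!/M!)·A^M`,
where `μ_n ≤ 2|n| - n_r` (so the outer sum may be taken up to `2|n| - n_r`). -/
theorem multivariate_flajolet_soria (K : Type*) [Field K] [CharZero K]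
    (r : ℕ) (hr : 0 < r)
    (s : Finset ((Fin r →₀ ℕ) × ℕ)) (a : (Fin r →₀ ℕ) × ℕ → K)
    (hpos : ∀ p ∈ s, p.1 ≠ 0)
    (hQ0 : ∃ i : Fin r →₀ ℕ, (i, 0) ∈ s ∧ a (i, 0) ≠ 0)
    (y0 : MvPowerSeries (Fin r) K)
    (h00 : MvPowerSeries.constantCoeff y0 = 0)
    (heq : y0 = ∑ p ∈ s, (MvPowerSeries.monomial p.1 (a p)) * y0 ^ p.2)
    (n : Fin r →₀ ℕ) (hn : n ≠ 0) :
    MvPowerSeries.coeff n y0 =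
      ∑ m ∈ Finset.Icc 1 (2 * (∑ i, n i) - n ⟨r - 1, Nat.sub_lt hr one_pos⟩),
        (1 / (m : K)) *
          ∑ᶠ (M : ((Fin r →₀ ℕ) × ℕ) →₀ ℕ)
            (_ : ↑M.support ⊆ (s : Set ((Fin r →₀ ℕ) × ℕ)) ∧
              (M.sum fun _ v => v) = m ∧
              (M.sum fun p v => v * p.2) = m - 1 ∧
              (M.sum fun p v => v • p.1) = n),
            ((m.factorial : K) / (M.prod fun _ v => (v.factorial : K))) *
              (M.prod fun p v => a p ^ v) :=
  multivariate_flajolet_soria_general K r hr s a hpos y0 heq n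
end

section
/- Let K be a field of characteristic zero and let y = Q(x,y) = Σ_{i,j} a_{i,j} x^i y^j be a strongly reduced Henselian equation with Q ∈ K[x_1,x_1^{-1},...,x_r,x_r^{-1}][y]. Define ι_0 = (ι_{0,1},...,ι_{0,r}) by ι_{0,k} := max(0, −min{ i_k : a_{i,j} ≠ 0 }). Suppose M = (m_{i,j}) is a tuple of natural numbers with |M| = m, ‖M‖ = m − 1 and G(M) = n for some n ∈ ℤ^r, n >_grlex 0. Then m ≤ Σ_{k=1}^r λ_k n_k, where λ_r = ∏_{j=1}^{r−1}(1 + ι_{0,j}), λ_{r−1} = 1 + ∏_{j=1}^{r−1}(1 + ι_{0,j}), and for k < r−1, λ_k = ∏_{j=k+1}^{r−1}(1 + ι_{0,j}) + ∏_{j=1}^{r−1}(1 + ι_{0,j}). -/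
/-!
Let `L(i) = Σ_k λ_k i_k`. It suffices that `L(i) ≥ 1` for every exponent `i` of `Q`, since then,
`L` being additive, `m = Σ m_{i,j} ≤ Σ m_{i,j} L(i) = L(G(M)) = L(n)`.

With `P = Π_{j<r} (1 + ι_{0,j})` and the suffix products `S_k = Π_{k<j<r} (1 + ι_{0,j})`,
`L(i) = P · Σ_k i_k + Σ_{k<r} S_k i_k`. Since `i_k ≥ -ι_{0,k}`, the telescoping identity
`Σ_{a≤k<r} ι_{0,k} S_k = S_{a-1} - 1` bounds every tail `Σ_{a≤k<r} S_k i_k` below by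
`1 - S_{a-1}`. If `Σ_k i_k ≥ 1` this gives `L(i) ≥ P + 1 - P`; if `Σ_k i_k = 0` and `a` is the
first coordinate with `i_a > 0` (necessarily `a < r`), then `L(i) ≥ S_a + (1 - S_a)`.
-/

section SuffixProducts

variable {α R : Type*} [LinearOrder α] [CommRing R] [LinearOrder R] [IsStrictOrderedRing R]
  {c x : α → R}

theorem one_sub_prod_le_sum_prod_gt_mul (s : Finset α) (hc : ∀ i ∈ s, 0 ≤ c i)
    (hx : ∀ i ∈ s, -c i ≤ x i) :
    1 - ∏ i ∈ s, (1 + c i) ≤ ∑ i ∈ s, (∏ j ∈ s with i < j, (1 + c j)) * x i := by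
  induction s using Finset.induction_on_min with
  | empty => simp
  | insert a s ha ih =>
    have has : a ∉ s := fun h => lt_irrefl a (ha a h)
    have hxa : -c a ≤ x a := hx a (Finset.mem_insert_self a s)
    have hs := ih (fun i hi => hc i (Finset.mem_insert_of_mem hi))
      (fun i hi => hx i (Finset.mem_insert_of_mem hi))
    have hfilter_a : ({j ∈ insert a s | a < j} : Finset α) = s := by
      rw [Finset.filter_insert, if_neg (lt_irrefl a)]
      exact Finset.filter_true_of_mem ha
    have hfilter_s : ∀ i ∈ s, ({j ∈ insert a s | i < j} : Finset α) = {j ∈ s | i < j} := by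
      intro i hi
      rw [Finset.filter_insert, if_neg (ha i hi).not_gt]
    have hP : 0 ≤ ∏ i ∈ s, (1 + c i) :=
      Finset.prod_nonneg fun i hi => by linarith [hc i (Finset.mem_insert_of_mem hi)]
    rw [Finset.prod_insert has, Finset.sum_insert has, hfilter_a,
      Finset.sum_congr rfl fun i hi => by rw [hfilter_s i hi]]
    linear_combination hs + mul_nonneg (neg_le_iff_add_nonneg.1 hxa) hP

theorem one_le_sum_prod_gt_mul {s : Finset α} {i : α} (hi : i ∈ s) (hc : ∀ j ∈ s, 0 ≤ c j)
    (hx : ∀ j ∈ s, -c j ≤ x j) (hlow : ∀ j ∈ s, j < i → x j = 0) (hxi : 1 ≤ x i) :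
    1 ≤ ∑ j ∈ s, (∏ k ∈ s with j < k, (1 + c k)) * x j := by
  set s' : Finset α := {j ∈ s | i < j}
  have hhead : ∑ j ∈ s with ¬ i < j, (∏ k ∈ s with j < k, (1 + c k)) * x j
      = (∏ k ∈ s', (1 + c k)) * x i := by
    refine Finset.sum_eq_single_of_mem i (by simp [hi]) fun j hj hji => ?_
    rw [Finset.mem_filter, not_lt] at hj
    rw [hlow j hj.1 (lt_of_le_of_ne hj.2 hji), mul_zero]
  have htail : ∑ j ∈ s', (∏ k ∈ s with j < k, (1 + c k)) * x j
      = ∑ j ∈ s', (∏ k ∈ s' with j < k, (1 + c k)) * x j := by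
    refine Finset.sum_congr rfl fun j hj => ?_
    have hij : i < j := (Finset.mem_filter.1 hj).2
    rw [Finset.filter_filter,
      Finset.filter_congr fun k _ => (and_iff_right_of_imp hij.trans : i < k ∧ j < k ↔ j < k)]
  have hbound := one_sub_prod_le_sum_prod_gt_mul s'
    (fun j hj => hc j (Finset.mem_filter.1 hj).1) (fun j hj => hx j (Finset.mem_filter.1 hj).1)
  have hP : 0 ≤ ∏ k ∈ s', (1 + c k) :=
    Finset.prod_nonneg fun k hk => by linarith [hc k (Finset.mem_filter.1 hk).1]
  rw [← Finset.sum_filter_add_sum_filter_not s (i < ·), hhead, htail]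
  linear_combination hbound + mul_nonneg (sub_nonneg.2 hxi) hP

end SuffixProducts

theorem Finsupp.sum_le_map_sum_zsmul {α G : Type*} [AddCommGroup G] (L : G →+ ℤ) (M : α →₀ ℕ)
    (f : α → G) (h : ∀ a ∈ M.support, 1 ≤ L (f a)) :
    ((M.sum fun _ v => v : ℕ) : ℤ) ≤ L (M.sum fun a v => (v : ℤ) • f a) := by
  rw [map_finsuppSum]
  simp only [map_zsmul, smul_eq_mul, Finsupp.sum, Nat.cast_sum]
  exact Finset.sum_le_sum fun a ha => le_mul_of_one_le_right (Int.natCast_nonneg _) (h a ha)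

section Weights

variable {r : ℕ} (ι : Fin r → ℕ)

def initCoords (r : ℕ) : Finset (Fin r) := Finset.univ.filter fun u : Fin r => (u : ℕ) + 1 < r

/-- The paper's `λ_k`, 0-based: `t : Fin r` is the coordinate `k = t + 1`, and `initCoords r`
are the coordinates `1, …, r - 1`. -/
def flajoletSoriaWeight (t : Fin r) : ℤ :=
  if (t : ℕ) + 1 = r then
    ∏ u ∈ initCoords r, (1 + ι u : ℤ)
  else
    (∏ u ∈ Finset.univ.filter (fun u : Fin r => (t : ℕ) < (u : ℕ) ∧ (u : ℕ) + 1 < r),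
        (1 + ι u : ℤ))
      + ∏ u ∈ initCoords r, (1 + ι u : ℤ)

def flajoletSoriaForm : (Fin r →₀ ℤ) →+ ℤ where
  toFun x := ∑ t, flajoletSoriaWeight ι t * x t
  map_zero' := by simp
  map_add' x y := by simp only [Finsupp.add_apply, mul_add, Finset.sum_add_distrib]

theorem flajoletSoriaWeight_eq (t : Fin r) :
    flajoletSoriaWeight ι t = (∏ u ∈ initCoords r, (1 + ι u : ℤ))
      + if t ∈ initCoords r then ∏ u ∈ initCoords r with t < u, (1 + ι u : ℤ) else 0 := by
  have hfilter : Finset.univ.filter (fun u : Fin r => (t : ℕ) < (u : ℕ) ∧ (u : ℕ) + 1 < r)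
      = {u ∈ initCoords r | t < u} := by
    ext u
    simp only [initCoords, Finset.mem_filter, Finset.mem_univ, true_and, Fin.lt_def, and_comm]
  unfold flajoletSoriaWeight
  rw [hfilter]
  split_ifs with hlast hmem hmem <;> simp only [initCoords, Finset.mem_filter, Finset.mem_univ,
    true_and] at hmem <;> omega

theorem flajoletSoriaForm_apply (x : Fin r →₀ ℤ) :
    flajoletSoriaForm ι x = (∏ u ∈ initCoords r, (1 + ι u : ℤ)) * ∑ t, x t
      + ∑ t ∈ initCoords r, (∏ u ∈ initCoords r with t < u, (1 + ι u : ℤ)) * x t := by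
  simp only [flajoletSoriaForm, AddMonoidHom.coe_mk, ZeroHom.coe_mk, flajoletSoriaWeight_eq,
    add_mul, Finset.sum_add_distrib, Finset.mul_sum, ite_mul, zero_mul, Finset.sum_ite_mem,
    Finset.univ_inter]

theorem one_le_flajoletSoriaForm {x : Fin r →₀ ℤ} (hpos : grlexLtZ 0 x)
    (hx : ∀ k, -(ι k : ℤ) ≤ x k) : 1 ≤ flajoletSoriaForm ι x := by
  have hc : ∀ u ∈ initCoords r, (0 : ℤ) ≤ ι u := fun u _ => Int.natCast_nonneg _
  have hx' : ∀ u ∈ initCoords r, -(ι u : ℤ) ≤ x u := fun u _ => hx u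
  rw [flajoletSoriaForm_apply]
  simp only [grlexLtZ, finsuppLexLtZ, Finsupp.coe_zero, Pi.zero_apply, Finset.sum_const_zero]
    at hpos
  rcases hpos with hsum | ⟨hsum, i, hlow, hi⟩
  · have hP : 0 ≤ ∏ u ∈ initCoords r, (1 + ι u : ℤ) :=
      Finset.prod_nonneg fun u _ => by positivity
    linear_combination one_sub_prod_le_sum_prod_gt_mul (initCoords r) hc hx'
      + mul_nonneg hP (sub_nonneg.2 (Int.add_one_le_of_lt hsum))
  · have hi_init : i ∈ initCoords r := by
      simp only [initCoords, Finset.mem_filter, Finset.mem_univ, true_and]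
      by_contra hlast
      have : ∑ t, x t = x i := Finset.sum_eq_single i
        (fun j _ hji => (hlow j (lt_of_le_of_ne (Fin.le_iff_val_le_val.2 (by omega)) hji)).symm)
        (by simp)
      omega
    rw [← hsum, mul_zero, zero_add]
    exact one_le_sum_prod_gt_mul hi_init hc hx' (fun j _ hj => (hlow j hj).symm) hi

end Weights

theorem flajolet_soria_bound_general (r : ℕ) (ι : Fin r → ℕ) (m : ℕ)
    (M : ((Fin r →₀ ℤ) × ℕ) →₀ ℕ)
    (hpos : ∀ p ∈ M.support, grlexLtZ 0 p.1)
    (hι : ∀ p ∈ M.support, ∀ k : Fin r, -(ι k : ℤ) ≤ p.1 k)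
    (hcard : (M.sum fun _ v => v) = m)
    (n : Fin r →₀ ℤ)
    (hG : (M.sum fun p v => (v : ℤ) • p.1) = n) :
    (m : ℤ) ≤ ∑ t : Fin r,
      (if (t : ℕ) + 1 = r then
          ((∏ u ∈ Finset.univ.filter (fun u : Fin r => (u : ℕ) + 1 < r), (1 + ι u : ℤ)))
        else
          (∏ u ∈ Finset.univ.filter (fun u : Fin r => (t : ℕ) < (u : ℕ) ∧ (u : ℕ) + 1 < r),
              (1 + ι u : ℤ))
            + ∏ u ∈ Finset.univ.filter (fun u : Fin r => (u : ℕ) + 1 < r), (1 + ι u : ℤ))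
        * n t := by
  subst hcard hG
  exact Finsupp.sum_le_map_sum_zsmul (flajoletSoriaForm ι) M Prod.fst
    fun p hp => one_le_flajoletSoriaForm ι (hpos p hp) (hι p hp)

/-- **The combinatorial bound in the generalized Flajolet–Soria formula.**
Let `y = Q(x,y) = Σ a_{i,j} x^i y^j` be a strongly reduced Henselian equation
(`Q ∈ K[x₁^{±1},…,x_r^{±1}][y]`, all exponents `i >_grlex 0`), and let
`ι₀ = (ι_{0,1},…,ι_{0,r})` satisfy `i_k ≥ -ι_{0,k}` for all exponents `i` appearing
in `Q`.  Suppose `M = (m_{i,j})` is a tuple of natural numbers indexed by the monomials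
of `Q` with `|M| = m ≥ 1`, `‖M‖ = m - 1` and `G(M) = n` for some `n >_grlex 0`.
Then `m ≤ Σ_{k=1}^{r} λ_k n_k`, where `λ_r = Π_{j=1}^{r-1}(1+ι_{0,j})`,
`λ_{r-1} = 1 + Π_{j=1}^{r-1}(1+ι_{0,j})`, and for `k < r-1`,
`λ_k = Π_{j=k+1}^{r-1}(1+ι_{0,j}) + Π_{j=1}^{r-1}(1+ι_{0,j})`.
(Indices below are 0-based: coordinate `t : Fin r` corresponds to `k = t+1`.) -/
theorem flajolet_soria_bound (r : ℕ) (ι : Fin r → ℕ) (m : ℕ) (hm : 1 ≤ m)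
    (M : ((Fin r →₀ ℤ) × ℕ) →₀ ℕ)
    (hpos : ∀ p ∈ M.support, grlexLtZ 0 p.1)
    (hι : ∀ p ∈ M.support, ∀ k : Fin r, -(ι k : ℤ) ≤ p.1 k)
    (hcard : (M.sum fun _ v => v) = m)
    (hnorm : (M.sum fun p v => v * p.2) = m - 1)
    (n : Fin r →₀ ℤ) (hn : grlexLtZ 0 n)
    (hG : (M.sum fun p v => (v : ℤ) • p.1) = n) :
    (m : ℤ) ≤ ∑ t : Fin r,
      (if (t : ℕ) + 1 = r then
          ((∏ u ∈ Finset.univ.filter (fun u : Fin r => (u : ℕ) + 1 < r), (1 + ι u : ℤ)))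
        else
          (∏ u ∈ Finset.univ.filter (fun u : Fin r => (t : ℕ) < (u : ℕ) ∧ (u : ℕ) + 1 < r),
              (1 + ι u : ℤ))
            + ∏ u ∈ Finset.univ.filter (fun u : Fin r => (u : ℕ) + 1 < r), (1 + ι u : ℤ))
        * n t :=
  flajolet_soria_bound_general r ι m M hpos hι hcard n hG
end

section
/- Let y_0 = Σ_{n ∈ ℕ^r} c_n x^n ∈ ℚ[[x_1,...,x_r]] be a multivariate power series algebraic over ℚ(x_1,...,x_r). Then there exist positive integers δ_0 and δ such that for every n ∈ ℕ^r, the rational number δ_0 · δ^{|n|} · c_n is an integer (multivariate Eisenstein theorem). -/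
/-!
Eisenstein's argument with a monomial weight `w`. Replacing the annihilating polynomial by one of
minimal degree `M` makes `u = M'(y₀)` nonzero, and `w` is chosen so that the support of `u` has a
unique element `n₀` of least weight `H`. Let `T` be the truncation of `y₀` at weight `≤ H + 1` and
`z = y₀ - T`. Then `z` is a root of `Q = N · M(X + T)`, which has integral coefficients for a
suitable `N`, and whose linear coefficient `N · M'(T)` agrees with `N · u` up to weight `H + 1`.
Let `c₀ = N u_{n₀}` and `E = |c₀|`. Multiply the coefficient of `x^(ν + n₀)` in `Q(z) = 0` by
`E^(w(ν + n₀))`: if `E^(w μ) z_μ ∈ E^(H + 1) ℤ` holds for all `μ` of smaller weight than `ν`, then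
every term except `c₀ E^H · E^(w ν) z_ν` lies in `c₀ E^(2H + 1) ℤ`, so the claim holds for `ν` too.
As `w ν ≤ (∑ wᵢ) |ν|`, the theorem follows with `δ = E^(∑ wᵢ)`, the integer `δ₀` clearing the
finitely many denominators below weight `H + 2`.
-/

open MvPowerSeries Finsupp AddSubgroup Finset

local notation "co" => MvPolynomial.coeToMvPowerSeries.ringHom

section Zmultiples

variable {R : Type*} [CommRing R]

theorem mul_mem_zmultiples_mul {a b x y : R} (hx : x ∈ zmultiples a) (hy : y ∈ zmultiples b) :
    x * y ∈ zmultiples (a * b) := by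
  obtain ⟨k, rfl⟩ := mem_zmultiples_iff.mp hx
  obtain ⟨l, rfl⟩ := mem_zmultiples_iff.mp hy
  exact mem_zmultiples_iff.mpr ⟨k * l, by simp only [zsmul_eq_mul, Int.cast_mul]; ring⟩

theorem natCast_pow_mem_zmultiples_one (n k : ℕ) : (n : R) ^ k ∈ zmultiples 1 := by
  simpa using intCast_mem_zmultiples_one (R := R) ((n : ℤ) ^ k)

theorem mem_zmultiples_of_mul_mem_zmultiples_mul [IsDomain R] {a c x : R} (ha : a ≠ 0)
    (h : a * x ∈ zmultiples (a * c)) : x ∈ zmultiples c := by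
  obtain ⟨k, hk⟩ := mem_zmultiples_iff.mp h
  exact mem_zmultiples_iff.mpr ⟨k, mul_left_cancel₀ ha (by rw [mul_smul_comm, hk])⟩

theorem natCast_pow_mem_zmultiples_mul_pow {c : R} {E : ℕ} (hE : (E : R) ∈ zmultiples c)
    {L k : ℕ} (hLk : L < k) : (E : R) ^ k ∈ zmultiples (c * (E : R) ^ L) := by
  obtain ⟨m, rfl⟩ := Nat.exists_eq_add_of_lt hLk
  have h := mul_mem_zmultiples_mul (intCast_mem_zmultiples_one (R := R) ((E : ℤ) ^ m))
    (mul_mem_zmultiples_mul hE (mem_zmultiples ((E : R) ^ L)))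
  rw [one_mul] at h
  convert h using 1
  push_cast
  ring

theorem exists_pos_natCast_mem_zmultiples {c : R} (hc : c ∈ zmultiples 1) (hc0 : c ≠ 0) :
    ∃ E : ℕ, 0 < E ∧ (E : R) ∈ zmultiples c := by
  obtain ⟨k, rfl⟩ := mem_zmultiples_iff.mp hc
  rw [zsmul_one] at hc0 ⊢
  obtain ⟨m, hm⟩ : k ∣ (k.natAbs : ℤ) := Int.dvd_natAbs.mpr dvd_rfl
  refine ⟨k.natAbs, Int.natAbs_pos.mpr (by rintro rfl; exact hc0 Int.cast_zero),
    mem_zmultiples_iff.mpr ⟨m, ?_⟩⟩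
  rw [zsmul_eq_mul, ← Int.cast_natCast, hm, Int.cast_mul, mul_comm]

theorem AddSubgroup.mem_of_sum_eq_zero {ι M : Type*} [AddCommGroup M] {G : AddSubgroup M}
    {s : Finset ι} {f : ι → M} {j : ι} (hj : j ∈ s) (hs : ∑ i ∈ s, f i = 0)
    (h : ∀ i ∈ s, i ≠ j → f i ∈ G) : f j ∈ G := by
  classical
  rw [← add_sum_erase s f hj, add_eq_zero_iff_eq_neg] at hs
  rw [hs]
  exact neg_mem (sum_mem fun i hi => h i (mem_of_mem_erase hi) (ne_of_mem_erase hi))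

end Zmultiples

section WeightedOrder

variable {σ R : Type*} [CommRing R] (w : σ → ℕ)

theorem coeff_pow_eq_zero_of_weight_lt {z : MvPowerSeries σ R} {d : ℕ}
    (hz : (d : ℕ∞) ≤ z.weightedOrder w) {i : ℕ} {b : σ →₀ ℕ} (hb : weight w b < i * d) :
    coeff b (z ^ i) = 0 := by
  refine coeff_eq_zero_of_lt_weightedOrder w (lt_of_lt_of_le ?_ (le_weightedOrder_pow w i))
  calc (weight w b : ℕ∞) < (i * d : ℕ) := by exact_mod_cast hb
    _ = i • (d : ℕ∞) := by simp
    _ ≤ i • z.weightedOrder w := nsmul_le_nsmul_right hz i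

theorem pow_weight_mul_coeff_pow_mem_zmultiples {z : MvPowerSeries σ R} {E : R} {d L m : ℕ}
    (hz : (d : ℕ∞) ≤ z.weightedOrder w)
    (hlow : ∀ b, weight w b < m → E ^ weight w b * coeff b z ∈ zmultiples (E ^ L)) (i : ℕ) :
    ∀ b, weight w b + d < m + i * d →
      E ^ weight w b * coeff b (z ^ i) ∈ zmultiples (E ^ (L * i)) := by
  classical
  induction i with
  | zero =>
    intro b _
    rw [pow_zero, coeff_one]
    split_ifs with hb
    · simp [hb]
    · simp
  | succ i ih =>
    intro b hb
    rw [pow_succ', coeff_mul, Finset.mul_sum]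
    refine sum_mem fun p hp => ?_
    have hwt : weight w p.1 + weight w p.2 = weight w b := by
      rw [← map_add, (mem_antidiagonal.mp hp)]
    by_cases h1 : weight w p.1 < d
    · rw [coeff_eq_zero_of_lt_weightedOrder w (lt_of_lt_of_le (by exact_mod_cast h1) hz)]
      simp
    by_cases h2 : weight w p.2 < i * d
    · rw [coeff_pow_eq_zero_of_weight_lt w hz h2]
      simp
    have h := mul_mem_zmultiples_mul (hlow p.1 (by rw [add_mul] at hb; omega))
      (ih p.2 (by rw [add_mul] at hb; omega))
    rw [show E ^ (L * (i + 1)) = E ^ L * E ^ (L * i) by ring, ← hwt, pow_add]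
    convert h using 1
    ring

end WeightedOrder

section EisensteinInduction

variable {σ : Type*} (w : σ → ℕ)

theorem coeff_eval₂_coeToMvPowerSeries [DecidableEq σ] {R : Type*} [CommSemiring R]
    (Q : Polynomial (MvPolynomial σ R)) (z : MvPowerSeries σ R) (μ : σ →₀ ℕ) :
    coeff μ (Q.eval₂ co z) = ∑ x ∈ range (Q.natDegree + 1) ×ˢ antidiagonal μ,
      (Q.coeff x.1).coeff x.2.1 * coeff x.2.2 (z ^ x.1) := by
  rw [Polynomial.eval₂_eq_sum_range, map_sum, sum_product]
  refine sum_congr rfl fun i _ => ?_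
  rw [coeff_mul]
  rfl

theorem pow_weight_mul_coeff_mul_coeff_pow_mem_zmultiples {Q : Polynomial (MvPolynomial σ ℚ)}
    {z : MvPowerSeries σ ℚ} (hQint : ∀ i a, (Q.coeff i).coeff a ∈ zmultiples (1 : ℚ))
    {n0 : σ →₀ ℕ} (hQ1 : ∀ a ≠ n0, (Q.coeff 1).coeff a ≠ 0 → weight w n0 < weight w a)
    (hz : ((weight w n0 + 2 : ℕ) : ℕ∞) ≤ z.weightedOrder w)
    {E : ℕ} (hE : (E : ℚ) ∈ zmultiples ((Q.coeff 1).coeff n0))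
    {ν : σ →₀ ℕ} (hν : weight w n0 + 2 ≤ weight w ν)
    (IH : ∀ b, weight w b < weight w ν →
      (E : ℚ) ^ weight w b * coeff b z ∈ zmultiples ((E : ℚ) ^ (weight w n0 + 1)))
    {i : ℕ} {p : (σ →₀ ℕ) × (σ →₀ ℕ)} (hp : p.1 + p.2 = ν + n0) (hne : (i, p) ≠ (1, (n0, ν))) :
    (E : ℚ) ^ weight w (ν + n0) * ((Q.coeff i).coeff p.1 * coeff p.2 (z ^ i)) ∈
      zmultiples ((Q.coeff 1).coeff n0 * (E : ℚ) ^ (2 * weight w n0 + 1)) := by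
  classical
  set H := weight w n0
  set c0 := (Q.coeff 1).coeff n0
  have hwt : weight w p.1 + weight w p.2 = weight w ν + H := by rw [← map_add, hp, map_add]
  rw [show (E : ℚ) ^ weight w (ν + n0) * ((Q.coeff i).coeff p.1 * coeff p.2 (z ^ i)) =
      ((E : ℚ) ^ weight w p.1 * (Q.coeff i).coeff p.1) *
        ((E : ℚ) ^ weight w p.2 * coeff p.2 (z ^ i))
    by rw [← hp, map_add, pow_add]; ring]
  have hint : ∀ j, (E : ℚ) ^ weight w p.1 * (Q.coeff j).coeff p.1 ∈ zmultiples 1 := fun j => by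
    simpa using mul_mem_zmultiples_mul
      (natCast_pow_mem_zmultiples_one _ _) (hQint j p.1)
  match i with
  | 0 =>
    -- only `p = (ν + n₀, 0)` contributes, and `w (ν + n₀) ≥ 2H + 2`
    by_cases hp2 : p.2 = 0
    · have h := mul_mem_zmultiples_mul (natCast_pow_mem_zmultiples_mul_pow hE
        (show 2 * H + 1 < weight w p.1 by simp only [hp2, map_zero] at hwt; omega)) (hQint 0 p.1)
      simpa [hp2] using h
    · simp [coeff_one, hp2]
  | 1 =>
    -- `p.1 ≠ n₀` has weight `> H`, hence `w p.2 < w ν` and the induction hypothesis applies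
    by_cases hq : (Q.coeff 1).coeff p.1 = 0
    · simp [hq]
    have hp1 : p.1 ≠ n0 := by
      rintro h1
      refine hne (Prod.ext rfl (Prod.ext h1 ?_))
      rw [h1, add_comm ν] at hp
      exact add_left_cancel hp
    have hlt := hQ1 p.1 hp1 hq
    have h := mul_mem_zmultiples_mul
      (mul_mem_zmultiples_mul (natCast_pow_mem_zmultiples_mul_pow hE hlt) (hQint 1 p.1))
      (IH p.2 (by omega))
    rw [pow_one, show c0 * (E : ℚ) ^ (2 * H + 1) = c0 * (E : ℚ) ^ H * 1 * (E : ℚ) ^ (H + 1) by ring]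
    exact h
  | i + 2 =>
    -- `z` vanishes below weight `H + 2`, so `z ^ (i + 2)` only sees coefficients of weight `< w ν`
    have hpow := pow_weight_mul_coeff_pow_mem_zmultiples w hz IH (i + 2) p.2
      (by rw [add_mul]; omega)
    have hle :
        zmultiples ((E : ℚ) ^ ((H + 1) * (i + 2))) ≤ zmultiples (c0 * (E : ℚ) ^ (2 * H + 1)) :=
      zmultiples_le.mpr (natCast_pow_mem_zmultiples_mul_pow hE (by nlinarith))
    simpa using mul_mem_zmultiples_mul (hint (i + 2)) (hle hpow)

theorem pow_weight_mul_coeff_mem_zmultiples_of_eval₂_eq_zero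
    {Q : Polynomial (MvPolynomial σ ℚ)} {z : MvPowerSeries σ ℚ} (hQz : Q.eval₂ co z = 0)
    (hQint : ∀ i a, (Q.coeff i).coeff a ∈ zmultiples (1 : ℚ))
    {n0 : σ →₀ ℕ} (hn0 : (Q.coeff 1).coeff n0 ≠ 0)
    (hQ1 : ∀ a ≠ n0, (Q.coeff 1).coeff a ≠ 0 → weight w n0 < weight w a)
    (hz : ((weight w n0 + 2 : ℕ) : ℕ∞) ≤ z.weightedOrder w)
    {E : ℕ} (hE0 : 0 < E) (hE : (E : ℚ) ∈ zmultiples ((Q.coeff 1).coeff n0)) (ν : σ →₀ ℕ) :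
    (E : ℚ) ^ weight w ν * coeff ν z ∈ zmultiples ((E : ℚ) ^ (weight w n0 + 1)) := by
  classical
  induction hm : weight w ν using Nat.strong_induction_on generalizing ν with
  | _ m IH =>
  subst hm
  by_cases hν : weight w ν < weight w n0 + 2
  · rw [coeff_eq_zero_of_lt_weightedOrder w (lt_of_lt_of_le (by exact_mod_cast hν) hz), mul_zero]
    exact zero_mem _
  have hsum := congrArg (fun f => (E : ℚ) ^ weight w (ν + n0) * coeff (ν + n0) f) hQz
  simp only [coeff_eval₂_coeToMvPowerSeries, map_zero, mul_zero, Finset.mul_sum] at hsum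
  have hmem : ((1 : ℕ), (n0, ν)) ∈ range (Q.natDegree + 1) ×ˢ antidiagonal (ν + n0) :=
    mem_product.mpr ⟨mem_range.mpr (Nat.lt_succ_of_le (Polynomial.le_natDegree_of_ne_zero
      fun h => hn0 (by rw [h, MvPolynomial.coeff_zero]))), mem_antidiagonal.mpr (add_comm _ _)⟩
  have key := AddSubgroup.mem_of_sum_eq_zero hmem hsum fun x hx hne =>
    pow_weight_mul_coeff_mul_coeff_pow_mem_zmultiples w hQint hQ1 hz hE (by omega)
      (fun b hb => IH _ hb b rfl)
      (mem_antidiagonal.mp (mem_product.mp hx).2) hne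
  dsimp only at key
  rw [show (E : ℚ) ^ (2 * weight w n0 + 1) = (E : ℚ) ^ weight w n0 * (E : ℚ) ^ (weight w n0 + 1)
    by ring, ← mul_assoc] at key
  refine mem_zmultiples_of_mul_mem_zmultiples_mul
    (mul_ne_zero hn0 (pow_ne_zero (weight w n0) (Nat.cast_ne_zero.mpr hE0.ne'))) ?_
  convert key using 1
  rw [map_add, pow_add, pow_one]
  ring

end EisensteinInduction

section WeightSelection

theorem eq_of_sum_mul_pow_eq {r b : ℕ} {f g : Fin r → ℕ} (hf : ∀ i, f i < b) (hg : ∀ i, g i < b)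
    (h : ∑ i, f i * b ^ (i : ℕ) = ∑ i, g i * b ^ (i : ℕ)) : f = g := by
  have := (finFunctionFinEquiv : (Fin r → Fin b) ≃ _).injective
    (a₁ := fun i => ⟨f i, hf i⟩) (a₂ := fun i => ⟨g i, hg i⟩)
    (Fin.ext (by simpa [finFunctionFinEquiv_apply] using h))
  funext i
  exact congrArg (fun φ : Fin r → Fin b => (φ i : ℕ)) this

theorem exists_weight_unique_min {r : ℕ} {S : Set (Fin r →₀ ℕ)} (hS : S.Nonempty) :
    ∃ w : Fin r → ℕ, (∀ i, w i ≠ 0) ∧ ∃ n0 ∈ S, ∀ ν ∈ S, ν ≠ n0 → weight w n0 < weight w ν := by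
  obtain ⟨n1, hn1, hn1min⟩ := (InvImage.wf degree wellFounded_lt).has_min S hS
  set h := degree n1
  -- `w ν = K |ν| + ∑ νᵢ (h + 1)^i`, and `K` exceeds the second summand when `|ν| ≤ h`: the weight
  -- refines the degree and, on monomials of the minimal degree `h`, is injective (base `h + 1`).
  set K := h * (h + 1) ^ r + 1
  set w : Fin r → ℕ := fun i => K + (h + 1) ^ (i : ℕ)
  have hw : ∀ ν, weight w ν = K * degree ν + ∑ i, ν i * (h + 1) ^ (i : ℕ) := fun ν => by
    rw [weight_eq_sum, degree_eq_sum, Finset.mul_sum, ← sum_add_distrib]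
    exact sum_congr rfl fun i _ => by simp only [w, smul_eq_mul]; ring
  have hcode : ∀ ν : Fin r →₀ ℕ, degree ν ≤ h → ∑ i, ν i * (h + 1) ^ (i : ℕ) < K := fun ν hν =>
    calc ∑ i, ν i * (h + 1) ^ (i : ℕ) ≤ ∑ i, ν i * (h + 1) ^ r :=
          sum_le_sum fun i _ => Nat.mul_le_mul_left _ (Nat.pow_le_pow_right h.succ_pos i.2.le)
      _ = degree ν * (h + 1) ^ r := by rw [degree_eq_sum, Finset.sum_mul]
      _ < K := Nat.lt_succ_of_le (Nat.mul_le_mul_right _ hν)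
  obtain ⟨n0, hn0, hn0min⟩ := (InvImage.wf (weight w) wellFounded_lt).has_min S hS
  have hdeg : ∀ μ ∈ S, weight w μ ≤ weight w n0 → degree μ = h := fun μ hμ hle => by
    have hn0n1 : weight w n0 ≤ weight w n1 := not_lt.mp (hn0min n1 hn1)
    have hμ_deg : h ≤ degree μ := not_lt.mp (hn1min μ hμ)
    have hn1_code := hcode n1 le_rfl
    have hμ_wt := hw μ
    have hn1_wt : weight w n1 = K * h + _ := hw n1
    by_contra hne
    have hKμ := Nat.mul_le_mul_left K (show h + 1 ≤ degree μ by omega)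
    rw [Nat.mul_succ] at hKμ
    omega
  refine ⟨w, fun i => by positivity, n0, hn0, fun ν hν hne => ?_⟩
  by_contra! hle
  have heq : weight w ν = weight w n0 := le_antisymm hle (not_lt.mp (hn0min ν hν))
  have hdν := hdeg ν hν hle
  have hd0 := hdeg n0 hn0 le_rfl
  have hdigit : ∀ μ : Fin r →₀ ℕ, degree μ = h → ∀ i, μ i < h + 1 :=
    fun μ hμ i => Nat.lt_succ_of_le (hμ ▸ le_degree i μ)
  refine hne (DFunLike.coe_injective (eq_of_sum_mul_pow_eq (hdigit ν hdν) (hdigit n0 hd0) ?_))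
  rw [hw, hw, hdν, hd0] at heq
  omega

end WeightSelection

section Annihilator

open Polynomial

theorem exists_eval₂_eq_zero_and_eval₂_derivative_ne_zero {R S : Type*} [CommRing R]
    [IsAddTorsionFree R] [CommRing S] {f : R →+* S} (hf : Function.Injective f) {y : S}
    {P : R[X]} (hP0 : P ≠ 0) (hP : P.eval₂ f y = 0) :
    ∃ M : R[X], M.eval₂ f y = 0 ∧ (derivative M).eval₂ f y ≠ 0 := by
  induction hn : P.natDegree using Nat.strong_induction_on generalizing P with
  | _ n IH =>
  by_cases hP' : (derivative P).eval₂ f y = 0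
  · have hdeg : P.natDegree ≠ 0 := fun h0 => hP0 <| by
      rw [eq_C_of_natDegree_eq_zero h0, Polynomial.eval₂_C, ← map_zero f] at hP
      rw [eq_C_of_natDegree_eq_zero h0, hf hP, Polynomial.C_0]
    exact IH _ (hn ▸ natDegree_derivative_lt hdeg) (derivative_ne_zero.mpr hdeg) hP' rfl
  · exact ⟨P, hP, hP'⟩

end Annihilator

section Denominators

theorem natCast_mul_mem_zmultiples_one_of_den_dvd {q : ℚ} {N : ℕ} (h : q.den ∣ N) :
    (N : ℚ) * q ∈ zmultiples 1 := by
  obtain ⟨c, rfl⟩ := h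
  convert intCast_mem_zmultiples_one (R := ℚ) (c * q.num) using 1
  push_cast
  rw [← Rat.den_mul_eq_num]
  ring

theorem exists_nat_mul_mem_zmultiples_one {ι : Type*} (s : Finset ι) (f : ι → ℚ) :
    ∃ N : ℕ, 0 < N ∧ ∀ i ∈ s, (N : ℚ) * f i ∈ zmultiples 1 :=
  ⟨∏ i ∈ s, (f i).den, prod_pos fun i _ => (f i).pos,
    fun _ hi => natCast_mul_mem_zmultiples_one_of_den_dvd (dvd_prod_of_mem _ hi)⟩

theorem Polynomial.exists_nat_mul_coeff_coeff_mem_zmultiples_one {σ : Type*}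
    (Q : Polynomial (MvPolynomial σ ℚ)) :
    ∃ N : ℕ, 0 < N ∧ ∀ i a, (N : ℚ) * (Q.coeff i).coeff a ∈ zmultiples 1 := by
  obtain ⟨N, hN, h⟩ := exists_nat_mul_mem_zmultiples_one
    (Q.support.sigma fun i => (Q.coeff i).support) fun x => (Q.coeff x.1).coeff x.2
  refine ⟨N, hN, fun i a => ?_⟩
  by_cases ha : (Q.coeff i).coeff a = 0
  · simp [ha]
  · exact h ⟨i, a⟩ (mem_sigma.mpr ⟨Polynomial.mem_support_iff.mpr fun h0 => ha (by simp [h0]),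
      MvPolynomial.mem_support_iff.mpr ha⟩)

end Denominators

section Truncation

variable {σ R : Type*} [CommRing R] (w : σ → ℕ)

theorem le_weightedOrder_sub_truncFinset {s : Finset (σ →₀ ℕ)} {B : ℕ}
    (hs : ∀ d, weight w d < B → d ∈ s) (y : MvPowerSeries σ R) :
    (B : ℕ∞) ≤ (y - truncFinset R s y).weightedOrder w :=
  le_weightedOrder w fun d hd => by
    rw [map_sub, MvPolynomial.coeff_coe, coeff_truncFinset_of_mem _ (hs d (by exact_mod_cast hd)),
      sub_self]

theorem coeff_eval₂_eq_of_weight_lt_weightedOrder_sub {S : Type*} [CommRing S]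
    (φ : S →+* MvPowerSeries σ R) (P : Polynomial S) {f g : MvPowerSeries σ R} {d : σ →₀ ℕ}
    (hd : (weight w d : ℕ∞) < (g - f).weightedOrder w) :
    coeff d (P.eval₂ φ f) = coeff d (P.eval₂ φ g) := by
  obtain ⟨G, hG⟩ := Polynomial.sub_dvd_eval_sub g f (P.map φ)
  rw [eq_comm, ← sub_eq_zero, ← map_sub, Polynomial.eval₂_eq_eval_map,
    Polynomial.eval₂_eq_eval_map, hG]
  exact coeff_eq_zero_of_lt_weightedOrder w
    (hd.trans_le (le_self_add.trans (le_weightedOrder_mul w)))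

end Truncation

section Assembly

open Polynomial

theorem Polynomial.eval₂_taylor {R S : Type*} [CommSemiring R] [CommSemiring S] (f : R →+* S)
    (r : R) (p : R[X]) (s : S) : (taylor r p).eval₂ f s = p.eval₂ f (s + f r) := by
  rw [taylor_apply, eval₂_comp, eval₂_add, Polynomial.eval₂_X, Polynomial.eval₂_C]

variable {σ : Type*} {w : σ → ℕ}

theorem exists_pow_weight_mul_coeff_mem_zmultiples_one [Finite σ] (hw : ∀ i, w i ≠ 0)
    {y : MvPowerSeries σ ℚ} {M : Polynomial (MvPolynomial σ ℚ)} (hM : M.eval₂ co y = 0)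
    {n0 : σ →₀ ℕ} (hn0 : MvPowerSeries.coeff n0 ((derivative M).eval₂ co y) ≠ 0)
    (hmin : ∀ ν, MvPowerSeries.coeff ν ((derivative M).eval₂ co y) ≠ 0 → ν ≠ n0 →
      weight w n0 < weight w ν) :
    ∃ E : ℕ, 0 < E ∧ ∀ ν, weight w n0 + 1 < weight w ν →
      (E : ℚ) ^ weight w ν * MvPowerSeries.coeff ν y ∈ zmultiples 1 := by
  classical
  set s := (finite_of_nat_weight_le w hw (weight w n0 + 1)).toFinset
  have hs : ∀ d, d ∈ s ↔ weight w d ≤ weight w n0 + 1 := fun d => Set.Finite.mem_toFinset _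
  set T := truncFinset ℚ s y
  have hT := le_weightedOrder_sub_truncFinset w (B := weight w n0 + 2)
    (fun d hd => (hs d).mpr (by omega)) y
  obtain ⟨N, hN, hNint⟩ := (taylor T M).exists_nat_mul_coeff_coeff_mem_zmultiples_one
  set Q := Polynomial.C (MvPolynomial.C (N : ℚ)) * taylor T M
  have hQcoeff : ∀ i a, (Q.coeff i).coeff a = N * ((taylor T M).coeff i).coeff a := by
    simp only [Q, Polynomial.coeff_C_mul, MvPolynomial.coeff_C_mul, forall_const]
  have hQz : Q.eval₂ co (y - (T : MvPowerSeries σ ℚ)) = 0 := by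
    rw [eval₂_mul, eval₂_taylor, MvPolynomial.coeToMvPowerSeries.ringHom_apply, sub_add_cancel, hM,
      mul_zero]
  have hQ1 : ∀ a, weight w a < weight w n0 + 2 →
      (Q.coeff 1).coeff a = N * MvPowerSeries.coeff a ((derivative M).eval₂ co y) := by
    intro a ha
    rw [hQcoeff, taylor_coeff_one, ← MvPolynomial.coeff_coe,
      ← MvPolynomial.coeToMvPowerSeries.ringHom_apply, ← eval₂_at_apply,
      MvPolynomial.coeToMvPowerSeries.ringHom_apply,
      coeff_eval₂_eq_of_weight_lt_weightedOrder_sub w _ _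
        (lt_of_lt_of_le (by exact_mod_cast ha) hT)]
  have hc0 : (Q.coeff 1).coeff n0 ≠ 0 := by
    rw [hQ1 n0 (by omega)]
    exact mul_ne_zero (Nat.cast_ne_zero.mpr hN.ne') hn0
  have hQ1' : ∀ a ≠ n0, (Q.coeff 1).coeff a ≠ 0 → weight w n0 < weight w a := by
    intro a ha hQa
    by_contra! hle
    rw [hQ1 a (by omega)] at hQa
    exact absurd (hmin a (right_ne_zero_of_mul hQa) ha) (by omega)
  obtain ⟨E, hE0, hE⟩ := exists_pos_natCast_mem_zmultiples (hQcoeff 1 n0 ▸ hNint 1 n0) hc0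
  refine ⟨E, hE0, fun ν hν => ?_⟩
  have hcore := pow_weight_mul_coeff_mem_zmultiples_of_eval₂_eq_zero w hQz
    (fun i a => hQcoeff i a ▸ hNint i a) hc0 hQ1' (by exact_mod_cast hT) hE0 hE ν
  rw [map_sub, MvPolynomial.coeff_coe, coeff_truncFinset_eq_zero _ (by rw [hs]; omega),
    sub_zero] at hcore
  exact zmultiples_le.mpr (natCast_pow_mem_zmultiples_one _ _) hcore

end Assembly

theorem exists_mul_pow_sum_mul_coeff_eq_intCast {σ : Type*} [Fintype σ] {w : σ → ℕ}
    (hw : ∀ i, w i ≠ 0) {y : MvPowerSeries σ ℚ} {B E : ℕ} (hE : 0 < E)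
    (hy : ∀ ν, B < weight w ν → (E : ℚ) ^ weight w ν * coeff ν y ∈ zmultiples 1) :
    ∃ δ0 δ : ℕ, 0 < δ0 ∧ 0 < δ ∧
      ∀ ν : σ →₀ ℕ, ∃ t : ℤ, (δ0 : ℚ) * (δ : ℚ) ^ (∑ i, ν i) * coeff ν y = t := by
  obtain ⟨δ0, hδ0, hlow⟩ := exists_nat_mul_mem_zmultiples_one
    (finite_of_nat_weight_le w hw B).toFinset fun ν => coeff ν y
  refine ⟨δ0, E ^ ∑ i, w i, hδ0, by positivity, fun ν => ?_⟩
  suffices h : (δ0 : ℚ) * ((E ^ ∑ i, w i : ℕ) : ℚ) ^ (∑ i, ν i) * coeff ν y ∈ zmultiples 1 by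
    obtain ⟨t, ht⟩ := mem_zmultiples_iff.mp h
    exact ⟨t, by rw [← ht, zsmul_one]⟩
  have hwt : weight w ν ≤ (∑ i, w i) * ∑ i, ν i := by
    rw [weight_eq_sum, Finset.mul_sum]
    exact sum_le_sum fun i _ => by
      rw [smul_eq_mul, mul_comm]
      exact Nat.mul_le_mul_right _ (single_le_sum (fun j _ => Nat.zero_le (w j)) (mem_univ i))
  rw [Nat.cast_pow, ← pow_mul]
  by_cases hν : weight w ν ≤ B
  · have h := mul_mem_zmultiples_mul (natCast_pow_mem_zmultiples_one E ((∑ i, w i) * ∑ i, ν i))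
      (hlow ν ((Set.Finite.mem_toFinset _).mpr hν))
    rw [one_mul] at h
    convert h using 1
    ring
  · rw [← Nat.sub_add_cancel hwt, pow_add]
    have h := mul_mem_zmultiples_mul (mul_mem_zmultiples_mul (natCast_pow_mem_zmultiples_one δ0 1)
      (natCast_pow_mem_zmultiples_one E ((∑ i, w i) * ∑ i, ν i - weight w ν)))
      (hy ν (not_le.mp hν))
    rw [one_mul, one_mul, pow_one] at h
    convert h using 1
    ring

/-- **Multivariate Eisenstein theorem (Safonov).**
Let `y₀ = Σ_{n ∈ ℕ^r} c_n x^n ∈ ℚ[[x₁,…,x_r]]` be a multivariate power series algebraic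
over `ℚ(x₁,…,x_r)`, i.e. `P(x, y₀) = 0` for some nonzero `P ∈ ℚ[x₁,…,x_r][y]`.  Then
there exist positive integers `δ₀` and `δ` such that `δ₀·δ^{|n|}·c_n ∈ ℤ` for every
`n ∈ ℕ^r`. -/
theorem multivariate_eisenstein (r : ℕ) (y0 : MvPowerSeries (Fin r) ℚ)
    (halg : ∃ P : Polynomial (MvPolynomial (Fin r) ℚ), P ≠ 0 ∧
      Polynomial.eval₂ MvPolynomial.coeToMvPowerSeries.ringHom y0 P = 0) :
    ∃ δ0 δ : ℕ, 0 < δ0 ∧ 0 < δ ∧ ∀ n : Fin r →₀ ℕ,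
      ∃ z : ℤ, (δ0 : ℚ) * (δ : ℚ) ^ (∑ i, n i) * MvPowerSeries.coeff n y0 = z := by
  obtain ⟨P, hP0, hP⟩ := halg
  obtain ⟨M, hM, hM'⟩ := exists_eval₂_eq_zero_and_eval₂_derivative_ne_zero
    (MvPolynomial.coe_injective _ _) hP0 hP
  obtain ⟨ν, hν⟩ := (MvPowerSeries.ne_zero_iff_exists_coeff_ne_zero _).mp hM'
  obtain ⟨w, hw, n0, hn0, hmin⟩ :=
    exists_weight_unique_min (S := Function.support fun ν => MvPowerSeries.coeff ν _) ⟨ν, hν⟩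
  obtain ⟨E, hE, hEy⟩ := exists_pow_weight_mul_coeff_mem_zmultiples_one hw hM hn0 hmin
  exact exists_mul_pow_sum_mul_coeff_eq_intCast hw hE hEy
end

section
/- Let K be a field, F and G finite sets of exponent pairs as in the Wilczynski setup, and y_0 = Σ_{n ≥_grlex (0,...,0,1)} c_n x^n ∈ K[[x_1,...,x_r]] with c_{(0,...,0,1)} ≠ 0. Then y_0 is a root of some nonzero polynomial P(x,y) = Σ_{(i,j) ∈ F ∪ G} a_{i,j} x^i y^j supported in F ∪ G if and only if all minors of maximal order |F| of the reduced Wilczynski matrix M^{red}_{F,G} (whose columns, indexed by (i,j) ∈ F, list the coefficients of x^i · y_0^j in grlex order, with the rows indexed by G removed) vanish. -/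
open Module in
lemma aux_det {K ι m : Type*} [Field K] [Fintype m] [DecidableEq m]
    (v : m → ι → K) (hv : LinearIndependent K v) :
    ∃ ρ : m → ι, Function.Injective ρ ∧
      (Matrix.of fun i j : m => v j (ρ i)).det ≠ 0 := by
  classical
  set φ : ι → Module.Dual K (m → K) := fun n => ∑ j, v j n • LinearMap.proj j with hφ
  have hφe : ∀ n (c : m → K), φ n c = ∑ j, v j n * c j := by
    intro n c
    simp [hφ, smul_eq_mul]
  have hspan : Submodule.span K (Set.range φ) = ⊤ := by
    apply Submodule.span_eq_top_of_ne_zero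
    intro z hz
    by_contra hcon
    push_neg at hcon
    apply hz
    have h0 : ∑ j, z j • v j = 0 := by
      funext n
      have h1 := hcon (φ n) ⟨n, rfl⟩
      rw [hφe] at h1
      simpa [mul_comm] using h1
    have := Fintype.linearIndependent_iff.mp hv z h0
    funext j; exact this j
  obtain ⟨b, hbsub, hbspan, hbind⟩ := exists_linearIndependent K (Set.range φ)
  rw [hspan] at hbspan
  have hfin : b.Finite := hbind.setFinite
  haveI := hfin.fintype
  have hbasis : Basis b K (Module.Dual K (m → K)) := Basis.mk hbind (by rw [Subtype.range_coe]; rw [hbspan])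
  have hcard : Fintype.card m = Fintype.card b := by
    rw [← Module.finrank_eq_card_basis hbasis, Subspace.dual_finrank_eq,
      Module.finrank_pi]
  let ε : m ≃ b := Fintype.equivOfCardEq hcard
  choose n hn using fun (x : b) => hbsub x.2
  refine ⟨fun i => n (ε i), ?_, ?_⟩
  · intro i i' h
    have : φ (n (ε i)) = φ (n (ε i')) := congrArg φ h
    rw [hn, hn] at this
    exact ε.injective (Subtype.ext this)
  · set w : m → Module.Dual K (m → K) := fun i => (ε i : Module.Dual K (m → K)) with hw
    have hwind : LinearIndependent K w := hbind.comp ε ε.injective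
    have hwspan : Submodule.span K (Set.range w) = ⊤ := by
      have : Set.range w = b := by
        ext x
        simp only [Set.mem_range]
        constructor
        · rintro ⟨i, rfl⟩; exact (ε i).2
        · intro hx; exact ⟨ε.symm ⟨x, hx⟩, by simp [hw]⟩
      rw [this, hbspan]
    have hunit : IsUnit ((Pi.basisFun K m).dualBasis.det w) :=
      (Basis.is_basis_iff_det _).mp ⟨hwind, hwspan⟩
    have hDne : ((Pi.basisFun K m).dualBasis.toMatrix w).det ≠ 0 := by
      rw [← Basis.det_apply]; exact hunit.ne_zero
    have hM : (Pi.basisFun K m).dualBasis.toMatrix w =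
        (Matrix.of fun i j : m => v j (n (ε i))).transpose := by
      ext i j
      rw [Basis.toMatrix_apply, Basis.dualBasis_repr]
      have : w j = φ (n (ε j)) := (hn (ε j)).symm
      rw [this, hφe]
      simp only [Pi.basisFun_apply, Matrix.transpose_apply, Matrix.of_apply]
      rw [Finset.sum_eq_single i]
      · simp
      · intro x _ hx; simp [Pi.single_apply, hx]
      · simp
    rw [hM, Matrix.det_transpose] at hDne
    exact hDne



/-- **Generalized Wilczynski criterion.**
Let `K` be a field, `F` and `G` finite sets of exponent pairs `(i,j) ∈ ℕ^r × ℕ` with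
`j ≥ 1` for pairs in `F`, and `j = 0`, `|i| > 0` for pairs in `G`.  Let
`y₀ = Σ_{n ≥_grlex (0,…,0,1)} c_n x^n ∈ K[[x₁,…,x_r]]` with `c_{(0,…,0,1)} ≠ 0`.
Then `y₀` is a root of some nonzero polynomial supported in `F ∪ G` if and only if all
the minors of maximal order `|F|` of the reduced Wilczynski matrix vanish, i.e. for
every injective choice of `|F|` rows `n` with `(n,0) ∉ G`, the determinant of the
matrix whose `((i,j) ∈ F)`-column lists the coefficients of `x^i·y₀^j` is zero. -/
theorem wilczynski_criterion (K : Type*) [Field K] (r : ℕ) (hr : 0 < r)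
    (F G : Finset ((Fin r →₀ ℕ) × ℕ))
    (hF : ∀ p ∈ F, 1 ≤ p.2)
    (hG : ∀ p ∈ G, p.2 = 0 ∧ p.1 ≠ 0)
    (y0 : MvPowerSeries (Fin r) K)
    (h00 : MvPowerSeries.constantCoeff y0 = 0)
    (hc1 : MvPowerSeries.coeff
      (Finsupp.single (⟨r - 1, Nat.sub_lt hr one_pos⟩ : Fin r) 1) y0 ≠ 0) :
    (∃ a : ((Fin r →₀ ℕ) × ℕ) → K,
        (∃ p ∈ F ∪ G, a p ≠ 0) ∧
        ∑ p ∈ F ∪ G, (MvPowerSeries.monomial p.1 (a p)) * y0 ^ p.2 = 0) ↔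
      (∀ ρ : ↥F → (Fin r →₀ ℕ), Function.Injective ρ → (∀ p, ((ρ p, 0) ∉ G)) →
        Matrix.det (Matrix.of fun p q : ↥F =>
          MvPowerSeries.coeff (ρ p)
            ((MvPowerSeries.monomial (q : (Fin r →₀ ℕ) × ℕ).1 1)
              * y0 ^ (q : (Fin r →₀ ℕ) × ℕ).2)) = 0) := by
  classical
  have hFG : Disjoint F G := by
    rw [Finset.disjoint_left]
    intro p hpF hpG
    have h1 := hF p hpF
    have h2 := (hG p hpG).1
    omega
  have key : ∀ (i : Fin r →₀ ℕ) (c : K) (j : ℕ) (n : Fin r →₀ ℕ),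
      MvPowerSeries.coeff n (MvPowerSeries.monomial i c * y0 ^ j)
        = c * MvPowerSeries.coeff n (MvPowerSeries.monomial i 1 * y0 ^ j) := by
    intro i c j n
    have h1 : MvPowerSeries.monomial i c = c • MvPowerSeries.monomial i 1 := by
      rw [← map_smul, smul_eq_mul, mul_one]
    rw [h1, smul_mul_assoc, map_smul, smul_eq_mul]
  constructor
  · rintro ⟨a, ⟨p₀, hp₀, ha₀⟩, hsum⟩ ρ hρinj hρG
    rw [Finset.sum_union hFG] at hsum
    by_cases hcase : ∃ q ∈ F, a q ≠ 0
    · obtain ⟨q₀, hq₀F, hq₀⟩ := hcase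
      rw [← Matrix.exists_mulVec_eq_zero_iff]
      refine ⟨fun q : ↥F => a q.1, ?_, ?_⟩
      · intro hzero
        exact hq₀ (congrFun hzero ⟨q₀, hq₀F⟩)
      · have hFzero : ∀ n, ((n, (0:ℕ)) ∉ G) →
            MvPowerSeries.coeff n
              (∑ q ∈ F, MvPowerSeries.monomial q.1 (a q) * y0 ^ q.2) = 0 := by
          intro n hn
          have hG0 : MvPowerSeries.coeff n
              (∑ p ∈ G, MvPowerSeries.monomial p.1 (a p) * y0 ^ p.2) = 0 := by
            rw [map_sum]
            apply Finset.sum_eq_zero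
            intro p hp
            rw [(hG p hp).1, pow_zero, mul_one, MvPowerSeries.coeff_monomial]
            split
            · next h =>
                exfalso
                apply hn
                have hp2 : p = (n, 0) := by
                  obtain ⟨p1, p2⟩ := p
                  have := (hG _ hp).1
                  simp only at this h ⊢
                  exact Prod.ext h.symm this
                rwa [hp2] at hp
            · rfl
          have := congrArg (MvPowerSeries.coeff n) hsum
          rwa [map_add, hG0, add_zero, map_zero] at this
        funext p
        show (Matrix.of fun p q : ↥F =>
          MvPowerSeries.coeff (ρ p)
            ((MvPowerSeries.monomial (q : (Fin r →₀ ℕ) × ℕ).1 1)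
              * y0 ^ (q : (Fin r →₀ ℕ) × ℕ).2)).mulVec (fun q : ↥F => a q.1) p = 0
        rw [Matrix.mulVec]
        show ∑ q : ↥F, MvPowerSeries.coeff (ρ p)
            (MvPowerSeries.monomial q.1.1 1 * y0 ^ q.1.2) * a q.1 = 0
        calc ∑ q : ↥F, MvPowerSeries.coeff (ρ p)
              (MvPowerSeries.monomial q.1.1 1 * y0 ^ q.1.2) * a q.1
            = ∑ q ∈ F.attach, MvPowerSeries.coeff (ρ p)
              (MvPowerSeries.monomial q.1.1 (a q.1) * y0 ^ q.1.2) := by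
              apply Finset.sum_congr rfl
              intro q _
              rw [key (q : (Fin r →₀ ℕ) × ℕ).1 (a q.1) (q : (Fin r →₀ ℕ) × ℕ).2 (ρ p)]
              ring
          _ = ∑ q ∈ F, MvPowerSeries.coeff (ρ p)
              (MvPowerSeries.monomial q.1 (a q) * y0 ^ q.2) :=
              Finset.sum_attach F (fun x => MvPowerSeries.coeff (ρ p)
                (MvPowerSeries.monomial x.1 (a x) * y0 ^ x.2))
          _ = MvPowerSeries.coeff (ρ p)
              (∑ q ∈ F, MvPowerSeries.monomial q.1 (a q) * y0 ^ q.2) := (map_sum _ _ _).symm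
          _ = 0 := hFzero (ρ p) (hρG p)
    · push_neg at hcase
      exfalso
      have hsF : ∑ q ∈ F, MvPowerSeries.monomial q.1 (a q) * y0 ^ q.2 = 0 :=
        Finset.sum_eq_zero fun q hq => by rw [hcase q hq, map_zero, zero_mul]
      rw [hsF, zero_add] at hsum
      have haG : ∀ p ∈ G, a p = 0 := by
        intro p hp
        have hcg := congrArg (MvPowerSeries.coeff p.1) hsum
        rw [map_zero, map_sum, Finset.sum_eq_single p] at hcg
        · rwa [(hG p hp).1, pow_zero, mul_one, MvPowerSeries.coeff_monomial_same] at hcg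
        · intro q hq hqp
          rw [(hG q hq).1, pow_zero, mul_one, MvPowerSeries.coeff_monomial]
          split
          · next h =>
              exfalso
              apply hqp
              obtain ⟨q1, q2⟩ := q
              obtain ⟨p1, p2⟩ := p
              have h1 := (hG _ hq).1
              have h2 := (hG _ hp).1
              simp only at h1 h2 h ⊢
              exact Prod.ext h.symm (by rw [h1, h2])
          · rfl
        · intro hpc; exact absurd hp hpc
      rcases Finset.mem_union.mp hp₀ with h | h
      · exact ha₀ (hcase p₀ h)
      · exact ha₀ (haG p₀ h)
  · intro hdet
    set v : ↥F → {n : (Fin r →₀ ℕ) // (n, (0:ℕ)) ∉ G} → K :=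
      fun q n => MvPowerSeries.coeff n.1
        (MvPowerSeries.monomial q.1.1 1 * y0 ^ q.1.2) with hv
    have hnind : ¬ LinearIndependent K v := by
      intro hind
      obtain ⟨ρ', hρ'inj, hρ'det⟩ := aux_det v hind
      apply hρ'det
      exact hdet (fun p => (ρ' p).1) (fun p p' h => hρ'inj (Subtype.ext h))
        (fun p => (ρ' p).2)
    obtain ⟨g, hg0, i₀, hi₀⟩ := Fintype.not_linearIndependent_iff.mp hnind
    set g' : ((Fin r →₀ ℕ) × ℕ) → K := fun p => if h : p ∈ F then g ⟨p, h⟩ else 0 with hg'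
    have hg'eq : ∀ q : ↥F, g' q.1 = g q := by
      intro q
      simp only [hg', dif_pos q.2]
    obtain ⟨S, hS⟩ : ∃ S : MvPowerSeries (Fin r) K,
        S = ∑ p ∈ F, MvPowerSeries.monomial p.1 (g' p) * y0 ^ p.2 := ⟨_, rfl⟩
    have hSrow : ∀ n, ((n, (0:ℕ)) ∉ G) → MvPowerSeries.coeff n S = 0 := by
      intro n hn
      have hzero := congrFun hg0 ⟨n, hn⟩
      rw [hS, map_sum]
      calc ∑ p ∈ F, MvPowerSeries.coeff n (MvPowerSeries.monomial p.1 (g' p) * y0 ^ p.2)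
          = ∑ q ∈ F.attach, g q * v q ⟨n, hn⟩ := by
            rw [← Finset.sum_attach F
              (fun p => MvPowerSeries.coeff n (MvPowerSeries.monomial p.1 (g' p) * y0 ^ p.2))]
            apply Finset.sum_congr rfl
            intro q _
            rw [key, hg'eq]
        _ = 0 := by simpa using hzero
    set a : ((Fin r →₀ ℕ) × ℕ) → K := fun p =>
      if p ∈ F then g' p else if p ∈ G then -(MvPowerSeries.coeff p.1 S) else 0 with ha
    refine ⟨a, ⟨i₀.1, Finset.mem_union_left _ i₀.2, ?_⟩, ?_⟩
    · rw [ha]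
      simp only [i₀.2, if_true]
      rw [hg'eq]
      exact hi₀
    · rw [Finset.sum_union hFG]
      have h1 : ∑ p ∈ F, MvPowerSeries.monomial p.1 (a p) * y0 ^ p.2 = S := by
        rw [hS]
        apply Finset.sum_congr rfl
        intro p hp
        rw [ha]
        simp only [hp, if_true]
      have h2 : ∑ p ∈ G, MvPowerSeries.monomial p.1 (a p) * y0 ^ p.2
          = ∑ p ∈ G, MvPowerSeries.monomial p.1 (-(MvPowerSeries.coeff p.1 S)) := by
        apply Finset.sum_congr rfl
        intro p hp
        have hpF : p ∉ F := Finset.disjoint_right.mp hFG hp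
        rw [(hG p hp).1, pow_zero, mul_one, ha]
        simp only [hpF, if_false, hp, if_true]
      rw [h1, h2]
      ext n
      rw [map_zero, map_add, map_sum]
      by_cases hn : (n, (0:ℕ)) ∈ G
      · rw [Finset.sum_eq_single ((n, (0:ℕ)) : (Fin r →₀ ℕ) × ℕ)]
        · rw [MvPowerSeries.coeff_monomial_same]
          ring
        · intro q hq hqn
          rw [MvPowerSeries.coeff_monomial]
          split
          · next h =>
              exfalso
              apply hqn
              obtain ⟨q1, q2⟩ := q
              have h1 := (hG _ hq).1
              simp only at h1 h ⊢
              exact Prod.ext h.symm h1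
          · rfl
        · intro hnc; exact absurd hn hnc
      · rw [hSrow n hn, zero_add]
        apply Finset.sum_eq_zero
        intro q hq
        rw [MvPowerSeries.coeff_monomial]
        split
        · next h =>
            exfalso
            apply hn
            have hq2 : q = (n, 0) := by
              obtain ⟨q1, q2⟩ := q
              have h1 := (hG _ hq).1
              simp only at h1 h ⊢
              exact Prod.ext h.symm h1
            rwa [hq2] at hq
        · rfl
end
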